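/- arXiv:1610.04647 — 7 statements merged into one kernel-verified Lean document; each statement's English description precedes it below -/
import Mathlib

section
/- Let π̂ be a probability measure on ℕ∪{0} and let ν_n be defined recursively by ν_0 = δ_1 and ν_{n+1}(j) = Σ_{k≥0} π̂(k) ν_n^{*k}(j). If Σ_k k π̂(k) = 1 (criticality), then for every j > 0, ν_{n+1}(j) − ν_n(j) = Σ_{k≥2} R̂_k(ρ_n) Î_k(ν_n, j), where ρ_n = Σ_{j>0} ν_n(j), R̂_k(ρ) = Σ_{l≥k} π̂(l) C(l,k) ρ^k (1−ρ)^{l−k}, and Î_k(ν,j) = Σ_{i_1,…,i_k>0} [δ^j(i_1+⋯+i_k) − Σ_{l=1}^k δ^j(i_l)] ∏_{l=1}^k ν(i_l)/ρ. -/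
open scoped BigOperators

/-- Convolution of two functions on ℕ (discrete measures). -/
noncomputable def conv (μ ν : ℕ → ℝ) : ℕ → ℝ :=
  fun j => ∑ i ∈ Finset.range (j + 1), μ i * ν (j - i)

/-- k-th convolution power, with `convPow ν 0 = δ₀`. -/
noncomputable def convPow (ν : ℕ → ℝ) : ℕ → ℕ → ℝ
  | 0 => fun j => if j = 0 then 1 else 0
  | k + 1 => conv (convPow ν k) ν

/-- Kronecker delta at `j`. -/
noncomputable def kron (j m : ℕ) : ℝ := if m = j then 1 else 0

/-- Rate constant `R̂_k(ρ) = Σ_{l≥k} π̂(l) C(l,k) ρ^k (1−ρ)^{l−k}`. -/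
noncomputable def Rhat (π : ℕ → ℝ) (k : ℕ) (ρ : ℝ) : ℝ :=
  ∑' l : ℕ, if k ≤ l then π l * (l.choose k : ℝ) * ρ ^ k * (1 - ρ) ^ (l - k) else 0

/-- Interaction term `Î_k(ν, j)`, a sum over k-tuples of positive integers. -/
noncomputable def Ihat (ν : ℕ → ℝ) (ρ : ℝ) (k j : ℕ) : ℝ :=
  ∑' i : Fin k → ℕ,
    if ∀ l, 0 < i l then
      (kron j (∑ l, i l) - ∑ l, kron j (i l)) * ∏ l, ν (i l) / ρ
    else 0

/-! ### Auxiliary lemmas -/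

lemma kron_nonneg (j m : ℕ) : 0 ≤ kron j m := by
  unfold kron; split <;> norm_num

lemma smol_conv_nonneg {μ w : ℕ → ℝ} (hμ : ∀ i, 0 ≤ μ i) (hw : ∀ i, 0 ≤ w i) (j : ℕ) :
    0 ≤ conv μ w j :=
  Finset.sum_nonneg fun i _ => mul_nonneg (hμ i) (hw _)

lemma smol_convPow_nonneg {w : ℕ → ℝ} (hw : ∀ i, 0 ≤ w i) (k j : ℕ) : 0 ≤ convPow w k j := by
  induction k generalizing j with
  | zero => simp only [convPow]; split <;> norm_num
  | succ k ih => exact smol_conv_nonneg ih hw j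

lemma smol_hasSum_conv {μ w : ℕ → ℝ} {a b : ℝ} (hμ0 : ∀ i, 0 ≤ μ i) (hw0 : ∀ i, 0 ≤ w i)
    (hμ : HasSum μ a) (hw : HasSum w b) : HasSum (conv μ w) (a * b) := by
  have hμn : Summable fun i => ‖μ i‖ :=
    hμ.summable.congr fun i => (Real.norm_of_nonneg (hμ0 i)).symm
  have hwn : Summable fun i => ‖w i‖ :=
    hw.summable.congr fun i => (Real.norm_of_nonneg (hw0 i)).symm
  have hsum : Summable (conv μ w) :=
    (summable_norm_sum_mul_range_of_summable_norm hμn hwn).of_norm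
  have hval : a * b = ∑' n, conv μ w n := by
    rw [← hμ.tsum_eq, ← hw.tsum_eq]
    exact tsum_mul_tsum_eq_tsum_sum_range_of_summable_norm hμn hwn
  exact hval ▸ hsum.hasSum

lemma smol_hasSum_convPow {w : ℕ → ℝ} {b : ℝ} (hw0 : ∀ i, 0 ≤ w i) (hw : HasSum w b) (k : ℕ) :
    HasSum (convPow w k) (b ^ k) := by
  induction k with
  | zero => exact hasSum_ite_eq 0 1
  | succ k ih =>
    rw [pow_succ]
    exact smol_hasSum_conv (smol_convPow_nonneg hw0 k) hw0 ih hw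

lemma smol_convPow_eq_coeff (w : ℕ → ℝ) (k j : ℕ) :
    convPow w k j = PowerSeries.coeff j ((PowerSeries.mk w) ^ k) := by
  induction k generalizing j with
  | zero => simp [convPow, PowerSeries.coeff_one]
  | succ k ih =>
    have hps : (PowerSeries.mk w) ^ (k + 1)
        = PowerSeries.mk (convPow w k) * PowerSeries.mk w := by
      rw [pow_succ]
      congr 1
      ext n
      rw [PowerSeries.coeff_mk]
      exact (ih n).symm
    rw [hps]
    show conv (convPow w k) w j = _
    rw [PowerSeries.coeff_mul, Finset.Nat.sum_antidiagonal_eq_sum_range_succ_mk]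
    simp [conv, PowerSeries.coeff_mk]

lemma smol_convPow_binom (w : ℕ → ℝ) (k j : ℕ) :
    convPow w k j = ∑ m ∈ Finset.range (k + 1),
      (k.choose m : ℝ) * (w 0) ^ (k - m) * convPow (fun i => if 0 < i then w i else 0) m j := by
  classical
  set wp : ℕ → ℝ := fun i => if 0 < i then w i else 0 with hwp
  have hmk : PowerSeries.mk w = PowerSeries.mk wp + PowerSeries.C (w 0) := by
    ext n
    cases n with
    | zero => simp [wp]
    | succ n => simp [wp]
  rw [smol_convPow_eq_coeff, hmk, add_pow, map_sum]
  refine Finset.sum_congr rfl fun m hm => ?_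
  have h1 : (PowerSeries.C (w 0)) ^ (k - m) * ((k.choose m : ℕ) : PowerSeries ℝ)
      = PowerSeries.C ((w 0) ^ (k - m) * (k.choose m : ℝ)) := by
    rw [← map_pow, ← map_natCast (PowerSeries.C (R := ℝ)) (k.choose m), ← map_mul]
  rw [mul_assoc, h1, PowerSeries.coeff_mul_C, ← smol_convPow_eq_coeff]
  ring

lemma smol_convPow_mul_left (w : ℕ → ℝ) (c : ℝ) (k : ℕ) :
    ∀ j, convPow (fun i => c * w i) k j = c ^ k * convPow w k j := by
  induction k with
  | zero => intro j; simp [convPow]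
  | succ k ih =>
    intro j
    show conv (convPow (fun i => c * w i) k) (fun i => c * w i) j
        = c ^ (k + 1) * conv (convPow w k) w j
    simp only [conv, ih, Finset.mul_sum]
    exact Finset.sum_congr rfl fun i _ => by ring

lemma smol_convPow_one (w : ℕ → ℝ) (j : ℕ) : convPow w 1 j = w j := by
  show conv (convPow w 0) w j = w j
  simp only [conv, convPow]
  rw [Finset.sum_congr rfl (fun i _ => by rw [ite_mul, one_mul, zero_mul]),
    Finset.sum_ite_eq' (Finset.range (j + 1)) 0 (fun i => w (j - i))]
  simp

lemma smol_hasSum_prod_of_nonneg {α β : Type*} {F : α × β → ℝ} (hF : ∀ p, 0 ≤ F p)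
    {G : α → ℝ} (hfib : ∀ x, HasSum (fun y => F (x, y)) (G x)) {S : ℝ} (hG : HasSum G S) :
    HasSum F S := by
  have hsum : Summable F := by
    refine (summable_prod_of_nonneg (Pi.le_def.mpr hF)).2
      ⟨fun x => (hfib x).summable, ?_⟩
    have h : (fun x => ∑' y, F (x, y)) = G := funext fun x => (hfib x).tsum_eq
    rw [h]; exact hG.summable
  have hval : ∑' p, F p = S := by
    rw [Summable.tsum_prod' hsum fun x => (hfib x).summable,
      show (fun x => ∑' y, F (x, y)) = G from funext fun x => (hfib x).tsum_eq]
    exact hG.tsum_eq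
  exact hval ▸ hsum.hasSum

lemma smol_hasSum_swap {α β : Type*} {F : α × β → ℝ} {S : ℝ} (h : HasSum F S) :
    HasSum (fun b => ∑' a, F (a, b)) S := by
  have h2 : HasSum (fun p : β × α => F (p.2, p.1)) S :=
    ((Equiv.prodComm β α).hasSum_iff).mpr h
  exact h2.prod_fiberwise fun b => (h2.summable.prod_factor b).hasSum

lemma smol_hasSum_fin0 {f : (Fin 0 → ℕ) → ℝ} {c : ℝ} (hc : f (fun l => l.elim0) = c) :
    HasSum f c := by
  have h := hasSum_single (f := f) (fun l : Fin 0 => l.elim0)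
    (fun b' hb' => absurd (funext fun l : Fin 0 => l.elim0) hb')
  rwa [hc] at h

lemma smol_hasSum_pi_prod {k : ℕ} {h : Fin k → ℕ → ℝ} {a : Fin k → ℝ}
    (hnn : ∀ l i, 0 ≤ h l i) (hs : ∀ l, HasSum (h l) (a l)) :
    HasSum (fun i : Fin k → ℕ => ∏ l, h l (i l)) (∏ l, a l) := by
  induction k with
  | zero =>
    exact smol_hasSum_fin0 (by simp)
  | succ k ih =>
    rw [← (Fin.consEquiv (fun _ : Fin (k + 1) => ℕ)).hasSum_iff]
    have hfun : ((fun i : Fin (k + 1) → ℕ => ∏ l, h l (i l)) ∘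
        (Fin.consEquiv (fun _ : Fin (k + 1) => ℕ)))
        = fun p : ℕ × (Fin k → ℕ) => h 0 p.1 * ∏ l : Fin k, h l.succ (p.2 l) := by
      funext p
      simp [Fin.consEquiv, Fin.prod_univ_succ]
    rw [hfun, Fin.prod_univ_succ]
    refine smol_hasSum_prod_of_nonneg
      (fun p => mul_nonneg (hnn 0 p.1) (Finset.prod_nonneg fun l _ => hnn l.succ _))
      (G := fun x => h 0 x * ∏ l : Fin k, a l.succ) (fun x => ?_) ?_
    · show HasSum (fun y : Fin k → ℕ => h 0 x * ∏ l : Fin k, h l.succ (y l))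
        (h 0 x * ∏ l : Fin k, a l.succ)
      exact (ih (fun l i => hnn l.succ i) (fun l => hs l.succ)).mul_left (h 0 x)
    · exact (hs 0).mul_right _

lemma smol_hasSum_kron_tuple {g : ℕ → ℝ} (hg : ∀ i, 0 ≤ g i) :
    ∀ (k j : ℕ), HasSum (fun i : Fin k → ℕ => kron j (∑ l, i l) * ∏ l, g (i l))
      (convPow g k j) := by
  intro k
  induction k with
  | zero =>
    intro j
    refine smol_hasSum_fin0 ?_
    simp only [Finset.univ_eq_empty, Finset.sum_empty, Finset.prod_empty, mul_one,
      kron, convPow]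
    exact if_congr eq_comm rfl rfl
  | succ k ih =>
    intro j
    rw [← (Fin.consEquiv (fun _ : Fin (k + 1) => ℕ)).hasSum_iff]
    have hfun : ((fun i : Fin (k + 1) → ℕ => kron j (∑ l, i l) * ∏ l, g (i l)) ∘
        (Fin.consEquiv (fun _ : Fin (k + 1) => ℕ)))
        = fun p : ℕ × (Fin k → ℕ) =>
            kron j (p.1 + ∑ l, p.2 l) * (g p.1 * ∏ l, g (p.2 l)) := by
      funext p
      simp [Fin.consEquiv, Fin.sum_univ_succ, Fin.prod_univ_succ]
    rw [hfun]
    refine smol_hasSum_prod_of_nonneg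
      (fun p => mul_nonneg (kron_nonneg _ _) (mul_nonneg (hg _)
        (Finset.prod_nonneg fun l _ => hg _)))
      (G := fun x => if x ≤ j then g x * convPow g k (j - x) else 0) (fun x => ?_) ?_
    · show HasSum (fun p : Fin k → ℕ => kron j (x + ∑ l, p l) * (g x * ∏ l, g (p l)))
          (if x ≤ j then g x * convPow g k (j - x) else 0)
      by_cases hx : x ≤ j
      · rw [if_pos hx]
        have hfun2 : (fun p : Fin k → ℕ => kron j (x + ∑ l, p l) * (g x * ∏ l, g (p l)))
            = fun p : Fin k → ℕ => g x * (kron (j - x) (∑ l, p l) * ∏ l, g (p l)) := by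
          funext p
          have : kron j (x + ∑ l, p l) = kron (j - x) (∑ l, p l) := by
            unfold kron; exact if_congr (by omega) rfl rfl
          rw [this]; ring
        rw [hfun2]
        exact (ih (j - x)).mul_left (g x)
      · rw [if_neg hx]
        have hfun2 : (fun p : Fin k → ℕ => kron j (x + ∑ l, p l) * (g x * ∏ l, g (p l)))
            = fun _ : Fin k → ℕ => (0 : ℝ) := by
          funext p
          have : kron j (x + ∑ l, p l) = 0 := by
            unfold kron; rw [if_neg (by omega)]
          rw [this, zero_mul]
        rw [hfun2]
        exact hasSum_zero
    · have h1 : HasSum (fun x => if x ≤ j then g x * convPow g k (j - x) else 0)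
          (∑ x ∈ Finset.range (j + 1), if x ≤ j then g x * convPow g k (j - x) else 0) := by
        refine hasSum_sum_of_ne_finset_zero fun x hx => ?_
        rw [if_neg (by simp at hx; omega)]
      have h2 : (∑ x ∈ Finset.range (j + 1), if x ≤ j then g x * convPow g k (j - x) else 0)
          = convPow g (k + 1) j := by
        show _ = conv (convPow g k) g j
        unfold conv
        rw [← Finset.sum_range_reflect (fun i => convPow g k i * g (j - i)) (j + 1)]
        refine Finset.sum_congr rfl fun x hx => ?_
        have hxj : x ≤ j := by simp at hx; omega
        rw [if_pos hxj]
        have e1 : j + 1 - 1 - x = j - x := by omega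
        have e2 : j - (j - x) = x := by omega
        rw [e1, e2, mul_comm]
      rw [h2] at h1
      exact h1

lemma smol_sum_deriv_binom (l : ℕ) (x y : ℝ) :
    ∑ m ∈ Finset.range (l + 1), (m : ℝ) * (l.choose m : ℝ) * x ^ (m - 1) * y ^ (l - m)
      = (l : ℝ) * (x + y) ^ (l - 1) := by
  cases l with
  | zero => simp
  | succ l =>
    rw [Finset.sum_range_succ']
    have hkey : ∀ i : ℕ, ((i : ℝ) + 1) * ((l + 1).choose (i + 1) : ℝ)
        = ((l : ℝ) + 1) * (l.choose i : ℝ) := by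
      intro i
      have h1 := Nat.add_one_mul_choose_eq l i
      have h2 : ((l.succ * l.choose i : ℕ) : ℝ) = (((l.succ).choose i.succ * i.succ : ℕ) : ℝ) := by
        rw [h1]
      simp only [Nat.succ_eq_add_one] at h2
      push_cast at h2
      linear_combination -h2
    have hterm : ∀ i : ℕ, ((i + 1 : ℕ) : ℝ) * ((l + 1).choose (i + 1) : ℝ) * x ^ (i + 1 - 1)
          * y ^ (l + 1 - (i + 1))
        = ((l : ℝ) + 1) * ((l.choose i : ℝ) * (x ^ i * y ^ (l - i))) := by
      intro i
      have e1 : i + 1 - 1 = i := by omega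
      have e2 : l + 1 - (i + 1) = l - i := by omega
      rw [e1, e2]
      push_cast
      rw [show ((i : ℝ) + 1) * ((l + 1).choose (i + 1) : ℝ) * x ^ i * y ^ (l - i)
        = (((i : ℝ) + 1) * ((l + 1).choose (i + 1) : ℝ)) * (x ^ i * y ^ (l - i)) from by ring,
        hkey i]
      ring
    rw [Finset.sum_congr rfl fun i _ => hterm i]
    rw [← Finset.mul_sum]
    have : ∑ i ∈ Finset.range (l + 1), (l.choose i : ℝ) * (x ^ i * y ^ (l - i))
        = (x + y) ^ l := by
      rw [add_pow]
      exact Finset.sum_congr rfl fun i _ => by ring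
    rw [this]
    simp only [Nat.cast_zero, zero_mul, Nat.choose_zero_right]
    push_cast
    ring

lemma smol_hasSum_ge_two {f : ℕ → ℝ} {S : ℝ} (h : HasSum f S) :
    HasSum (fun k => if 2 ≤ k then f k else 0) (S - f 0 - f 1) := by
  have h0 : HasSum (fun k : ℕ => if k = 0 then f 0 else 0) (f 0) := hasSum_ite_eq 0 (f 0)
  have h1 : HasSum (fun k : ℕ => if k = 1 then f 1 else 0) (f 1) := hasSum_ite_eq 1 (f 1)
  have h2 := (h.sub h0).sub h1
  have hfun : (fun k => (f k - if k = 0 then f 0 else 0) - if k = 1 then f 1 else 0)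
      = fun k => if 2 ≤ k then f k else 0 := by
    funext k
    match k with
    | 0 => simp
    | 1 => simp
    | (n + 2) => simp
  rwa [hfun] at h2

theorem discrete_smoluchowski
    (π : ℕ → ℝ) (hπ_nonneg : ∀ k, 0 ≤ π k) (hπ_sum : HasSum π 1)
    (hcrit : HasSum (fun k : ℕ => (k : ℝ) * π k) 1)
    (ν : ℕ → ℕ → ℝ)
    (hν0 : ν 0 = fun j => if j = 1 then 1 else 0)
    (hν : ∀ n j, ν (n + 1) j = ∑' k : ℕ, π k * convPow (ν n) k j)
    (ρ : ℕ → ℝ) (hρ : ∀ n, HasSum (fun j : ℕ => if 0 < j then ν n j else 0) (ρ n)) :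
    ∀ n : ℕ, ∀ j : ℕ, 0 < j →
      ν (n + 1) j - ν n j =
        ∑' k : ℕ, if 2 ≤ k then Rhat π k (ρ n) * Ihat (ν n) (ρ n) k j else 0 := by
  classical
  -- nonnegativity and total mass 1 for each ν n
  have key : ∀ n, (∀ i, 0 ≤ ν n i) ∧ HasSum (ν n) 1 := by
    intro n
    induction n with
    | zero =>
      rw [hν0]
      refine ⟨fun i => ?_, hasSum_ite_eq 1 1⟩
      show (0 : ℝ) ≤ if i = 1 then 1 else 0
      split <;> norm_num
    | succ n ih =>
      obtain ⟨hnn, hmass⟩ := ih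
      have hF : HasSum (fun p : ℕ × ℕ => π p.1 * convPow (ν n) p.1 p.2) 1 := by
        refine smol_hasSum_prod_of_nonneg
          (fun p => mul_nonneg (hπ_nonneg p.1) (smol_convPow_nonneg hnn p.1 p.2))
          (G := fun k => π k * 1)
          (fun k => by simpa using (smol_hasSum_convPow hnn hmass k).mul_left (π k)) ?_
        simpa using hπ_sum
      have hswap := smol_hasSum_swap hF
      constructor
      · intro i
        rw [hν n i]
        exact tsum_nonneg fun k =>
          mul_nonneg (hπ_nonneg k) (smol_convPow_nonneg hnn k i)
      · have hfun : ν (n + 1) = fun i => ∑' k, π k * convPow (ν n) k i :=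
          funext fun i => hν n i
        rw [hfun]
        exact hswap
  intro n j hj
  obtain ⟨hnn, hmass⟩ := key n
  set νp : ℕ → ℝ := fun i => if 0 < i then ν n i else 0 with hνpdef
  have hνp_nonneg : ∀ i, 0 ≤ νp i := fun i => by
    simp only [hνpdef]
    split
    · exact hnn i
    · exact le_refl 0
  have hρ_nonneg : 0 ≤ ρ n := hasSum_le (fun i => hνp_nonneg i) hasSum_zero (hρ n)
  have hρ_le_one : ρ n ≤ 1 := by
    refine hasSum_le (fun i => ?_) (hρ n) hmass
    by_cases hi : 0 < i
    · rw [if_pos hi]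
    · rw [if_neg hi]; exact hnn i
  have hν0_eq : ν n 0 = 1 - ρ n := by
    have hadd : HasSum (fun i => νp i + (if i = 0 then ν n 0 else 0)) (ρ n + ν n 0) :=
      (hρ n).add (hasSum_ite_eq 0 (ν n 0))
    have hfun : (fun i => νp i + (if i = 0 then ν n 0 else 0)) = ν n := by
      funext i
      rcases Nat.eq_zero_or_pos i with h | h
      · subst h; simp [hνpdef]
      · rw [hνpdef]; dsimp only
        rw [if_pos h, if_neg (by omega), add_zero]
    rw [hfun] at hadd
    have := hmass.unique hadd
    linarith
  by_cases hρ0 : ρ n = 0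
  · -- degenerate case: everything vanishes
    have hν_zero : ∀ i, 0 < i → ν n i = 0 := by
      intro i hi
      have h1 : νp i ≤ ρ n := le_hasSum (hρ n) i fun b _ => hνp_nonneg b
      have h2 : νp i = ν n i := by rw [hνpdef]; dsimp only; rw [if_pos hi]
      have h3 := hnn i
      rw [h2, hρ0] at h1
      linarith
    have hconv0 : ∀ k i, 0 < i → convPow (ν n) k i = 0 := by
      intro k
      induction k with
      | zero =>
        intro i hi
        show (if i = 0 then (1 : ℝ) else 0) = 0
        rw [if_neg (by omega)]
      | succ k ih =>
        intro i hi
        show conv (convPow (ν n) k) (ν n) i = 0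
        unfold conv
        refine Finset.sum_eq_zero fun x hx => ?_
        rcases eq_or_lt_of_le (Nat.lt_succ_iff.mp (Finset.mem_range.mp hx)) with h | h
        · rw [h, ih i hi, zero_mul]
        · rw [hν_zero (i - x) (by omega), mul_zero]
    have hL : ν (n + 1) j = 0 := by
      rw [hν n j]
      have hz : (fun k => π k * convPow (ν n) k j) = fun _ => (0 : ℝ) := by
        funext k; rw [hconv0 k j hj, mul_zero]
      rw [hz, tsum_zero]
    have hR : ∀ k, 2 ≤ k → Ihat (ν n) (ρ n) k j = 0 := by
      intro k hk
      unfold Ihat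
      rw [hρ0]
      have hz : ∀ i : Fin k → ℕ, (if ∀ l, 0 < i l then
          (kron j (∑ l, i l) - ∑ l, kron j (i l)) * ∏ l, ν n (i l) / (0 : ℝ)
          else 0) = 0 := by
        intro i
        split
        · have hp : (∏ l, ν n (i l) / (0 : ℝ)) = 0 := by
            refine Finset.prod_eq_zero (Finset.mem_univ (⟨0, by omega⟩ : Fin k)) ?_
            exact div_zero _
          rw [hp, mul_zero]
        · rfl
      exact (tsum_congr hz).trans tsum_zero
    rw [hL, hν_zero j hj]
    have hz : (fun k => if 2 ≤ k then Rhat π k (ρ n) * Ihat (ν n) (ρ n) k j else 0)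
        = fun _ => (0 : ℝ) := by
      funext k
      split
      · rw [hR k ‹_›, mul_zero]
      · rfl
    rw [hz, tsum_zero]
    ring
  · -- main case: ρ n > 0
    have hρpos : 0 < ρ n := lt_of_le_of_ne hρ_nonneg (Ne.symm hρ0)
    set c : ℝ := 1 - ρ n with hc
    have hc_nonneg : 0 ≤ c := by rw [hc]; linarith
    set q : ℕ → ℝ :=
      fun m => ∑' l, if m ≤ l then π l * (l.choose m : ℝ) * c ^ (l - m) else 0 with hq
    set g : ℕ → ℝ := fun i => (ρ n)⁻¹ * νp i with hgdef
    have hg_nonneg : ∀ i, 0 ≤ g i := fun i =>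
      mul_nonneg (inv_nonneg.mpr hρ_nonneg) (hνp_nonneg i)
    have hg_sum : HasSum g 1 := by
      rw [hgdef]
      have h1 := (hρ n).mul_left (ρ n)⁻¹
      rwa [inv_mul_cancel₀ hρ0] at h1
    -- evaluation of Ihat
    have hIhat : ∀ k, 2 ≤ k → Ihat (ν n) (ρ n) k j
        = (ρ n)⁻¹ ^ k * convPow νp k j - (k : ℝ) * g j := by
      intro k hk
      have hA := smol_hasSum_kron_tuple hg_nonneg k j
      have hB : ∀ l0 : Fin k,
          HasSum (fun i : Fin k → ℕ => kron j (i l0) * ∏ m, g (i m)) (g j) := by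
        intro l0
        have hs : ∀ m : Fin k, HasSum (fun x => if m = l0 then kron j x * g x else g x)
            (if m = l0 then g j else 1) := by
          intro m
          by_cases hm : m = l0
          · have hfun : (fun x => if m = l0 then kron j x * g x else g x)
                = fun x => if x = j then g j else 0 := by
              funext x
              rw [if_pos hm]
              by_cases hx : x = j
              · rw [if_pos hx, hx]; simp [kron]
              · rw [if_neg hx]
                unfold kron
                rw [if_neg hx, zero_mul]
            rw [hfun, if_pos hm]
            exact hasSum_ite_eq j (g j)
          · have hfun : (fun x => if m = l0 then kron j x * g x else g x) = g := by
              funext x; rw [if_neg hm]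
            rw [hfun, if_neg hm]
            exact hg_sum
        have hP := smol_hasSum_pi_prod
          (h := fun m x => if m = l0 then kron j x * g x else g x)
          (a := fun m => if m = l0 then g j else 1)
          (fun m x => by
            split
            · exact mul_nonneg (kron_nonneg _ _) (hg_nonneg x)
            · exact hg_nonneg x) hs
        have hprodval : (∏ m : Fin k, if m = l0 then g j else 1) = g j := by
          rw [Finset.prod_ite_eq' Finset.univ l0 (fun _ => g j)]
          rw [if_pos (Finset.mem_univ l0)]
        have hfun : (fun i : Fin k → ℕ =>
              ∏ m, if m = l0 then kron j (i m) * g (i m) else g (i m))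
            = fun i : Fin k → ℕ => kron j (i l0) * ∏ m, g (i m) := by
          funext i
          have hstep : ∀ m : Fin k, (if m = l0 then kron j (i m) * g (i m) else g (i m))
              = (if m = l0 then kron j (i m) else 1) * g (i m) := by
            intro m; split <;> ring
          rw [Finset.prod_congr rfl fun m _ => hstep m, Finset.prod_mul_distrib]
          congr 1
          rw [Finset.prod_ite_eq' Finset.univ l0 (fun m => kron j (i m))]
          rw [if_pos (Finset.mem_univ l0)]
        rw [hprodval, hfun] at hP
        exact hP
      have hBsum : HasSum (fun i : Fin k → ℕ => ∑ l0, kron j (i l0) * ∏ m, g (i m))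
          ((k : ℝ) * g j) := by
        have h1 := hasSum_sum (s := Finset.univ)
          (f := fun (l0 : Fin k) (i : Fin k → ℕ) => kron j (i l0) * ∏ m, g (i m))
          (a := fun _ => g j) (fun l0 _ => hB l0)
        have h2 : (∑ _l0 : Fin k, g j) = (k : ℝ) * g j := by
          rw [Finset.sum_const, Finset.card_univ, Fintype.card_fin, nsmul_eq_mul]
        rwa [h2] at h1
      have hAB := hA.sub hBsum
      have hIfun : (fun i : Fin k → ℕ =>
          if ∀ l, 0 < i l then
            (kron j (∑ l, i l) - ∑ l, kron j (i l)) * ∏ l, ν n (i l) / ρ n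
          else 0)
          = fun i : Fin k → ℕ => kron j (∑ l, i l) * ∏ l, g (i l)
              - ∑ l0, kron j (i l0) * ∏ m, g (i m) := by
        funext i
        by_cases hpos : ∀ l, 0 < i l
        · rw [if_pos hpos]
          have hgprod : (∏ l, ν n (i l) / ρ n) = ∏ l, g (i l) := by
            refine Finset.prod_congr rfl fun l _ => ?_
            rw [hgdef, hνpdef]
            dsimp only
            rw [if_pos (hpos l), div_eq_inv_mul]
          rw [hgprod, sub_mul, Finset.sum_mul]
        · rw [if_neg hpos]
          push_neg at hpos
          obtain ⟨l0, hl0⟩ := hpos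
          have hz : g (i l0) = 0 := by
            rw [hgdef, hνpdef]
            dsimp only
            rw [if_neg (by omega : ¬ 0 < i l0), mul_zero]
          have hP0 : (∏ l, g (i l)) = 0 :=
            Finset.prod_eq_zero (Finset.mem_univ l0) hz
          rw [hP0]
          simp
      have hIeq : Ihat (ν n) (ρ n) k j = convPow g k j - (k : ℝ) * g j := by
        unfold Ihat
        rw [hIfun]
        exact hAB.tsum_eq
      rw [hIeq]
      congr 1
      rw [hgdef]
      exact smol_convPow_mul_left νp (ρ n)⁻¹ k j
    -- summability of the basic series
    have hTsummable : Summable (fun k => π k * convPow (ν n) k j) := by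
      refine Summable.of_nonneg_of_le
        (fun k => mul_nonneg (hπ_nonneg k) (smol_convPow_nonneg hnn k j))
        (fun k => ?_) hπ_sum.summable
      have h1 : convPow (ν n) k j ≤ 1 := by
        have h2 := le_hasSum (smol_hasSum_convPow hnn hmass k) j
          fun b _ => smol_convPow_nonneg hnn k b
        rwa [one_pow] at h2
      calc π k * convPow (ν n) k j ≤ π k * 1 :=
            mul_le_mul_of_nonneg_left h1 (hπ_nonneg k)
        _ = π k := mul_one _
    set T : ℝ := ∑' k, π k * convPow (ν n) k j with hT
    have hThasSum : HasSum (fun k => π k * convPow (ν n) k j) T := hTsummable.hasSum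
    -- Fubini for the binomial decomposition
    set P : ℕ × ℕ → ℝ := fun p =>
      (if p.2 ≤ p.1 then π p.1 * (p.1.choose p.2 : ℝ) * c ^ (p.1 - p.2) else 0)
        * convPow νp p.2 j with hPdef
    have hP_nonneg : ∀ p, 0 ≤ P p := by
      intro p
      rw [hPdef]
      refine mul_nonneg ?_ (smol_convPow_nonneg hνp_nonneg _ _)
      split
      · exact mul_nonneg (mul_nonneg (hπ_nonneg _) (Nat.cast_nonneg _))
          (pow_nonneg hc_nonneg _)
      · exact le_refl 0
    have hPfib : ∀ l, HasSum (fun m => P (l, m)) (π l * convPow (ν n) l j) := by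
      intro l
      have h1 : HasSum (fun m => P (l, m)) (∑ m ∈ Finset.range (l + 1), P (l, m)) := by
        refine hasSum_sum_of_ne_finset_zero fun m hm => ?_
        rw [hPdef]
        dsimp only
        rw [if_neg (by simp at hm; omega), zero_mul]
      have h2 : (∑ m ∈ Finset.range (l + 1), P (l, m)) = π l * convPow (ν n) l j := by
        rw [smol_convPow_binom (ν n) l j, ← hνpdef, Finset.mul_sum]
        refine Finset.sum_congr rfl fun m hm => ?_
        rw [hPdef]
        dsimp only
        rw [if_pos (by simp at hm; omega), hν0_eq]
        ring
      rwa [h2] at h1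
    have hPsum : HasSum P T := smol_hasSum_prod_of_nonneg hP_nonneg hPfib hThasSum
    have hX : HasSum (fun m => q m * convPow νp m j) T := by
      have hsw := smol_hasSum_swap hPsum
      have hfun : (fun m => ∑' l, P (l, m)) = fun m => q m * convPow νp m j := by
        funext m
        rw [hPdef, hq]
        dsimp only
        exact tsum_mul_right
      rwa [hfun] at hsw
    -- Fubini for the criticality identity
    set Q : ℕ × ℕ → ℝ := fun p =>
      (if p.2 ≤ p.1 then π p.1 * (p.1.choose p.2 : ℝ) * c ^ (p.1 - p.2) else 0)
        * ((p.2 : ℝ) * (ρ n) ^ (p.2 - 1)) with hQdef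
    have hQ_nonneg : ∀ p, 0 ≤ Q p := by
      intro p
      rw [hQdef]
      refine mul_nonneg ?_ (mul_nonneg (Nat.cast_nonneg _) (pow_nonneg hρ_nonneg _))
      split
      · exact mul_nonneg (mul_nonneg (hπ_nonneg _) (Nat.cast_nonneg _))
          (pow_nonneg hc_nonneg _)
      · exact le_refl 0
    have hQfib : ∀ l : ℕ, HasSum (fun m => Q (l, m)) ((l : ℝ) * π l) := by
      intro l
      have h1 : HasSum (fun m => Q (l, m)) (∑ m ∈ Finset.range (l + 1), Q (l, m)) := by
        refine hasSum_sum_of_ne_finset_zero fun m hm => ?_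
        rw [hQdef]
        dsimp only
        rw [if_neg (by simp at hm; omega), zero_mul]
      have h3 := smol_sum_deriv_binom l (ρ n) c
      have h4 : ρ n + c = 1 := by rw [hc]; ring
      rw [h4, one_pow, mul_one] at h3
      have h2 : (∑ m ∈ Finset.range (l + 1), Q (l, m)) = (l : ℝ) * π l := by
        calc (∑ m ∈ Finset.range (l + 1), Q (l, m))
            = ∑ m ∈ Finset.range (l + 1),
                π l * ((m : ℝ) * (l.choose m : ℝ) * (ρ n) ^ (m - 1) * c ^ (l - m)) := by
              refine Finset.sum_congr rfl fun m hm => ?_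
              rw [hQdef]
              dsimp only
              rw [if_pos (by simp at hm; omega)]
              ring
          _ = π l * ((l : ℝ)) := by rw [← Finset.mul_sum, h3]
          _ = (l : ℝ) * π l := mul_comm _ _
      rwa [h2] at h1
    have hQsum : HasSum Q 1 := smol_hasSum_prod_of_nonneg hQ_nonneg hQfib hcrit
    have hY : HasSum (fun m => q m * ((m : ℝ) * (ρ n) ^ (m - 1))) 1 := by
      have hsw := smol_hasSum_swap hQsum
      have hfun : (fun m => ∑' l, Q (l, m))
          = fun m => q m * ((m : ℝ) * (ρ n) ^ (m - 1)) := by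
        funext m
        rw [hQdef, hq]
        dsimp only
        exact tsum_mul_right
      rwa [hfun] at hsw
    -- rewrite Rhat
    have hRq : ∀ k, Rhat π k (ρ n) = (ρ n) ^ k * q k := by
      intro k
      unfold Rhat
      rw [hq]
      dsimp only
      rw [← tsum_mul_left]
      refine tsum_congr fun l => ?_
      rw [← hc]
      split
      · ring
      · rw [mul_zero]
    have hRI : ∀ k, 2 ≤ k → Rhat π k (ρ n) * Ihat (ν n) (ρ n) k j
        = q k * convPow νp k j - q k * ((k : ℝ) * (ρ n) ^ (k - 1)) * ν n j := by
      intro k hk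
      rw [hRq k, hIhat k hk]
      have e1 : (ρ n) ^ k * (ρ n)⁻¹ ^ k = 1 := by
        rw [← mul_pow, mul_inv_cancel₀ hρ0, one_pow]
      have e2 : (ρ n) ^ k * (ρ n)⁻¹ = (ρ n) ^ (k - 1) := by
        have hk1 : k - 1 + 1 = k := by omega
        rw [← hk1, pow_succ, mul_assoc, mul_inv_cancel₀ hρ0, mul_one, hk1]
      have e3 : g j = (ρ n)⁻¹ * ν n j := by
        rw [hgdef, hνpdef]
        dsimp only
        rw [if_pos hj]
      rw [e3]
      have expand : (ρ n) ^ k * q k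
            * ((ρ n)⁻¹ ^ k * convPow νp k j - (k : ℝ) * ((ρ n)⁻¹ * ν n j))
          = ((ρ n) ^ k * (ρ n)⁻¹ ^ k) * (q k * convPow νp k j)
            - ((ρ n) ^ k * (ρ n)⁻¹) * (q k * ((k : ℝ) * ν n j)) := by ring
      rw [expand, e1, e2, one_mul]
      ring
    -- final assembly
    have hXge2 := smol_hasSum_ge_two hX
    have hYge2 := (smol_hasSum_ge_two hY).mul_right (ν n j)
    have hcomb := hXge2.sub hYge2
    have hfun : (fun k => (if 2 ≤ k then q k * convPow νp k j else 0)
          - (if 2 ≤ k then q k * ((k : ℝ) * (ρ n) ^ (k - 1)) else 0) * ν n j)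
        = fun k => if 2 ≤ k then Rhat π k (ρ n) * Ihat (ν n) (ρ n) k j else 0 := by
      funext k
      by_cases hk : 2 ≤ k
      · simp only [if_pos hk]
        rw [hRI k hk]
      · simp only [if_neg hk]
        ring
    rw [hfun] at hcomb
    rw [hν n j, ← hT, hcomb.tsum_eq]
    have e0 : convPow νp 0 j = 0 := by
      show (if j = 0 then (1 : ℝ) else 0) = 0
      rw [if_neg (by omega)]
    have e1 : convPow νp 1 j = ν n j := by
      rw [smol_convPow_one, hνpdef]
      dsimp only
      rw [if_pos hj]
    simp only [e0, e1, Nat.cast_zero, Nat.cast_one, mul_zero, zero_mul, one_mul,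
      pow_zero, mul_one, sub_zero]
    ring
end

section
/- For h, q > 0 with max(h, qh) < 1/2 and x > h, define f_h(x) = (1 − (1−hq)^{(x−h)/h})/(x−h) · (x/(x∧1)) and f_0(x) = ((1−e^{−qx})/x) · (x/(x∧1)). Then |f_h(x) − f_0(x)| ≤ 5e^{−qx} + 2h/x for x > 2, and |f_h(x) − f_0(x)| ≤ 2(1∨x) h q² for all x > h. Consequently sup_{x>h} |f_h(x) − f_0(x)| → 0 as h → 0 (for fixed q). -/
open Real

noncomputable def fh (h q x : ℝ) : ℝ :=
  (1 - Real.exp (((x - h) / h) * Real.log (1 - h * q))) / (x - h) * (x / min x 1)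

noncomputable def f0 (q x : ℝ) : ℝ :=
  ((1 - Real.exp (-q * x)) / x) * (x / min x 1)


-- log bound: -log(1-u) ≤ u + u^2 for 0 < u ≤ 1/2
lemma neg_log_le (u : ℝ) (h0 : 0 < u) (h2 : u ≤ 1/2) :
    -Real.log (1 - u) ≤ u + u^2 := by
  have h1 : 0 < 1 - u := by linarith
  have key : Real.exp (-(u + u^2)) ≤ 1 - u := by
    have hs : 0 ≤ u + u^2 := by positivity
    have hqd := Real.quadratic_le_exp_of_nonneg hs
    rw [Real.exp_neg, inv_le_comm₀ (Real.exp_pos _) (by linarith)]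
    calc (1-u)⁻¹ ≤ 1 + (u + u^2) + (u + u^2)^2/2 := by
          rw [inv_le_iff_one_le_mul₀ h1]; nlinarith
      _ ≤ Real.exp (u + u^2) := hqd
  have := (Real.le_log_iff_exp_le h1).mpr key
  linarith

-- exp difference bound
lemma exp_diff_le (a b : ℝ) (hab : a ≤ b) :
    Real.exp (-a) - Real.exp (-b) ≤ (b - a) * Real.exp (-a) := by
  have h1 : (a - b) + 1 ≤ Real.exp (a - b) := Real.add_one_le_exp _
  have h2 : Real.exp (-b) = Real.exp (-a) * Real.exp (a - b) := by
    rw [← Real.exp_add]; ring_nf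
  nlinarith [Real.exp_pos (-a)]

-- Lipschitz bound for F t = (1 - exp(-q t))/t on [a,b] ⊂ (0,∞)
lemma F_lip (q : ℝ) (hq : 0 < q) {a b : ℝ} (ha : 0 < a) (hab : a ≤ b) :
    |(1 - Real.exp (-(q*b)))/b - (1 - Real.exp (-(q*a)))/a| ≤ q^2 * (b - a) := by
  set f : ℝ → ℝ := fun t => (1 - Real.exp (-(q*t)))/t with hf
  set f' : ℝ → ℝ := fun t => (q * Real.exp (-(q*t)) * t - (1 - Real.exp (-(q*t))))/t^2 with hf'
  have hderiv : ∀ t ∈ Set.Icc a b, HasDerivWithinAt f (f' t) (Set.Icc a b) t := by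
    intro t ht
    have htpos : 0 < t := lt_of_lt_of_le ha ht.1
    have ht0 : t ≠ 0 := ne_of_gt htpos
    have h1 : HasDerivAt (fun t : ℝ => -(q*t)) (-q) t := by
      simpa using ((hasDerivAt_id t).const_mul (-q))
    have h2 : HasDerivAt (fun t : ℝ => Real.exp (-(q*t))) (Real.exp (-(q*t)) * (-q)) t := h1.exp
    have h3 : HasDerivAt (fun t : ℝ => 1 - Real.exp (-(q*t))) (q * Real.exp (-(q*t))) t := by
      have := h2.const_sub 1
      exact this.congr_deriv (by ring)
    have h4 := h3.div (hasDerivAt_id t) ht0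
    have : HasDerivAt f (f' t) t := by
      refine h4.congr_deriv ?_
      simp only [hf', id_eq]
      ring
    exact this.hasDerivWithinAt
  have hbound : ∀ t ∈ Set.Icc a b, ‖f' t‖ ≤ q^2 := by
    intro t ht
    have ht0 : 0 < t := lt_of_lt_of_le ha ht.1
    rw [Real.norm_eq_abs, hf']
    rw [abs_div, abs_of_nonneg (by positivity : (0:ℝ) ≤ t^2), div_le_iff₀ (by positivity)]
    set u := q * t with hu
    have hu0 : 0 < u := by positivity
    have e1 : Real.exp (-u) * Real.exp u = 1 := by rw [← Real.exp_add]; simp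
    have e2 : 1 + u ≤ Real.exp u := by linarith [Real.add_one_le_exp u]
    have e3 : 1 - u ≤ Real.exp (-u) := by linarith [Real.add_one_le_exp (-u)]
    have e4 : 0 < Real.exp (-u) := Real.exp_pos _
    have key1 : Real.exp (-u) * (1 + u) ≤ 1 := by nlinarith
    have key2 : 1 - u^2 ≤ Real.exp (-u) * (1 + u) := by nlinarith
    have habs : |q * Real.exp (-(q*t)) * t - (1 - Real.exp (-(q*t)))| ≤ u^2 := by
      rw [abs_le]
      constructor <;> [skip; skip] <;>
      · have : q * Real.exp (-(q*t)) * t = u * Real.exp (-u) := by rw [hu]; ring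
        have h5 : Real.exp (-(q*t)) = Real.exp (-u) := by rw [hu]
        rw [this, h5]; nlinarith
    calc |q * Real.exp (-(q*t)) * t - (1 - Real.exp (-(q*t)))| ≤ u^2 := habs
      _ = q^2 * t^2 := by rw [hu]; ring
  have hmvt := Convex.norm_image_sub_le_of_norm_hasDerivWithin_le hderiv hbound
    (convex_Icc a b) (Set.left_mem_Icc.mpr hab) (Set.right_mem_Icc.mpr hab)
  rw [Real.norm_eq_abs, Real.norm_eq_abs, abs_of_nonneg (by linarith : (0:ℝ) ≤ b - a)] at hmvt
  simpa [hf] using hmvt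

noncomputable def cc (h q : ℝ) : ℝ := -Real.log (1 - h*q) / h

lemma setup (q h x : ℝ) (hq : 0 < q) (hh : 0 < h) (hmax : max h (q * h) < 1/2) (hx : h < x) :
    fh h q x = (1 - Real.exp (-(cc h q * (x-h))))/(x-h) * max 1 x ∧
    f0 q x = (1 - Real.exp (-(q*x)))/x * max 1 x ∧
    q ≤ cc h q ∧ cc h q ≤ q + h*q^2 := by
  have hqh : q * h < 1/2 := lt_of_le_of_lt (le_max_right _ _) hmax
  have hu : h * q < 1/2 := by linarith [mul_comm q h ▸ hqh]
  have h1u : 0 < 1 - h * q := by nlinarith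
  have hx0 : 0 < x := hh.trans hx
  have hmin : x / min x 1 = max 1 x := by
    rcases le_total x 1 with hc | hc
    · rw [min_eq_left hc, div_self (ne_of_gt hx0), max_eq_left hc]
    · rw [min_eq_right hc, div_one, max_eq_right hc]
  have hexp : ((x - h) / h) * Real.log (1 - h * q) = -(cc h q * (x-h)) := by
    rw [cc]; field_simp
  refine ⟨by unfold fh; rw [hexp, hmin], by unfold f0; rw [hmin, neg_mul], ?_, ?_⟩
  · rw [cc, le_div_iff₀ hh]
    have := Real.log_le_sub_one_of_pos h1u
    nlinarith
  · rw [cc, div_le_iff₀ hh]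
    have := neg_log_le (h*q) (by positivity) (le_of_lt hu)
    nlinarith

lemma bound2 (q h x : ℝ) (hq : 0 < q) (hh : 0 < h) (hmax : max h (q * h) < 1/2) (hx : h < x) :
    |fh h q x - f0 q x| ≤ 2 * max 1 x * h * q ^ 2 := by
  obtain ⟨e1, e2, hcq, hcu⟩ := setup q h x hq hh hmax hx
  set c := cc h q with hc
  have hx0 : 0 < x := hh.trans hx
  have hxh : 0 < x - h := by linarith
  set G := (1 - Real.exp (-(c * (x-h))))/(x-h) with hG
  set F := (1 - Real.exp (-(q*x)))/x with hF
  set F1 := (1 - Real.exp (-(q*(x-h))))/(x-h) with hF1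
  have t2 : |F - F1| ≤ q^2 * h := by
    have := F_lip q hq hxh (by linarith : x - h ≤ x)
    rw [← hF, ← hF1] at this
    calc |F - F1| ≤ q^2 * (x - (x-h)) := this
      _ = q^2 * h := by ring
  have t1 : |G - F1| ≤ h * q^2 := by
    have hmono : Real.exp (-(c * (x-h))) ≤ Real.exp (-(q*(x-h))) := by
      apply Real.exp_le_exp.mpr; nlinarith
    have hdl := exp_diff_le (q*(x-h)) (c*(x-h)) (by nlinarith)
    have hle1 : Real.exp (-(q*(x-h))) ≤ 1 := by
      rw [Real.exp_le_one_iff]; nlinarith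
    have hGF1 : G - F1 = (Real.exp (-(q*(x-h))) - Real.exp (-(c*(x-h))))/(x-h) := by
      rw [hG, hF1]; ring
    rw [hGF1, abs_of_nonneg (div_nonneg (by linarith) hxh.le), div_le_iff₀ hxh]
    have hEq : 0 < Real.exp (-(q*(x-h))) := Real.exp_pos _
    have hstep : (c * (x-h) - q * (x-h)) * Real.exp (-(q*(x-h))) ≤ (h*q^2*(x-h)) * 1 := by
      apply mul_le_mul _ hle1 hEq.le (by positivity)
      nlinarith
    linarith
  have tG : |G - F| ≤ 2 * h * q^2 := by
    calc |G - F| = |(G - F1) + (F1 - F)| := by ring_nf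
      _ ≤ |G - F1| + |F1 - F| := abs_add_le _ _
      _ = |G - F1| + |F - F1| := by rw [abs_sub_comm F1 F]
      _ ≤ h * q^2 + q^2 * h := by linarith
      _ = 2 * h * q^2 := by ring
  have hM : (1:ℝ) ≤ max 1 x := le_max_left _ _
  have hdiff : fh h q x - f0 q x = (G - F) * max 1 x := by rw [e1, e2]; ring
  rw [hdiff, abs_mul, abs_of_nonneg (by linarith : (0:ℝ) ≤ max 1 x)]
  nlinarith [abs_nonneg (G - F)]

lemma bound1 (q h x : ℝ) (hq : 0 < q) (hh : 0 < h) (hmax : max h (q * h) < 1/2) (hx2 : 2 < x) :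
    |fh h q x - f0 q x| ≤ 5 * Real.exp (-q * x) + 2 * h / x := by
  have hh2 : h < 1/2 := lt_of_le_of_lt (le_max_left _ _) hmax
  have hqh : q * h < 1/2 := lt_of_le_of_lt (le_max_right _ _) hmax
  have hx : h < x := by linarith
  obtain ⟨e1, e2, hcq, hcu⟩ := setup q h x hq hh hmax hx
  set c := cc h q with hc
  have hx0 : 0 < x := by linarith
  have hxh : 0 < x - h := by linarith
  have hM : max 1 x = x := max_eq_right (by linarith)
  set Ec := Real.exp (-(c * (x-h))) with hEc
  set Eqq := Real.exp (-(q * x)) with hEq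
  set Em := Real.exp (-(q * (x-h))) with hEm
  have hEc_le : Ec ≤ Em := Real.exp_le_exp.mpr (by nlinarith)
  have hEq_le : Eqq ≤ Em := Real.exp_le_exp.mpr (by nlinarith)
  have hEc0 : 0 < Ec := Real.exp_pos _
  have hEq0 : 0 < Eqq := Real.exp_pos _
  have hEc1 : Ec ≤ 1 := Real.exp_le_one_iff.mpr (by nlinarith)
  have hdecomp : fh h q x - f0 q x = (h/(x-h)) * (1 - Ec) + (Eqq - Ec) := by
    rw [e1, e2, hM]
    field_simp
    ring
  have hterm2 : |Eqq - Ec| ≤ Em := abs_le.mpr ⟨by linarith, by linarith⟩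
  have habs : |fh h q x - f0 q x| ≤ h/(x-h) + Em := by
    rw [hdecomp]
    calc |(h/(x-h)) * (1 - Ec) + (Eqq - Ec)| ≤ |(h/(x-h)) * (1 - Ec)| + |Eqq - Ec| :=
          abs_add_le _ _
      _ ≤ h/(x-h) + Em := by
          have h1 : |(h/(x-h)) * (1 - Ec)| = (h/(x-h)) * (1 - Ec) :=
            abs_of_nonneg (mul_nonneg (by positivity) (by linarith))
          have h2 : (h/(x-h)) * (1 - Ec) ≤ h/(x-h) * 1 :=
            mul_le_mul_of_nonneg_left (by linarith) (by positivity)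
          rw [h1]
          linarith
  have ht1 : h/(x-h) ≤ 2*h/x := by
    rw [div_le_div_iff₀ hxh hx0]; nlinarith
  have ht2 : Em ≤ 2 * Eqq := by
    have hsplit : Em = Real.exp (q*h) * Eqq := by
      rw [hEm, hEq, ← Real.exp_add]; ring_nf
    have h1 : Real.exp (q*h) * Real.exp (-(q*h)) = 1 := by rw [← Real.exp_add]; simp
    have h2 : 1 - q*h ≤ Real.exp (-(q*h)) := by linarith [Real.add_one_le_exp (-(q*h))]
    have h3 : Real.exp (q*h) ≤ 2 := by
      have hinv : Real.exp (q*h) = (Real.exp (-(q*h)))⁻¹ := by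
        rw [← Real.exp_neg]; ring_nf
      rw [hinv, inv_le_comm₀ (Real.exp_pos _) two_pos]
      norm_num
      linarith
    rw [hsplit]
    exact mul_le_mul_of_nonneg_right h3 hEq0.le
  have hgoal : -q * x = -(q*x) := by ring
  rw [hgoal, ← hEq]
  linarith

theorem fh_approx_f0 (q : ℝ) (hq : 0 < q) :
    (∀ h : ℝ, 0 < h → max h (q * h) < 1 / 2 →
      (∀ x : ℝ, 2 < x → |fh h q x - f0 q x| ≤ 5 * Real.exp (-q * x) + 2 * h / x) ∧
      (∀ x : ℝ, h < x → |fh h q x - f0 q x| ≤ 2 * max 1 x * h * q ^ 2))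
    ∧
    (∀ ε : ℝ, 0 < ε → ∃ δ : ℝ, 0 < δ ∧
      ∀ h : ℝ, 0 < h → h < δ → max h (q * h) < 1 / 2 →
        ∀ x : ℝ, h < x → |fh h q x - f0 q x| ≤ ε) := by
  constructor
  · intro h hh hmax
    exact ⟨fun x hx => bound1 q h x hq hh hmax hx,
           fun x hx => bound2 q h x hq hh hmax hx⟩
  · intro ε hε
    set X := max 2 (Real.log (10/ε) / q) with hX
    have hX2 : (2:ℝ) ≤ X := le_max_left _ _
    have hM1 : (1:ℝ) ≤ max 1 X := le_max_left _ _
    refine ⟨min (ε/4) (ε/(2 * max 1 X * q^2)), lt_min (by positivity) (by positivity), ?_⟩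
    intro h hh hδ hmax x hx
    rcases le_or_gt x X with hcase | hcase
    · have hb := bound2 q h x hq hh hmax hx
      have hmaxle : max 1 x ≤ max 1 X := max_le_max le_rfl hcase
      have hδ2 : h ≤ ε/(2 * max 1 X * q^2) := le_of_lt (lt_of_lt_of_le hδ (min_le_right _ _))
      have hD : 0 < 2 * max 1 X * q^2 := by positivity
      have hstep : 2 * max 1 x * h * q^2 ≤ 2 * max 1 X * h * q^2 := by
        have := mul_le_mul_of_nonneg_right hmaxle (by positivity : (0:ℝ) ≤ 2 * h * q^2)
        nlinarith
      have h2 : 2 * max 1 X * h * q^2 ≤ ε := by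
        have := (le_div_iff₀ hD).mp hδ2
        nlinarith
      linarith
    · have hx2 : 2 < x := lt_of_le_of_lt hX2 hcase
      have hb := bound1 q h x hq hh hmax hx2
      have hexpx : Real.exp (-q * x) ≤ ε/10 := by
        have hqx : Real.log (10/ε) ≤ q * x := by
          have h1 : Real.log (10/ε) / q ≤ X := le_max_right _ _
          have := (div_le_iff₀ hq).mp (h1.trans hcase.le)
          linarith
        have : Real.exp (-q*x) ≤ Real.exp (-Real.log (10/ε)) :=
          Real.exp_le_exp.mpr (by linarith)
        rw [Real.exp_neg, Real.exp_log (by positivity)] at this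
        calc Real.exp (-q*x) ≤ (10/ε)⁻¹ := this
          _ = ε/10 := by field_simp
      have hhx : 2 * h / x ≤ h := by
        rw [div_le_iff₀ (by linarith : (0:ℝ) < x)]; nlinarith
      have hhε : h ≤ ε/4 := le_of_lt (lt_of_lt_of_le hδ (min_le_left _ _))
      linarith
end

section
/- Let Ψ(q) = (1/2)α₀q² + α_∞ q + ∫_{(0,∞)} (e^{−qx} − 1 + qx)/x dμ(x) with α₀, α_∞ ≥ 0 and ∫(x∧1)dμ < ∞, and let φ(q,t) solve ∂_t φ = −Ψ(φ), φ(q,0) = q. Then β₀(t) := lim_{q→∞} φ(q,t)/q satisfies: β₀(t) = 0 for all t > 0 if and only if Ψ'(∞) = ∞ (equivalently α₀ > 0 or μ has infinite total mass); and if Ψ'(∞) < ∞ then β₀(t) = exp(−Ψ'(∞)t). -/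
open Filter MeasureTheory Set Topology
open scoped ENNReal


lemma bzd_exp_nonneg (u : ℝ) : 0 ≤ Real.exp (-u) - 1 + u := by
  have h := Real.add_one_le_exp (-u); linarith

lemma bzd_one_sub_exp_le (u : ℝ) (hu : 0 ≤ u) : 1 - Real.exp (-u) ≤ min u 1 := by
  have h := Real.add_one_le_exp (-u)
  have h2 : 0 < Real.exp (-u) := Real.exp_pos _
  exact le_min (by linarith) (by linarith)

lemma bzd_one_sub_exp_nonneg (u : ℝ) (hu : 0 ≤ u) : 0 ≤ 1 - Real.exp (-u) := by
  have : Real.exp (-u) ≤ Real.exp 0 := Real.exp_le_exp.2 (by linarith)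
  simp only [Real.exp_zero] at this; linarith

lemma bzd_exp_le_sq (u : ℝ) (hu : 0 ≤ u) : Real.exp (-u) - 1 + u ≤ u ^ 2 / 2 := by
  have key : ∀ v : ℝ, HasDerivAt (fun w => w ^ 2 / 2 - (Real.exp (-w) - 1 + w))
      (v - (1 - Real.exp (-v))) v := by
    intro v
    have h1 : HasDerivAt (fun w : ℝ => Real.exp (-w)) (-Real.exp (-v)) v := by
      simpa [Function.comp_def] using (Real.hasDerivAt_exp (-v)).comp v ((hasDerivAt_id v).neg)
    have h2 : HasDerivAt (fun w : ℝ => w ^ 2 / 2 - (Real.exp (-w) - 1 + w))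
        ((2 * v ^ 1 / 2) - ((-Real.exp (-v)) + 1)) v :=
      (((hasDerivAt_pow 2 v).div_const 2)).sub (((h1.sub_const 1)).add (hasDerivAt_id v))
    convert h2 using 1; ring
  have mono : MonotoneOn (fun w : ℝ => w ^ 2 / 2 - (Real.exp (-w) - 1 + w)) (Set.Ici 0) := by
    apply monotoneOn_of_deriv_nonneg (convex_Ici 0)
    · exact Continuous.continuousOn (by continuity)
    · intro v _; exact (key v).differentiableAt.differentiableWithinAt
    · intro v hv
      rw [(key v).deriv]
      linarith [min_le_left v (1:ℝ), bzd_one_sub_exp_le v (le_of_lt (by simpa using hv))]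
  have := mono (le_refl (0:ℝ) : (0:ℝ) ∈ Set.Ici 0) (hu : u ∈ Set.Ici 0) hu
  simp only [Real.exp_zero] at this
  norm_num at this
  linarith

lemma bzd_exp_le_lin (u : ℝ) (hu : 0 ≤ u) : Real.exp (-u) - 1 + u ≤ u := by
  have : Real.exp (-u) ≤ Real.exp 0 := Real.exp_le_exp.2 (by linarith)
  simp only [Real.exp_zero] at this; linarith

/-- pointwise bound B1 -/
lemma bzd_B1 (x a : ℝ) (ha : 0 < a) (hx : 0 ≤ x) :
    (Real.exp (-x * a) - 1 + x * a) / a ≤ (x ^ 2 / 2 + x) * min a 1 := by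
  have hxa : 0 ≤ x * a := mul_nonneg hx ha.le
  have hrw : -x * a = -(x * a) := by ring
  rcases le_or_gt a 1 with h | h
  · have hmin : min a 1 = a := min_eq_left h
    have h1 : Real.exp (-(x * a)) - 1 + x * a ≤ (x * a) ^ 2 / 2 := bzd_exp_le_sq _ hxa
    rw [hrw, hmin]
    rw [div_le_iff₀ ha]
    nlinarith [sq_nonneg x, sq_nonneg a, mul_nonneg (mul_nonneg hx hx) ha.le]
  · have hmin : min a 1 = 1 := min_eq_right h.le
    have h1 : Real.exp (-(x * a)) - 1 + x * a ≤ x * a := bzd_exp_le_lin _ hxa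
    rw [hrw, hmin]
    rw [div_le_iff₀ ha]
    nlinarith [sq_nonneg x]

/-- pointwise bound B2 -/
lemma bzd_B2 (x a : ℝ) (ha : 0 < a) (hx : 0 ≤ x) :
    1 - Real.exp (-x * a) ≤ (x + 1) * min a 1 := by
  have hxa : 0 ≤ x * a := mul_nonneg hx ha.le
  have hrw : -x * a = -(x * a) := by ring
  have h1 : 1 - Real.exp (-(x * a)) ≤ min (x * a) 1 := bzd_one_sub_exp_le _ hxa
  rw [hrw]
  rcases le_or_gt a 1 with h | h
  · have hmin : min a 1 = a := min_eq_left h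
    rw [hmin]
    calc 1 - Real.exp (-(x * a)) ≤ min (x * a) 1 := h1
    _ ≤ x * a := min_le_left _ _
    _ ≤ (x + 1) * a := by nlinarith
  · have hmin : min a 1 = 1 := min_eq_right h.le
    rw [hmin]
    calc 1 - Real.exp (-(x * a)) ≤ min (x * a) 1 := h1
    _ ≤ 1 := min_le_right _ _
    _ ≤ (x + 1) * 1 := by nlinarith

/-- pointwise bound B3 -/
lemma bzd_B3 (x a : ℝ) (ha : 0 < a) (hx : 0 ≤ x) (hx1 : x ≤ 1) :
    (Real.exp (-x * a) - 1 + x * a) / a ≤ x * min a 1 := by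
  have hxa : 0 ≤ x * a := mul_nonneg hx ha.le
  have hrw : -x * a = -(x * a) := by ring
  rcases le_or_gt a 1 with h | h
  · have hmin : min a 1 = a := min_eq_left h
    have h1 : Real.exp (-(x * a)) - 1 + x * a ≤ (x * a) ^ 2 / 2 := bzd_exp_le_sq _ hxa
    rw [hrw, hmin, div_le_iff₀ ha]
    nlinarith [mul_nonneg hx ha.le, mul_nonneg (mul_nonneg hx hx) (mul_nonneg ha.le ha.le)]
  · have hmin : min a 1 = 1 := min_eq_right h.le
    have h1 : Real.exp (-(x * a)) - 1 + x * a ≤ x * a := bzd_exp_le_lin _ hxa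
    rw [hrw, hmin, div_le_iff₀ ha]
    nlinarith

lemma bzd_min_integrable (μ : Measure ℝ)
    (hμfin : ∫⁻ x in Set.Ioi (0 : ℝ), ENNReal.ofReal (min x 1) ∂μ < ⊤) :
    Integrable (fun a => min a 1) (μ.restrict (Set.Ioi 0)) := by
  constructor
  · exact (measurable_id.min measurable_const).aestronglyMeasurable
  · rw [hasFiniteIntegral_iff_ofReal]
    · exact hμfin
    · filter_upwards [ae_restrict_mem measurableSet_Ioi] with a ha
      exact le_min ha.le zero_le_one

lemma bzd_integrable_of_le_min (μ : Measure ℝ)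
    (hμfin : ∫⁻ x in Set.Ioi (0 : ℝ), ENNReal.ofReal (min x 1) ∂μ < ⊤)
    (f : ℝ → ℝ) (hf : AEStronglyMeasurable f (μ.restrict (Set.Ioi 0))) (C : ℝ)
    (hC : 0 ≤ C)
    (hbound : ∀ a ∈ Set.Ioi (0:ℝ), ‖f a‖ ≤ C * min a 1) :
    Integrable f (μ.restrict (Set.Ioi 0)) := by
  refine Integrable.mono ((bzd_min_integrable μ hμfin).const_mul C) hf ?_
  filter_upwards [ae_restrict_mem measurableSet_Ioi] with a ha
  refine (hbound a ha).trans ?_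
  rw [Real.norm_eq_abs]; exact le_abs_self _

/-- Integrability of the integrand of Ψ. -/
lemma bzd_F_integrable (μ : Measure ℝ)
    (hμfin : ∫⁻ x in Set.Ioi (0 : ℝ), ENNReal.ofReal (min x 1) ∂μ < ⊤)
    (x : ℝ) (hx : 0 ≤ x) :
    Integrable (fun a => (Real.exp (-x * a) - 1 + x * a) / a) (μ.restrict (Set.Ioi 0)) := by
  have hmeas : Measurable (fun a : ℝ => (Real.exp (-x * a) - 1 + x * a) / a) :=
    (((Real.measurable_exp.comp (measurable_id.const_mul (-x))).sub measurable_const).add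
      (measurable_id.const_mul x)).div measurable_id
  refine bzd_integrable_of_le_min μ hμfin _ hmeas.aestronglyMeasurable (x ^ 2 / 2 + x)
    (by positivity) ?_
  intro a ha
  have ha' : (0:ℝ) < a := ha
  have hnn : 0 ≤ (Real.exp (-x * a) - 1 + x * a) / a := by
    apply div_nonneg _ ha'.le
    have := bzd_exp_nonneg (x * a)
    have hrw : -x * a = -(x * a) := by ring
    rw [hrw]; linarith
  rw [Real.norm_of_nonneg hnn]
  exact bzd_B1 x a ha' hx

/-- Integrability of the integrand of D. -/
lemma bzd_F'_integrable (μ : Measure ℝ)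
    (hμfin : ∫⁻ x in Set.Ioi (0 : ℝ), ENNReal.ofReal (min x 1) ∂μ < ⊤)
    (x : ℝ) (hx : 0 ≤ x) :
    Integrable (fun a => 1 - Real.exp (-x * a)) (μ.restrict (Set.Ioi 0)) := by
  have hmeas : Measurable (fun a : ℝ => 1 - Real.exp (-x * a)) :=
    measurable_const.sub (Real.measurable_exp.comp (measurable_id.const_mul (-x)))
  refine bzd_integrable_of_le_min μ hμfin _ hmeas.aestronglyMeasurable (x + 1)
    (by positivity) ?_
  intro a ha
  have ha' : (0:ℝ) < a := ha
  have hnn : 0 ≤ 1 - Real.exp (-x * a) := by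
    have hrw : -x * a = -(x * a) := by ring
    rw [hrw]; exact bzd_one_sub_exp_nonneg _ (mul_nonneg hx ha'.le)
  rw [Real.norm_of_nonneg hnn]
  exact bzd_B2 x a ha' hx

/-- Derivative of Ψ. -/
lemma bzd_hasDerivAt_psi (a0 aInf : ℝ) (μ : Measure ℝ)
    (hμfin : ∫⁻ x in Set.Ioi (0 : ℝ), ENNReal.ofReal (min x 1) ∂μ < ⊤)
    (Ψ : ℝ → ℝ)
    (hΨ : ∀ q : ℝ, 0 ≤ q →
      Ψ q = (1 / 2) * a0 * q ^ 2 + aInf * q +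
        ∫ x in Set.Ioi (0 : ℝ), (Real.exp (-q * x) - 1 + q * x) / x ∂μ)
    (q : ℝ) (hq : 0 < q) :
    HasDerivAt Ψ (a0 * q + aInf + ∫ a in Set.Ioi (0:ℝ), (1 - Real.exp (-q * a)) ∂μ) q := by
  have key : HasDerivAt (fun x => ∫ a in Set.Ioi (0:ℝ), (Real.exp (-x * a) - 1 + x * a) / a ∂μ)
      (∫ a in Set.Ioi (0:ℝ), (1 - Real.exp (-q * a)) ∂μ) q := by
    have := hasDerivAt_integral_of_dominated_loc_of_deriv_le
      (F := fun (x : ℝ) (a : ℝ) => (Real.exp (-x * a) - 1 + x * a) / a)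
      (F' := fun (x : ℝ) (a : ℝ) => 1 - Real.exp (-x * a))
      (μ := μ.restrict (Set.Ioi 0)) (x₀ := q)
      (bound := fun a => (2 * q + 1) * min a 1)
      (Metric.ball_mem_nhds q (half_pos hq)) ?_ ?_ ?_ ?_ ?_ ?_
    · exact this.2
    · refine Eventually.of_forall fun x => Measurable.aestronglyMeasurable ?_
      exact (((Real.measurable_exp.comp (measurable_id.const_mul (-x))).sub
        measurable_const).add (measurable_id.const_mul x)).div measurable_id
    · exact bzd_F_integrable μ hμfin q hq.le
    · exact (measurable_const.sub
        (Real.measurable_exp.comp (measurable_id.const_mul (-q)))).aestronglyMeasurable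
    · filter_upwards [ae_restrict_mem measurableSet_Ioi] with a ha
      intro x hx
      have ha' : (0:ℝ) < a := ha
      rw [Metric.mem_ball, Real.dist_eq, abs_lt] at hx
      have hx0 : 0 ≤ x := by linarith
      have hnn : 0 ≤ 1 - Real.exp (-x * a) := by
        have hrw : -x * a = -(x * a) := by ring
        rw [hrw]; exact bzd_one_sub_exp_nonneg _ (mul_nonneg hx0 ha'.le)
      rw [Real.norm_of_nonneg hnn]
      calc 1 - Real.exp (-x * a) ≤ (x + 1) * min a 1 := bzd_B2 x a ha' hx0
      _ ≤ (2 * q + 1) * min a 1 := by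
          have : (0:ℝ) ≤ min a 1 := le_min ha'.le zero_le_one
          nlinarith
    · exact (bzd_min_integrable μ hμfin).const_mul _
    · filter_upwards [ae_restrict_mem measurableSet_Ioi] with a ha
      intro x _
      have ha' : (0:ℝ) < a := ha
      have h1 : HasDerivAt (fun y : ℝ => -y * a) (-1 * a) x := by
        simpa using ((hasDerivAt_id x).neg.mul_const a)
      have h2 : HasDerivAt (fun y : ℝ => Real.exp (-y * a))
          (Real.exp (-x * a) * (-1 * a)) x := h1.exp
      have h3 : HasDerivAt (fun y : ℝ => (Real.exp (-y * a) - 1 + y * a) / a)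
          ((Real.exp (-x * a) * (-1 * a) + 1 * a) / a) x :=
        ((h2.sub_const 1).add ((hasDerivAt_id x).mul_const a)).div_const a
      exact h3.congr_deriv (by field_simp; ring)
  have hpoly : HasDerivAt (fun x : ℝ => (1 / 2) * a0 * x ^ 2 + aInf * x)
      (a0 * q + aInf) q := by
    have h1 : HasDerivAt (fun x : ℝ => (1 / 2) * a0 * x ^ 2) ((1 / 2) * a0 * (2 * q ^ 1)) q :=
      (hasDerivAt_pow 2 q).const_mul _
    have h2 : HasDerivAt (fun x : ℝ => aInf * x) aInf q := by
      simpa using (hasDerivAt_id q).const_mul aInf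
    exact (h1.add h2).congr_deriv (by ring)
  have hsum := hpoly.add key
  have heq : Ψ =ᶠ[𝓝 q] fun x => ((1 / 2) * a0 * x ^ 2 + aInf * x) +
      ∫ a in Set.Ioi (0:ℝ), (Real.exp (-x * a) - 1 + x * a) / a ∂μ := by
    filter_upwards [eventually_gt_nhds hq] with x hx
    exact hΨ x hx.le
  have := hsum.congr_of_eventuallyEq heq
  convert this using 1

noncomputable def bzdD (a0 aInf : ℝ) (μ : Measure ℝ) (q : ℝ) : ℝ :=
  a0 * q + aInf + ∫ a in Set.Ioi (0:ℝ), (1 - Real.exp (-q * a)) ∂μ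

lemma bzd_hasDerivAt_psi' (a0 aInf : ℝ) (μ : Measure ℝ)
    (hμfin : ∫⁻ x in Set.Ioi (0 : ℝ), ENNReal.ofReal (min x 1) ∂μ < ⊤)
    (Ψ : ℝ → ℝ)
    (hΨ : ∀ q : ℝ, 0 ≤ q →
      Ψ q = (1 / 2) * a0 * q ^ 2 + aInf * q +
        ∫ x in Set.Ioi (0 : ℝ), (Real.exp (-q * x) - 1 + q * x) / x ∂μ)
    (q : ℝ) (hq : 0 < q) :
    HasDerivAt Ψ (bzdD a0 aInf μ q) q :=
  bzd_hasDerivAt_psi a0 aInf μ hμfin Ψ hΨ q hq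

lemma bzd_D_nonneg (a0 aInf : ℝ) (ha0 : 0 ≤ a0) (haInf : 0 ≤ aInf) (μ : Measure ℝ)
    (q : ℝ) (hq : 0 ≤ q) : 0 ≤ bzdD a0 aInf μ q := by
  unfold bzdD
  have hint : 0 ≤ ∫ a in Set.Ioi (0:ℝ), (1 - Real.exp (-q * a)) ∂μ := by
    apply setIntegral_nonneg measurableSet_Ioi
    intro a ha
    have hrw : -q * a = -(q * a) := by ring
    rw [hrw]
    exact bzd_one_sub_exp_nonneg _ (mul_nonneg hq (le_of_lt ha))
  have : 0 ≤ a0 * q := mul_nonneg ha0 hq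
  linarith

lemma bzd_D_mono (a0 aInf : ℝ) (ha0 : 0 ≤ a0) (μ : Measure ℝ)
    (hμfin : ∫⁻ x in Set.Ioi (0 : ℝ), ENNReal.ofReal (min x 1) ∂μ < ⊤)
    (p q : ℝ) (hp : 0 ≤ p) (hpq : p ≤ q) :
    bzdD a0 aInf μ p ≤ bzdD a0 aInf μ q := by
  unfold bzdD
  have h1 : a0 * p ≤ a0 * q := mul_le_mul_of_nonneg_left hpq ha0
  have h2 : ∫ a in Set.Ioi (0:ℝ), (1 - Real.exp (-p * a)) ∂μ ≤
      ∫ a in Set.Ioi (0:ℝ), (1 - Real.exp (-q * a)) ∂μ := by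
    apply setIntegral_mono_on (bzd_F'_integrable μ hμfin p hp)
      (bzd_F'_integrable μ hμfin q (hp.trans hpq)) measurableSet_Ioi
    intro a ha
    have ha' : (0:ℝ) < a := ha
    have : Real.exp (-q * a) ≤ Real.exp (-p * a) := by
      apply Real.exp_le_exp.2
      nlinarith
    linarith
  linarith

lemma bzd_psi_nonneg (a0 aInf : ℝ) (ha0 : 0 ≤ a0) (haInf : 0 ≤ aInf) (μ : Measure ℝ)
    (Ψ : ℝ → ℝ)
    (hΨ : ∀ q : ℝ, 0 ≤ q →
      Ψ q = (1 / 2) * a0 * q ^ 2 + aInf * q +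
        ∫ x in Set.Ioi (0 : ℝ), (Real.exp (-q * x) - 1 + q * x) / x ∂μ)
    (q : ℝ) (hq : 0 ≤ q) : 0 ≤ Ψ q := by
  rw [hΨ q hq]
  have hint : 0 ≤ ∫ x in Set.Ioi (0:ℝ), (Real.exp (-q * x) - 1 + q * x) / x ∂μ := by
    apply setIntegral_nonneg measurableSet_Ioi
    intro a ha
    have ha' : (0:ℝ) < a := ha
    apply div_nonneg _ ha'.le
    have hrw : -q * a = -(q * a) := by ring
    rw [hrw]
    have := bzd_exp_nonneg (q * a); linarith
  have h1 : 0 ≤ (1/2) * a0 * q ^ 2 := by positivity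
  have h2 : 0 ≤ aInf * q := mul_nonneg haInf hq
  linarith

lemma bzd_psi_small (a0 aInf : ℝ) (ha0 : 0 ≤ a0) (haInf : 0 ≤ aInf) (μ : Measure ℝ)
    (hμfin : ∫⁻ x in Set.Ioi (0 : ℝ), ENNReal.ofReal (min x 1) ∂μ < ⊤)
    (Ψ : ℝ → ℝ)
    (hΨ : ∀ q : ℝ, 0 ≤ q →
      Ψ q = (1 / 2) * a0 * q ^ 2 + aInf * q +
        ∫ x in Set.Ioi (0 : ℝ), (Real.exp (-q * x) - 1 + q * x) / x ∂μ) :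
    ∃ C : ℝ, 0 ≤ C ∧ ∀ ε : ℝ, 0 < ε → ε ≤ 1 → Ψ ε ≤ C * ε := by
  set K := ∫ a in Set.Ioi (0:ℝ), min a 1 ∂μ with hK
  have hK0 : 0 ≤ K := setIntegral_nonneg measurableSet_Ioi fun a ha =>
    le_min (le_of_lt ha) zero_le_one
  refine ⟨a0 / 2 + aInf + K, by positivity, ?_⟩
  intro ε hε hε1
  rw [hΨ ε hε.le]
  have hint : ∫ x in Set.Ioi (0:ℝ), (Real.exp (-ε * x) - 1 + ε * x) / x ∂μ ≤ ε * K := by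
    have step : ∫ x in Set.Ioi (0:ℝ), (Real.exp (-ε * x) - 1 + ε * x) / x ∂μ ≤
        ∫ x in Set.Ioi (0:ℝ), ε * min x 1 ∂μ := by
      apply setIntegral_mono_on (bzd_F_integrable μ hμfin ε hε.le)
        ((bzd_min_integrable μ hμfin).const_mul ε) measurableSet_Ioi
      intro a ha
      exact bzd_B3 ε a ha hε.le hε1
    rw [integral_const_mul] at step
    exact step
  have hε2 : ε ^ 2 ≤ ε := by nlinarith
  have h1 : (1/2) * a0 * ε ^ 2 ≤ a0 / 2 * ε := by nlinarith [mul_le_mul_of_nonneg_left hε2 ha0]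
  have h2 : ε * K = K * ε := by ring
  linarith [hint, h2 ▸ hint]


/-- Barrier / invariance lemma: if `f` starts between `lo` and `hi` and the vector field
pushes strictly inward at the boundary, then `f` stays between `lo` and `hi` on `[0, T]`. -/
lemma bzd_barrier (f lo hi F LO HI : ℝ → ℝ) (T : ℝ)
    (hf : ∀ s, 0 ≤ s → HasDerivAt f (F s) s)
    (hlo : ∀ s, HasDerivAt lo (LO s) s)
    (hhi : ∀ s, HasDerivAt hi (HI s) s)
    (h0lo : lo 0 ≤ f 0) (h0hi : f 0 ≤ hi 0)
    (hSlo : ∀ s, s ∈ Set.Icc 0 T → f s = lo s → f s ≤ hi s → LO s < F s)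
    (hShi : ∀ s, s ∈ Set.Icc 0 T → f s = hi s → lo s ≤ f s → F s < HI s) :
    ∀ s, s ∈ Set.Icc 0 T → lo s ≤ f s ∧ f s ≤ hi s := by
  by_contra hcon
  push_neg at hcon
  obtain ⟨s₀, hs₀T, hs₀⟩ := hcon
  set S : Set ℝ := {s : ℝ | s ∈ Set.Icc 0 T ∧ ¬(lo s ≤ f s ∧ f s ≤ hi s)} with hSdef
  have hne : S.Nonempty := ⟨s₀, hs₀T, fun h => absurd h.2 (not_le.2 (hs₀ h.1))⟩
  have hbdd : BddBelow S := ⟨0, fun s hs => hs.1.1⟩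
  set τ := sInf S with hτdef
  have hτ0 : 0 ≤ τ := le_csInf hne fun s hs => hs.1.1
  have hτT : τ ≤ T := le_trans (csInf_le hbdd ⟨hs₀T, fun h => absurd h.2 (not_le.2 (hs₀ h.1))⟩) hs₀T.2
  have hPbefore : ∀ s, 0 ≤ s → s < τ → lo s ≤ f s ∧ f s ≤ hi s := by
    intro s h0 hlt
    by_contra hnp
    exact absurd (csInf_le hbdd ⟨⟨h0, le_trans hlt.le hτT⟩, hnp⟩) (not_le.2 hlt)
  have hcf : ContinuousAt f τ := (hf τ hτ0).continuousAt
  have hclo : ContinuousAt lo τ := (hlo τ).continuousAt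
  have hchi : ContinuousAt hi τ := (hhi τ).continuousAt
  have hPτ : lo τ ≤ f τ ∧ f τ ≤ hi τ := by
    rcases eq_or_lt_of_le hτ0 with h | h
    · rw [← h]; exact ⟨h0lo, h0hi⟩
    · have hIoo : Set.Ioo 0 τ ∈ 𝓝[<] τ := Ioo_mem_nhdsLT_of_mem ⟨h, le_rfl⟩
      constructor
      · refine le_of_tendsto_of_tendsto
          (hclo.continuousWithinAt.tendsto : Tendsto lo (𝓝[<] τ) (𝓝 (lo τ)))
          (hcf.continuousWithinAt.tendsto : Tendsto f (𝓝[<] τ) (𝓝 (f τ))) ?_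
        filter_upwards [hIoo] with s hs
        exact (hPbefore s hs.1.le hs.2).1
      · refine le_of_tendsto_of_tendsto
          (hcf.continuousWithinAt.tendsto : Tendsto f (𝓝[<] τ) (𝓝 (f τ)))
          (hchi.continuousWithinAt.tendsto : Tendsto hi (𝓝[<] τ) (𝓝 (hi τ))) ?_
        filter_upwards [hIoo] with s hs
        exact (hPbefore s hs.1.le hs.2).2
  have hτnotS : τ ∉ S := fun hτS => hτS.2 hPτ
  -- pushing strictly inward to the right of τ
  have keylo : ∀ᶠ s in 𝓝[>] τ, lo s ≤ f s := by
    rcases eq_or_lt_of_le hPτ.1 with heq | hlt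
    · -- f τ = lo τ; use derivative comparison
      have hc : 0 < F τ - LO τ :=
        sub_pos.2 (hSlo τ ⟨hτ0, hτT⟩ heq.symm hPτ.2)
      have hd : HasDerivAt (fun s => f s - lo s) (F τ - LO τ) τ := (hf τ hτ0).sub (hlo τ)
      rw [hasDerivAt_iff_tendsto_slope] at hd
      have hslope : ∀ᶠ s in 𝓝[≠] τ, 0 < slope (fun s => f s - lo s) τ s :=
        hd (Ioi_mem_nhds hc)
      have hmono : 𝓝[>] τ ≤ 𝓝[≠] τ :=
        nhdsWithin_mono τ fun x hx => ne_of_gt hx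
      filter_upwards [hmono hslope, self_mem_nhdsWithin] with s hs hsτ
      have hs' : 0 < ((f s - lo s) - (f τ - lo τ)) / (s - τ) := by
        simpa [slope_def_field, div_sub_div_same] using hs
      have h0 : f τ - lo τ = 0 := by rw [← heq]; ring
      rw [h0, sub_zero] at hs'
      have := mul_pos hs' (sub_pos.2 (hsτ : τ < s))
      rw [div_mul_cancel₀] at this
      · linarith
      · exact ne_of_gt (sub_pos.2 hsτ)
    · -- strict inequality persists by continuity
      have hev : ∀ᶠ s in 𝓝 τ, 0 < f s - lo s :=
        (hcf.sub hclo).eventually (eventually_gt_nhds (sub_pos.2 hlt))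
      refine Filter.Eventually.filter_mono nhdsWithin_le_nhds ?_
      filter_upwards [hev] with s hs; linarith
  have keyhi : ∀ᶠ s in 𝓝[>] τ, f s ≤ hi s := by
    rcases eq_or_lt_of_le hPτ.2 with heq | hlt
    · have hc : 0 < HI τ - F τ :=
        sub_pos.2 (hShi τ ⟨hτ0, hτT⟩ heq hPτ.1)
      have hd : HasDerivAt (fun s => hi s - f s) (HI τ - F τ) τ := (hhi τ).sub (hf τ hτ0)
      rw [hasDerivAt_iff_tendsto_slope] at hd
      have hslope : ∀ᶠ s in 𝓝[≠] τ, 0 < slope (fun s => hi s - f s) τ s :=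
        hd (Ioi_mem_nhds hc)
      have hmono : 𝓝[>] τ ≤ 𝓝[≠] τ :=
        nhdsWithin_mono τ fun x hx => ne_of_gt hx
      filter_upwards [hmono hslope, self_mem_nhdsWithin] with s hs hsτ
      have hs' : 0 < ((hi s - f s) - (hi τ - f τ)) / (s - τ) := by
        simpa [slope_def_field, div_sub_div_same] using hs
      have h0 : hi τ - f τ = 0 := by rw [heq]; ring
      rw [h0, sub_zero] at hs'
      have := mul_pos hs' (sub_pos.2 (hsτ : τ < s))
      rw [div_mul_cancel₀] at this
      · linarith
      · exact ne_of_gt (sub_pos.2 hsτ)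
    · have hev : ∀ᶠ s in 𝓝 τ, 0 < hi s - f s :=
        (hchi.sub hcf).eventually (eventually_gt_nhds (sub_pos.2 hlt))
      refine Filter.Eventually.filter_mono nhdsWithin_le_nhds ?_
      filter_upwards [hev] with s hs; linarith
  obtain ⟨u, hu, hI⟩ := mem_nhdsGT_iff_exists_Ioo_subset.1 (keylo.and keyhi)
  obtain ⟨s, hsS, hsu⟩ := exists_lt_of_csInf_lt hne (hu : τ < u)
  have hτs : τ ≤ s := csInf_le hbdd hsS
  have hτs' : τ < s := lt_of_le_of_ne hτs fun h => hτnotS (h ▸ hsS)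
  exact hsS.2 (hI ⟨hτs', hsu⟩)


section Abstract

variable (Ψ D : ℝ → ℝ)

lemma bzd_MVT (HD : ∀ q : ℝ, 0 < q → HasDerivAt Ψ (D q) q)
    (a b : ℝ) (ha : 0 < a) (hab : a < b) :
    ∃ ξ ∈ Set.Ioo a b, D ξ = (Ψ b - Ψ a) / (b - a) := by
  apply exists_hasDerivAt_eq_slope Ψ D hab
  · intro x hx
    exact (HD x (lt_of_lt_of_le ha hx.1)).continuousAt.continuousWithinAt
  · intro x hx
    exact HD x (ha.trans hx.1)

lemma bzd_slope_le_D (HD : ∀ q : ℝ, 0 < q → HasDerivAt Ψ (D q) q)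
    (Hmono : ∀ p q : ℝ, 0 < p → p ≤ q → D p ≤ D q)
    (C : ℝ) (hC : 0 ≤ C) (Hsmall : ∀ ε : ℝ, 0 < ε → ε ≤ 1 → Ψ ε ≤ C * ε)
    (q : ℝ) (hq : 0 < q) : Ψ q ≤ q * D q := by
  apply le_of_forall_pos_le_add
  intro δ hδ
  set ε := min q (min 1 (δ / (C + |D q| + 1))) / 2 with hε
  have hden : 0 < C + |D q| + 1 := by positivity
  have hε0 : 0 < ε := by
    apply half_pos
    apply lt_min hq (lt_min one_pos (div_pos hδ hden))
  have hεq : ε < q := by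
    have : min q (min 1 (δ / (C + |D q| + 1))) ≤ q := min_le_left _ _
    linarith
  have hε1 : ε ≤ 1 := by
    have : min q (min 1 (δ / (C + |D q| + 1))) ≤ 1 := le_trans (min_le_right _ _) (min_le_left _ _)
    linarith
  have hεδ : ε * (C + |D q|) ≤ δ := by
    have h1 : ε ≤ δ / (C + |D q| + 1) := by
      have : min q (min 1 (δ / (C + |D q| + 1))) ≤ δ / (C + |D q| + 1) :=
        le_trans (min_le_right _ _) (min_le_right _ _)
      linarith
    have h2 : ε * (C + |D q| + 1) ≤ δ := by
      rw [← le_div_iff₀ hden]; exact h1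
    nlinarith [hε0.le]
  obtain ⟨ξ, hξ, hslope⟩ := bzd_MVT Ψ D HD ε q hε0 hεq
  have hDξ : D ξ ≤ D q := Hmono ξ q (hε0.trans hξ.1) hξ.2.le
  have hΨε : Ψ ε ≤ C * ε := Hsmall ε hε0 hε1
  have heq : Ψ q - Ψ ε = D ξ * (q - ε) := by
    rw [eq_div_iff (ne_of_gt (by linarith : (0:ℝ) < q - ε))] at hslope
    linarith [hslope]
  have habs1 : D q ≤ |D q| := le_abs_self _
  have habs2 : -|D q| ≤ D q := neg_abs_le _
  nlinarith [mul_le_mul_of_nonneg_right hDξ (by linarith : (0:ℝ) ≤ q - ε)]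

lemma bzd_tangent (HD : ∀ q : ℝ, 0 < q → HasDerivAt Ψ (D q) q)
    (Hmono : ∀ p q : ℝ, 0 < p → p ≤ q → D p ≤ D q)
    (a b : ℝ) (ha : 0 < a) (hab : a ≤ b) :
    Ψ a + D a * (b - a) ≤ Ψ b := by
  rcases eq_or_lt_of_le hab with h | h
  · rw [← h]; simp
  · obtain ⟨ξ, hξ, hslope⟩ := bzd_MVT Ψ D HD a b ha h
    have hDξ : D a ≤ D ξ := Hmono a ξ ha hξ.1.le
    have heq : Ψ b - Ψ a = D ξ * (b - a) := by
      rw [eq_div_iff (ne_of_gt (by linarith : (0:ℝ) < b - a))] at hslope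
      linarith [hslope]
    nlinarith [mul_le_mul_of_nonneg_right hDξ (by linarith : (0:ℝ) ≤ b - a)]

lemma bzd_lin_bound (HD : ∀ q : ℝ, 0 < q → HasDerivAt Ψ (D q) q)
    (Hmono : ∀ p q : ℝ, 0 < p → p ≤ q → D p ≤ D q)
    (C : ℝ) (hC : 0 ≤ C) (Hsmall : ∀ ε : ℝ, 0 < ε → ε ≤ 1 → Ψ ε ≤ C * ε)
    (L : ℝ) (hL : ∀ x : ℝ, 0 < x → D x ≤ L)
    (x : ℝ) (hx : 0 < x) : Ψ x ≤ L * x := by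
  have h := bzd_slope_le_D Ψ D HD Hmono C hC Hsmall x hx
  nlinarith [hL x hx]

lemma bzd_slope_mono (HD : ∀ q : ℝ, 0 < q → HasDerivAt Ψ (D q) q)
    (Hmono : ∀ p q : ℝ, 0 < p → p ≤ q → D p ≤ D q)
    (C : ℝ) (hC : 0 ≤ C) (Hsmall : ∀ ε : ℝ, 0 < ε → ε ≤ 1 → Ψ ε ≤ C * ε)
    (a b : ℝ) (ha : 0 < a) (hab : a ≤ b) : Ψ a / a ≤ Ψ b / b := by
  have hb : 0 < b := lt_of_lt_of_le ha hab
  rw [div_le_div_iff₀ ha hb]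
  have h1 : Ψ a ≤ a * D a := bzd_slope_le_D Ψ D HD Hmono C hC Hsmall a ha
  have h2 : Ψ a + D a * (b - a) ≤ Ψ b := bzd_tangent Ψ D HD Hmono a b ha hab
  nlinarith [mul_le_mul_of_nonneg_right h1 (by linarith : (0:ℝ) ≤ b - a),
    mul_le_mul_of_nonneg_left h2 ha.le]

lemma bzd_D_le_of_tendsto (L : ℝ)
    (Hmono : ∀ p q : ℝ, 0 < p → p ≤ q → D p ≤ D q)
    (htend : Tendsto D atTop (𝓝 L)) (p : ℝ) (hp : 0 < p) : D p ≤ L := by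
  apply ge_of_tendsto htend
  filter_upwards [eventually_ge_atTop p] with q hq
  exact Hmono p q hp hq

lemma bzd_quot_tendsto (a : ℝ) (ha : 0 < a) :
    Tendsto (fun b : ℝ => (Ψ a + D a * (b - a)) / b) atTop (𝓝 (D a)) := by
  have h : Tendsto (fun b : ℝ => Ψ a * b⁻¹ + (D a - D a * a * b⁻¹)) atTop
      (𝓝 (Ψ a * 0 + (D a - D a * a * 0))) := by
    exact ((tendsto_inv_atTop_zero.const_mul (Ψ a)).add
      (tendsto_const_nhds.sub (tendsto_inv_atTop_zero.const_mul (D a * a))))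
  simp only [mul_zero, sub_zero, zero_add] at h
  apply h.congr'
  filter_upwards [eventually_gt_atTop 0] with b hb
  field_simp

lemma bzd_g_tendsto (HD : ∀ q : ℝ, 0 < q → HasDerivAt Ψ (D q) q)
    (Hmono : ∀ p q : ℝ, 0 < p → p ≤ q → D p ≤ D q)
    (C : ℝ) (hC : 0 ≤ C) (Hsmall : ∀ ε : ℝ, 0 < ε → ε ≤ 1 → Ψ ε ≤ C * ε)
    (L : ℝ) (htend : Tendsto D atTop (𝓝 L)) :
    Tendsto (fun x => Ψ x / x) atTop (𝓝 L) := by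
  have hDle : ∀ p : ℝ, 0 < p → D p ≤ L := bzd_D_le_of_tendsto D L Hmono htend
  have hgle : ∀ x : ℝ, 0 < x → Ψ x / x ≤ L := by
    intro x hx
    rw [div_le_iff₀ hx]
    have := bzd_lin_bound Ψ D HD Hmono C hC Hsmall L hDle x hx
    linarith
  rw [tendsto_order]
  constructor
  · intro c hc
    obtain ⟨a, ⟨hca, ha1⟩⟩ := ((htend.eventually (eventually_gt_nhds hc)).and
      (eventually_ge_atTop 1)).exists
    have ha : (0:ℝ) < a := lt_of_lt_of_le one_pos ha1
    have hq := bzd_quot_tendsto Ψ D a ha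
    have hev : ∀ᶠ b in atTop, c < (Ψ a + D a * (b - a)) / b :=
      hq.eventually (eventually_gt_nhds hca)
    filter_upwards [hev, eventually_ge_atTop a, eventually_gt_atTop 0] with b hb hab hb0
    refine lt_of_lt_of_le hb ?_
    exact div_le_div_of_nonneg_right (bzd_tangent Ψ D HD Hmono a b ha hab) hb0.le
  · intro c hc
    filter_upwards [eventually_gt_atTop 0] with x hx
    exact lt_of_le_of_lt (hgle x hx) hc

lemma bzd_g_top (HD : ∀ q : ℝ, 0 < q → HasDerivAt Ψ (D q) q)
    (Hmono : ∀ p q : ℝ, 0 < p → p ≤ q → D p ≤ D q)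
    (HDnn : ∀ q : ℝ, 0 < q → 0 ≤ D q)
    (HΨnn : ∀ q : ℝ, 0 ≤ q → 0 ≤ Ψ q)
    (htop : Tendsto D atTop atTop) :
    Tendsto (fun x => Ψ x / x) atTop atTop := by
  rw [tendsto_atTop]
  intro M
  obtain ⟨a, ⟨hDa, ha1⟩⟩ := ((htop.eventually (eventually_ge_atTop (2 * max M 0))).and
    (eventually_ge_atTop 1)).exists
  have ha : (0:ℝ) < a := lt_of_lt_of_le one_pos ha1
  filter_upwards [eventually_ge_atTop (2 * a)] with b hb
  have hb0 : (0:ℝ) < b := lt_of_lt_of_le (by linarith) hb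
  have h1 : Ψ a + D a * (b - a) ≤ Ψ b := bzd_tangent Ψ D HD Hmono a b ha (by linarith)
  have h2 : D a * (b / 2) ≤ D a * (b - a) :=
    mul_le_mul_of_nonneg_left (by linarith) (HDnn a ha)
  have h3 : Ψ b ≥ D a * (b / 2) := by
    have := HΨnn a ha.le
    linarith
  have h4 : D a * (b / 2) / b = D a / 2 := by
    field_simp
  calc M ≤ max M 0 := le_max_left _ _
  _ ≤ D a / 2 := by linarith
  _ = D a * (b / 2) / b := h4.symm
  _ ≤ Ψ b / b := div_le_div_of_nonneg_right h3 hb0.le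

end Abstract

lemma bzd_exp_deriv (q c : ℝ) (s : ℝ) :
    HasDerivAt (fun u : ℝ => q * Real.exp (c * u)) (c * (q * Real.exp (c * s))) s := by
  have h1 : HasDerivAt (fun u : ℝ => c * u) c s := by
    simpa using (hasDerivAt_id s).const_mul c
  have h2 := (h1.exp).const_mul q
  exact h2.congr_deriv (by ring)

lemma bzd_lower (Ψ f : ℝ → ℝ) (q : ℝ) (hq : 0 < q)
    (hf0 : f 0 = q)
    (hode : ∀ t : ℝ, 0 ≤ t → HasDerivAt f (-Ψ (f t)) t)
    (HΨnn : ∀ x : ℝ, 0 ≤ x → 0 ≤ Ψ x)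
    (c : ℝ) (hc : 0 ≤ c)
    (hstrict : ∀ x : ℝ, 0 < x → x ≤ q → Ψ x < c * x)
    (t : ℝ) (ht : 0 ≤ t) :
    ∀ s, s ∈ Set.Icc 0 t → q * Real.exp (-c * s) ≤ f s ∧ f s ≤ q * Real.exp (1 * s) := by
  apply bzd_barrier f (fun u => q * Real.exp (-c * u)) (fun u => q * Real.exp (1 * u))
    (fun u => -Ψ (f u)) (fun u => -c * (q * Real.exp (-c * u)))
    (fun u => 1 * (q * Real.exp (1 * u))) t hode
    (fun s => bzd_exp_deriv q (-c) s) (fun s => bzd_exp_deriv q 1 s)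
  · simp [hf0]
  · simp [hf0]
  · intro s hs hfs _
    have hexp : (0:ℝ) < Real.exp (-c * s) := Real.exp_pos _
    have hlopos : 0 < q * Real.exp (-c * s) := by positivity
    have hlole : q * Real.exp (-c * s) ≤ q := by
      have : Real.exp (-c * s) ≤ 1 := by
        rw [← Real.exp_zero]
        apply Real.exp_le_exp.2
        nlinarith [hs.1]
      nlinarith
    have hst := hstrict _ hlopos hlole
    rw [hfs]
    nlinarith
  · intro s hs hfs _
    have hhipos : 0 < q * Real.exp (1 * s) := by positivity
    have hnn : 0 ≤ Ψ (f s) := by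
      rw [hfs]; exact HΨnn _ hhipos.le
    nlinarith

lemma bzd_pos (Ψ f : ℝ → ℝ) (q : ℝ) (hq : 0 < q)
    (hf0 : f 0 = q)
    (hode : ∀ t : ℝ, 0 ≤ t → HasDerivAt f (-Ψ (f t)) t)
    (HΨnn : ∀ x : ℝ, 0 ≤ x → 0 ≤ Ψ x)
    (slope_mono : ∀ a b : ℝ, 0 < a → a ≤ b → Ψ a / a ≤ Ψ b / b)
    (t : ℝ) (ht : 0 ≤ t) : 0 < f t := by
  set c := Ψ q / q + 1 with hc
  have hΨq : 0 ≤ Ψ q := HΨnn q hq.le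
  have hc0 : 0 ≤ c := by positivity
  have hstrict : ∀ x : ℝ, 0 < x → x ≤ q → Ψ x < c * x := by
    intro x hx hxq
    have h1 : Ψ x / x ≤ Ψ q / q := slope_mono x q hx hxq
    have h2 : Ψ x / x < c := by rw [hc]; nlinarith [div_nonneg hΨq hq.le]
    calc Ψ x = Ψ x / x * x := by field_simp
    _ < c * x := by exact mul_lt_mul_of_pos_right h2 hx
  have := (bzd_lower Ψ f q hq hf0 hode HΨnn c hc0 hstrict t ht t ⟨ht, le_rfl⟩).1
  have : 0 < q * Real.exp (-c * t) := by positivity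
  linarith [(bzd_lower Ψ f q hq hf0 hode HΨnn c hc0 hstrict t ht t ⟨ht, le_rfl⟩).1]

lemma bzd_antitone (Ψ f : ℝ → ℝ)
    (hode : ∀ t : ℝ, 0 ≤ t → HasDerivAt f (-Ψ (f t)) t)
    (hpos : ∀ s : ℝ, 0 ≤ s → 0 < f s)
    (HΨnn : ∀ x : ℝ, 0 ≤ x → 0 ≤ Ψ x)
    (s t : ℝ) (hs : 0 ≤ s) (hst : s ≤ t) : f t ≤ f s := by
  have hanti : AntitoneOn f (Set.Icc 0 t) := by
    apply antitoneOn_of_deriv_nonpos (convex_Icc 0 t)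
    · exact fun u hu => (hode u hu.1).continuousAt.continuousWithinAt
    · rw [interior_Icc]
      exact fun u hu => (hode u hu.1.le).differentiableAt.differentiableWithinAt
    · rw [interior_Icc]
      intro u hu
      rw [(hode u hu.1.le).deriv]
      have := HΨnn (f u) (hpos u hu.1.le).le
      linarith
  exact hanti ⟨hs, hst⟩ ⟨hs.trans hst, le_rfl⟩ hst

lemma bzd_upper (Ψ f : ℝ → ℝ) (q : ℝ) (hq : 0 < q)
    (hf0 : f 0 = q)
    (hode : ∀ t : ℝ, 0 ≤ t → HasDerivAt f (-Ψ (f t)) t)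
    (t : ℝ) (ht : 0 ≤ t) (r : ℝ) (hr : 0 < r)
    (hrle : ∀ s, s ∈ Set.Icc 0 t → r ≤ f s)
    (c : ℝ) (hstrict : ∀ x : ℝ, r ≤ x → c * x < Ψ x) :
    f t ≤ q * Real.exp (-c * t) := by
  have := bzd_barrier f (fun _ => (0:ℝ)) (fun u => q * Real.exp (-c * u))
    (fun u => -Ψ (f u)) (fun _ => (0:ℝ)) (fun u => -c * (q * Real.exp (-c * u))) t hode
    (fun s => hasDerivAt_const s 0) (fun s => bzd_exp_deriv q (-c) s)
    (by simp [hf0]; exact hq.le) (by simp [hf0])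
    ?_ ?_ t ⟨ht, le_rfl⟩
  · exact this.2
  · intro s hs hfs _
    have h1 := hrle s hs
    rw [hfs] at h1
    linarith
  · intro s hs hfs _
    have hrs : r ≤ f s := hrle s hs
    have hst := hstrict _ hrs
    rw [← hfs]
    linarith

lemma bzd_int_nonneg (μ : Measure ℝ) (q : ℝ) (hq : 0 ≤ q) :
    0 ≤ ∫ a in Set.Ioi (0:ℝ), (1 - Real.exp (-q * a)) ∂μ := by
  apply setIntegral_nonneg measurableSet_Ioi
  intro a ha
  have hrw : -q * a = -(q * a) := by ring
  rw [hrw]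
  exact bzd_one_sub_exp_nonneg _ (mul_nonneg hq (le_of_lt ha))

lemma bzd_D_top_of_a0 (a0 aInf : ℝ) (ha0pos : 0 < a0) (haInf : 0 ≤ aInf) (μ : Measure ℝ) :
    Tendsto (bzdD a0 aInf μ) atTop atTop := by
  apply tendsto_atTop_mono' atTop (f₁ := fun q => a0 * q + aInf)
  · filter_upwards [eventually_ge_atTop (0:ℝ)] with q hq
    unfold bzdD
    linarith [bzd_int_nonneg μ q hq]
  · exact tendsto_atTop_add_const_right atTop aInf (tendsto_id.const_mul_atTop ha0pos)

lemma bzd_measure_Ioi_lt_top (μ : Measure ℝ)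
    (hμfin : ∫⁻ x in Set.Ioi (0 : ℝ), ENNReal.ofReal (min x 1) ∂μ < ⊤)
    (ε : ℝ) (hε : 0 < ε) : μ (Set.Ioi ε) < ⊤ := by
  by_contra htop
  rw [not_lt, top_le_iff] at htop
  have h1 : ∫⁻ x in Set.Ioi ε, ENNReal.ofReal (min ε 1) ∂μ ≤
      ∫⁻ x in Set.Ioi ε, ENNReal.ofReal (min x 1) ∂μ := by
    apply setLIntegral_mono' measurableSet_Ioi
    intro x hx
    exact ENNReal.ofReal_le_ofReal (min_le_min (le_of_lt hx) le_rfl)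
  rw [setLIntegral_const] at h1
  have h2 : ∫⁻ x in Set.Ioi ε, ENNReal.ofReal (min x 1) ∂μ ≤
      ∫⁻ x in Set.Ioi (0:ℝ), ENNReal.ofReal (min x 1) ∂μ :=
    lintegral_mono_set (fun x hx => lt_trans hε hx)
  rw [htop, ENNReal.mul_top] at h1
  · have : (⊤:ℝ≥0∞) ≤ ∫⁻ x in Set.Ioi (0:ℝ), ENNReal.ofReal (min x 1) ∂μ := le_trans h1 h2
    rw [top_le_iff] at this
    exact hμfin.ne this
  · simp only [ne_eq, ENNReal.ofReal_eq_zero, not_le]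
    exact lt_min hε one_pos

lemma bzd_iUnion_Ioi : (⋃ n : ℕ, Set.Ioi ((1:ℝ)/(n+1))) = Set.Ioi (0:ℝ) := by
  ext x
  simp only [Set.mem_iUnion, Set.mem_Ioi]
  constructor
  · rintro ⟨n, hn⟩
    exact lt_trans (by positivity) hn
  · intro hx
    obtain ⟨n, hn⟩ := exists_nat_one_div_lt hx
    exact ⟨n, hn⟩

lemma bzd_D_top_of_inf (a0 aInf : ℝ) (ha0 : 0 ≤ a0) (haInf : 0 ≤ aInf) (μ : Measure ℝ)
    (hμfin : ∫⁻ x in Set.Ioi (0 : ℝ), ENNReal.ofReal (min x 1) ∂μ < ⊤)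
    (hμ : μ (Set.Ioi (0:ℝ)) = ⊤) :
    Tendsto (bzdD a0 aInf μ) atTop atTop := by
  rw [tendsto_atTop]
  intro M
  set M' := max M 1 with hM'
  have hM'pos : 0 < M' := lt_of_lt_of_le one_pos (le_max_right _ _)
  have hmono : Monotone (fun n : ℕ => Set.Ioi ((1:ℝ)/(n+1))) := by
    intro n m hnm
    apply Set.Ioi_subset_Ioi
    apply div_le_div_of_nonneg_left one_pos.le (by positivity)
    exact_mod_cast by exact_mod_cast add_le_add_left (Nat.cast_le.2 hnm) 1
  have hsup : (⨆ n : ℕ, μ (Set.Ioi ((1:ℝ)/(n+1)))) = ⊤ := by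
    rw [← hmono.measure_iUnion, bzd_iUnion_Ioi, hμ]
  have hex : ∃ n : ℕ, ENNReal.ofReal (2 * M') < μ (Set.Ioi ((1:ℝ)/(n+1))) := by
    rw [← lt_iSup_iff, hsup]
    exact ENNReal.ofReal_lt_top
  obtain ⟨n, hn⟩ := hex
  set δ := (1:ℝ)/(n+1) with hδ
  have hδpos : 0 < δ := by positivity
  have hfin : μ (Set.Ioi δ) < ⊤ := bzd_measure_Ioi_lt_top μ hμfin δ hδpos
  have htoReal : 2 * M' ≤ (μ (Set.Ioi δ)).toReal := by
    rw [← ENNReal.ofReal_le_iff_le_toReal hfin.ne]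
    exact hn.le
  filter_upwards [eventually_ge_atTop (max 1 (Real.log 2 / δ))] with q hq
  have hq1 : (1:ℝ) ≤ q := le_trans (le_max_left _ _) hq
  have hq0 : 0 < q := lt_of_lt_of_le one_pos hq1
  have hqδ : Real.log 2 ≤ q * δ := by
    have := le_trans (le_max_right _ _) hq
    rw [div_le_iff₀ hδpos] at this
    linarith
  have h2exp : (2:ℝ) ≤ Real.exp (q * δ) := by
    rw [← Real.exp_log (by norm_num : (0:ℝ) < 2)]
    exact Real.exp_le_exp.2 hqδ
  have hexp : Real.exp (-(q * δ)) ≤ 1/2 := by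
    rw [Real.exp_neg]
    have := inv_anti₀ (by norm_num : (0:ℝ) < 2) h2exp
    norm_num at this ⊢
    linarith
  have hIsub : ∫ a in Set.Ioi δ, (1 - Real.exp (-q * a)) ∂μ ≤
      ∫ a in Set.Ioi (0:ℝ), (1 - Real.exp (-q * a)) ∂μ := by
    apply setIntegral_mono_set (bzd_F'_integrable μ hμfin q hq0.le)
    · filter_upwards [ae_restrict_mem measurableSet_Ioi] with a ha
      have hrw : -q * a = -(q * a) := by ring
      rw [hrw]
      exact bzd_one_sub_exp_nonneg _ (mul_nonneg hq0.le (le_of_lt ha))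
    · exact HasSubset.Subset.eventuallyLE (Set.Ioi_subset_Ioi hδpos.le)
  have hconst : ∫ a in Set.Ioi δ, (1 - Real.exp (-q * δ)) ∂μ ≤
      ∫ a in Set.Ioi δ, (1 - Real.exp (-q * a)) ∂μ := by
    apply setIntegral_mono_on (integrableOn_const hfin.ne)
      (IntegrableOn.mono_set (bzd_F'_integrable μ hμfin q hq0.le) (Set.Ioi_subset_Ioi hδpos.le))
      measurableSet_Ioi
    intro a ha
    have : Real.exp (-q * a) ≤ Real.exp (-q * δ) := by
      apply Real.exp_le_exp.2
      have : δ ≤ a := le_of_lt ha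
      nlinarith
    linarith
  rw [setIntegral_const, smul_eq_mul, measureReal_def] at hconst
  have h5 : M' ≤ (μ (Set.Ioi δ)).toReal * (1 - Real.exp (-q * δ)) := by
    have hge : 1/2 ≤ 1 - Real.exp (-q * δ) := by
      have hrw : -q * δ = -(q * δ) := by ring
      rw [hrw]; linarith
    nlinarith [ENNReal.toReal_nonneg (a := μ (Set.Ioi δ))]
  unfold bzdD
  have ha0q : 0 ≤ a0 * q := mul_nonneg ha0 hq0.le
  have : M ≤ M' := le_max_left _ _
  linarith

lemma bzd_D_bounded (a0 aInf : ℝ) (haInf : 0 ≤ aInf) (μ : Measure ℝ)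
    (hμfin : ∫⁻ x in Set.Ioi (0 : ℝ), ENNReal.ofReal (min x 1) ∂μ < ⊤)
    (ha0 : a0 = 0) (hfin : μ (Set.Ioi (0:ℝ)) ≠ ⊤) (q : ℝ) (hq : 0 < q) :
    bzdD a0 aInf μ q ≤ aInf + (μ (Set.Ioi (0:ℝ))).toReal := by
  unfold bzdD
  rw [ha0, zero_mul, zero_add]
  have hI : ∫ a in Set.Ioi (0:ℝ), (1 - Real.exp (-q * a)) ∂μ ≤
      ∫ a in Set.Ioi (0:ℝ), (1:ℝ) ∂μ := by
    apply setIntegral_mono_on (bzd_F'_integrable μ hμfin q hq.le)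
      (integrableOn_const hfin) measurableSet_Ioi
    intro a _
    have := Real.exp_pos (-q * a)
    linarith
  rw [setIntegral_const, smul_eq_mul, mul_one, measureReal_def] at hI
  linarith
theorem beta_zero_dichotomy
    (a0 aInf : ℝ) (ha0 : 0 ≤ a0) (haInf : 0 ≤ aInf)
    (μ : Measure ℝ)
    (hμfin : ∫⁻ x in Set.Ioi (0 : ℝ), ENNReal.ofReal (min x 1) ∂μ < ⊤)
    (Ψ : ℝ → ℝ)
    (hΨ : ∀ q : ℝ, 0 ≤ q →
      Ψ q = (1 / 2) * a0 * q ^ 2 + aInf * q +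
        ∫ x in Set.Ioi (0 : ℝ), (Real.exp (-q * x) - 1 + q * x) / x ∂μ)
    (φ : ℝ → ℝ → ℝ)
    (hφ0 : ∀ q : ℝ, 0 ≤ q → φ q 0 = q)
    (hφode : ∀ q : ℝ, 0 ≤ q → ∀ t : ℝ, 0 ≤ t →
      HasDerivAt (fun s => φ q s) (-Ψ (φ q t)) t)
    (β₀ : ℝ → ℝ)
    (hβ₀ : ∀ t : ℝ, 0 ≤ t → Tendsto (fun q => φ q t / q) atTop (nhds (β₀ t))) :
    ((∀ t : ℝ, 0 < t → β₀ t = 0) ↔ Tendsto (deriv Ψ) atTop atTop)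
    ∧
    (Tendsto (deriv Ψ) atTop atTop ↔ (0 < a0 ∨ μ (Set.Ioi (0 : ℝ)) = ⊤))
    ∧
    (∀ L : ℝ, Tendsto (deriv Ψ) atTop (nhds L) →
      ∀ t : ℝ, 0 ≤ t → β₀ t = Real.exp (-L * t)) := by
  set D := bzdD a0 aInf μ with hDdef
  have HD : ∀ q : ℝ, 0 < q → HasDerivAt Ψ (D q) q :=
    fun q hq => bzd_hasDerivAt_psi' a0 aInf μ hμfin Ψ hΨ q hq
  have hDeq : deriv Ψ =ᶠ[atTop] D := by
    filter_upwards [eventually_gt_atTop 0] with q hq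
    exact (HD q hq).deriv
  have Hmono : ∀ p q : ℝ, 0 < p → p ≤ q → D p ≤ D q :=
    fun p q hp hpq => bzd_D_mono a0 aInf ha0 μ hμfin p q hp.le hpq
  have HDnn : ∀ q : ℝ, 0 < q → 0 ≤ D q :=
    fun q hq => bzd_D_nonneg a0 aInf ha0 haInf μ q hq.le
  have HΨnn : ∀ q : ℝ, 0 ≤ q → 0 ≤ Ψ q :=
    fun q hq => bzd_psi_nonneg a0 aInf ha0 haInf μ Ψ hΨ q hq
  obtain ⟨C, hC, Hsmall⟩ := bzd_psi_small a0 aInf ha0 haInf μ hμfin Ψ hΨ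
  have slope_mono : ∀ a b : ℝ, 0 < a → a ≤ b → Ψ a / a ≤ Ψ b / b :=
    fun a b ha hab => bzd_slope_mono Ψ D HD Hmono C hC Hsmall a b ha hab
  have hpos : ∀ q : ℝ, 0 < q → ∀ t : ℝ, 0 ≤ t → 0 < φ q t :=
    fun q hq t ht => bzd_pos Ψ (φ q) q hq (hφ0 q hq.le) (hφode q hq.le) HΨnn slope_mono t ht
  have hanti : ∀ q : ℝ, 0 < q → ∀ s t : ℝ, 0 ≤ s → s ≤ t → φ q t ≤ φ q s :=
    fun q hq s t hs hst => bzd_antitone Ψ (φ q) (hφode q hq.le) (hpos q hq) HΨnn s t hs hst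
  -- the general upper bound
  have hupgen : ∀ q : ℝ, 0 < q → ∀ t : ℝ, 0 ≤ t → ∀ r : ℝ, 0 < r →
      (∀ s, s ∈ Set.Icc 0 t → r ≤ φ q s) → φ q t ≤ q * Real.exp (-(Ψ r / r) * t) := by
    intro q hq t ht r hr hrle
    have hcup : ∀ c : ℝ, c < Ψ r / r → φ q t ≤ q * Real.exp (-c * t) := by
      intro c hcG
      apply bzd_upper Ψ (φ q) q hq (hφ0 q hq.le) (hφode q hq.le) t ht r hr hrle c
      intro x hrx
      have hx0 : 0 < x := lt_of_lt_of_le hr hrx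
      have h1 : c < Ψ x / x := lt_of_lt_of_le hcG (slope_mono r x hr hrx)
      rw [lt_div_iff₀ hx0] at h1
      linarith
    have htendc : Tendsto (fun c : ℝ => q * Real.exp (-c * t)) (𝓝[<] (Ψ r / r))
        (𝓝 (q * Real.exp (-(Ψ r / r) * t))) := by
      apply Tendsto.mono_left ?_ nhdsWithin_le_nhds
      exact (continuous_const.mul (Real.continuous_exp.comp
        (continuous_id.neg.mul continuous_const))).tendsto (Ψ r / r)
    exact ge_of_tendsto htendc (eventually_nhdsWithin_of_forall fun c hc => hcup c hc)
  -- the general lower bound, given a linear upper bound on Ψ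
  have hlowgen : ∀ L : ℝ, 0 ≤ L → (∀ x : ℝ, 0 < x → Ψ x ≤ L * x) →
      ∀ q : ℝ, 0 < q → ∀ u : ℝ, 0 ≤ u → q * Real.exp (-L * u) ≤ φ q u := by
    intro L hL0 hlin q hq u hu
    have hc : ∀ c : ℝ, L < c → q * Real.exp (-c * u) ≤ φ q u := by
      intro c hcL
      have hcnn : 0 ≤ c := le_trans hL0 hcL.le
      have hstrict : ∀ x : ℝ, 0 < x → x ≤ q → Ψ x < c * x := by
        intro x hx _
        exact lt_of_le_of_lt (hlin x hx) (by nlinarith)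
      exact (bzd_lower Ψ (φ q) q hq (hφ0 q hq.le) (hφode q hq.le) HΨnn c hcnn hstrict
        u hu u ⟨hu, le_rfl⟩).1
    have htendc : Tendsto (fun c : ℝ => q * Real.exp (-c * u)) (𝓝[>] L)
        (𝓝 (q * Real.exp (-L * u))) := by
      apply Tendsto.mono_left ?_ nhdsWithin_le_nhds
      exact (continuous_const.mul (Real.continuous_exp.comp
        (continuous_id.neg.mul continuous_const))).tendsto L
    exact le_of_tendsto htendc (eventually_nhdsWithin_of_forall fun c hcmem => hc c hcmem)
  -- key part (3)
  have key3 : ∀ L : ℝ, Tendsto D atTop (𝓝 L) → ∀ t : ℝ, 0 ≤ t →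
      β₀ t = Real.exp (-L * t) := by
    intro L htend t ht
    have hL0 : 0 ≤ L := by
      apply ge_of_tendsto htend
      filter_upwards [eventually_gt_atTop 0] with q hq
      exact HDnn q hq
    have hDle : ∀ p : ℝ, 0 < p → D p ≤ L := bzd_D_le_of_tendsto D L Hmono htend
    have hlin : ∀ x : ℝ, 0 < x → Ψ x ≤ L * x :=
      bzd_lin_bound Ψ D HD Hmono C hC Hsmall L hDle
    have hlow := hlowgen L hL0 hlin
    have hβt := hβ₀ t ht
    have hlowlim : Real.exp (-L * t) ≤ β₀ t := by
      apply ge_of_tendsto hβt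
      filter_upwards [eventually_gt_atTop 0] with q hq
      rw [le_div_iff₀ hq]
      linarith [hlow q hq t ht]
    have hupqs : ∀ q : ℝ, 0 < q → φ q t / q ≤
        Real.exp (-(Ψ (q * Real.exp (-L * t)) / (q * Real.exp (-L * t))) * t) := by
      intro q hq
      set m := q * Real.exp (-L * t) with hm
      have hm0 : 0 < m := by positivity
      have hrle : ∀ s, s ∈ Set.Icc 0 t → m ≤ φ q s := by
        intro s hs
        have h1 : q * Real.exp (-L * s) ≤ φ q s := hlow q hq s hs.1
        have h2 : Real.exp (-L * t) ≤ Real.exp (-L * s) := by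
          apply Real.exp_le_exp.2
          nlinarith [hs.2]
        rw [hm]
        nlinarith
      have := hupgen q hq t ht m hm0 hrle
      rw [div_le_iff₀ hq]
      calc φ q t ≤ q * Real.exp (-(Ψ m / m) * t) := this
      _ = Real.exp (-(Ψ m / m) * t) * q := mul_comm _ _
    have hXtend : Tendsto (fun q : ℝ =>
        Real.exp (-(Ψ (q * Real.exp (-L * t)) / (q * Real.exp (-L * t))) * t)) atTop
        (𝓝 (Real.exp (-L * t))) := by
      have hmt : Tendsto (fun q : ℝ => q * Real.exp (-L * t)) atTop atTop :=
        Tendsto.atTop_mul_const (Real.exp_pos _) tendsto_id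
      have hg : Tendsto (fun q : ℝ =>
          Ψ (q * Real.exp (-L * t)) / (q * Real.exp (-L * t))) atTop (𝓝 L) :=
        (bzd_g_tendsto Ψ D HD Hmono C hC Hsmall L htend).comp hmt
      have h4 : Tendsto (fun q : ℝ =>
          -(Ψ (q * Real.exp (-L * t)) / (q * Real.exp (-L * t))) * t) atTop (𝓝 (-L * t)) :=
        hg.neg.mul_const t
      exact (Real.continuous_exp.tendsto _).comp h4
    have hhigh : β₀ t ≤ Real.exp (-L * t) := by
      apply le_of_tendsto_of_tendsto hβt hXtend
      filter_upwards [eventually_gt_atTop 0] with q hq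
      exact hupqs q hq
    linarith
  -- key part (1), sufficiency
  have key_top : Tendsto D atTop atTop → ∀ t : ℝ, 0 < t → β₀ t = 0 := by
    intro htop t ht
    have hg := bzd_g_top Ψ D HD Hmono HDnn HΨnn htop
    by_contra hne
    have hβt := hβ₀ t ht.le
    have hβnn : 0 ≤ β₀ t := by
      apply ge_of_tendsto hβt
      filter_upwards [eventually_gt_atTop 0] with q hq
      exact div_nonneg (hpos q hq t ht.le).le hq.le
    have hβpos : 0 < β₀ t := lt_of_le_of_ne hβnn (Ne.symm hne)
    have hφtop : Tendsto (fun q => φ q t) atTop atTop := by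
      have h1 : Tendsto (fun q => (φ q t / q) * q) atTop atTop :=
        Tendsto.pos_mul_atTop hβpos hβt tendsto_id
      apply h1.congr'
      filter_upwards [eventually_gt_atTop 0] with q hq
      field_simp
    have hcomp : Tendsto (fun q => Real.exp (-(Ψ (φ q t) / (φ q t)) * t)) atTop (𝓝 0) := by
      have h2 : Tendsto (fun q => Ψ (φ q t) / (φ q t)) atTop atTop := hg.comp hφtop
      have h3 : Tendsto (fun q => -(Ψ (φ q t) / (φ q t)) * t) atTop atBot := by
        have h4 : Tendsto (fun q => (Ψ (φ q t) / (φ q t)) * t) atTop atTop :=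
          Tendsto.atTop_mul_const ht h2
        have h5 := tendsto_neg_atTop_atBot.comp h4
        apply h5.congr
        intro q
        simp [neg_mul]
      exact Real.tendsto_exp_atBot.comp h3
    have hle : ∀ᶠ q in atTop, φ q t / q ≤ Real.exp (-(Ψ (φ q t) / (φ q t)) * t) := by
      filter_upwards [eventually_gt_atTop 0] with q hq
      have hr : 0 < φ q t := hpos q hq t ht.le
      have hrle : ∀ s, s ∈ Set.Icc 0 t → φ q t ≤ φ q s :=
        fun s hs => hanti q hq s t hs.1 hs.2
      have := hupgen q hq t ht.le (φ q t) hr hrle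
      rw [div_le_iff₀ hq]
      calc φ q t ≤ q * Real.exp (-(Ψ (φ q t) / (φ q t)) * t) := this
      _ = Real.exp (-(Ψ (φ q t) / (φ q t)) * t) * q := mul_comm _ _
    have hfin : β₀ t ≤ 0 := le_of_tendsto_of_tendsto hβt hcomp hle
    linarith
  refine ⟨⟨?_, ?_⟩, ⟨?_, ?_⟩, ?_⟩
  · -- (∀ t>0, β₀ t = 0) → Tendsto (deriv Ψ) atTop atTop
    intro hβ
    set ψm : ℝ → ℝ := fun q => D (max q 1) with hψm
    have hmonoψ : Monotone ψm := by
      intro p q hpq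
      exact Hmono _ _ (lt_of_lt_of_le one_pos (le_max_right p 1)) (max_le_max hpq le_rfl)
    have hψeq : ψm =ᶠ[atTop] D := by
      filter_upwards [eventually_ge_atTop 1] with q hq
      rw [hψm]
      simp only [max_eq_left hq]
    by_cases hbdd : BddAbove (Set.range ψm)
    · exfalso
      have hψt : Tendsto ψm atTop (𝓝 (⨆ q, ψm q)) := tendsto_atTop_ciSup hmonoψ hbdd
      have hDt : Tendsto D atTop (𝓝 (⨆ q, ψm q)) := (tendsto_congr' hψeq).1 hψt
      have h1 := key3 _ hDt 1 zero_le_one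
      rw [hβ 1 one_pos] at h1
      exact absurd h1.symm (Real.exp_ne_zero _)
    · have hψtop : Tendsto ψm atTop atTop := tendsto_atTop_atTop_of_monotone' hmonoψ hbdd
      have hDt : Tendsto D atTop atTop := (tendsto_congr' hψeq).1 hψtop
      exact (tendsto_congr' hDeq).2 hDt
  · -- Tendsto (deriv Ψ) atTop atTop → ∀ t>0, β₀ t = 0
    intro htop t ht
    exact key_top ((tendsto_congr' hDeq).1 htop) t ht
  · -- Tendsto (deriv Ψ) atTop atTop → 0 < a0 ∨ μ (Ioi 0) = ⊤
    intro htop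
    by_contra hcon
    push_neg at hcon
    obtain ⟨ha0n, hμn⟩ := hcon
    have ha00 : a0 = 0 := le_antisymm ha0n ha0
    have htop' : Tendsto D atTop atTop := (tendsto_congr' hDeq).1 htop
    obtain ⟨q, hq1, hq2⟩ := ((htop'.eventually
      (eventually_ge_atTop (aInf + (μ (Set.Ioi (0:ℝ))).toReal + 1))).and
      (eventually_ge_atTop 1)).exists
    have := bzd_D_bounded a0 aInf haInf μ hμfin ha00 hμn q (lt_of_lt_of_le one_pos hq2)
    rw [← hDdef] at this
    linarith
  · -- 0 < a0 ∨ μ (Ioi 0) = ⊤ → Tendsto (deriv Ψ) atTop atTop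
    intro h
    rcases h with h | h
    · exact (tendsto_congr' hDeq).2 (bzd_D_top_of_a0 a0 aInf h haInf μ)
    · exact (tendsto_congr' hDeq).2 (bzd_D_top_of_inf a0 aInf ha0 haInf μ hμfin h)
  · -- part (3)
    intro L htend t ht
    exact key3 L ((tendsto_congr' hDeq).1 htend) t ht
end

section
/- Let f_k be Bernstein functions (nonnegative, with completely monotone derivative) converging pointwise on (0,∞) to f. Then the primitives ψ_k(q) = ∫_0^q f_k(r)dr converge pointwise to ψ(q) = ∫_0^q f(r)dr. Conversely, if ψ_k(q) converges for every q > 0 to some ψ(q), then using ψ_k(2q) ≥ q f_k(q) and concavity of f_k, the sequence f_k converges pointwise on (0,∞) to ψ', and ψ is C¹. -/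
open Filter

open MeasureTheory Set intervalIntegral in
private lemma aux_integrable {g : ℝ → ℝ} (hc : ContinuousOn g (Set.Ioi 0))
    (hmono : MonotoneOn g (Set.Ioi 0)) (hnn : ∀ r : ℝ, 0 < r → 0 ≤ g r)
    {q : ℝ} (hq : 0 < q) : IntervalIntegrable g volume 0 q := by
  rw [intervalIntegrable_iff_integrableOn_Ioc_of_le hq.le]
  refine ⟨(hc.mono Ioc_subset_Ioi_self).aestronglyMeasurable measurableSet_Ioc, ?_⟩
  apply HasFiniteIntegral.restrict_of_bounded (C := g q)
  · simp [Real.volume_Ioc]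
  · filter_upwards [ae_restrict_mem measurableSet_Ioc] with r hr
    rw [Real.norm_eq_abs, abs_of_nonneg (hnn r hr.1)]
    exact hmono hr.1 hq hr.2

private lemma aux_growth {g : ℝ → ℝ} (hconc : ConcaveOn ℝ (Set.Ioi 0) g)
    (hnn : ∀ r : ℝ, 0 < r → 0 ≤ g r) {x y : ℝ} (hx : 0 < x) (hxy : x ≤ y) :
    x * g y ≤ (x + 2 * (y - x)) * g x := by
  rcases hxy.eq_or_lt with rfl | h
  · simp
  · have hx2 : (0:ℝ) < x / 2 := by linarith
    have hmem1 : x - x / 2 ∈ Set.Ioi (0:ℝ) := by simp; linarith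
    have hmem2 : y ∈ Set.Ioi (0:ℝ) := by simp; linarith
    have hslope := hconc.slope_anti_adjacent hmem1 hmem2 (by linarith : x - x/2 < x) h
    have h1 : (g y - g x) / (y - x) ≤ (g x - g (x - x/2)) / (x/2) := by
      have hrw : x - (x - x/2) = x/2 := by ring
      rwa [hrw] at hslope
    have h2 : 0 ≤ g (x - x/2) := hnn _ (by linarith)
    rw [div_le_div_iff₀ (by linarith) hx2] at h1
    nlinarith [hnn x hx, mul_nonneg h2 (le_of_lt (sub_pos.mpr h))]

theorem bernstein_primitives_convergence
    (f : ℕ → ℝ → ℝ)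
    (hsmooth : ∀ k, ContDiffOn ℝ (⊤ : ℕ∞) (f k) (Set.Ioi 0))
    (hnonneg : ∀ k, ∀ q : ℝ, 0 < q → 0 ≤ f k q)
    (hCM : ∀ k, ∀ n : ℕ, ∀ q : ℝ, 0 < q →
      0 ≤ (-1 : ℝ) ^ n * iteratedDeriv (n + 1) (f k) q)
    (hmono : ∀ k, MonotoneOn (f k) (Set.Ioi 0))
    (hconc : ∀ k, ConcaveOn ℝ (Set.Ioi 0) (f k)) :
    (∀ flim : ℝ → ℝ,
      (∀ q : ℝ, 0 < q → Tendsto (fun k => f k q) atTop (nhds (flim q))) →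
      ∀ q : ℝ, 0 < q →
        Tendsto (fun k => ∫ r in (0:ℝ)..q, f k r) atTop
          (nhds (∫ r in (0:ℝ)..q, flim r)))
    ∧
    (∀ ψ : ℝ → ℝ,
      (∀ q : ℝ, 0 < q →
        Tendsto (fun k => ∫ r in (0:ℝ)..q, f k r) atTop (nhds (ψ q))) →
      (∀ q : ℝ, 0 < q → Tendsto (fun k => f k q) atTop (nhds (deriv ψ q))) ∧
      (∀ q : ℝ, 0 < q → ContDiffAt ℝ 1 ψ q)) := by
  have hcont : ∀ k, ContinuousOn (f k) (Set.Ioi 0) := fun k => (hsmooth k).continuousOn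
  have hint : ∀ k, ∀ q : ℝ, 0 < q → IntervalIntegrable (f k) MeasureTheory.volume 0 q :=
    fun k q hq => aux_integrable (hcont k) (hmono k) (fun r hr => hnonneg k r hr) hq
  have hintab : ∀ k, ∀ a b : ℝ, 0 < a → a ≤ b →
      IntervalIntegrable (f k) MeasureTheory.volume a b := by
    intro k a b ha hab
    apply (hint k b (ha.trans_le hab)).mono_set
    rw [Set.uIcc_of_le hab, Set.uIcc_of_le (ha.trans_le hab).le]
    exact Set.Icc_subset_Icc ha.le le_rfl
  constructor
  · -- Part 1: dominated convergence
    intro flim hflim q hq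
    obtain ⟨M, hM⟩ := (hflim q hq).bddAbove_range
    have hIoc : Set.uIoc (0:ℝ) q = Set.Ioc 0 q := Set.uIoc_of_le hq.le
    apply intervalIntegral.tendsto_integral_filter_of_dominated_convergence (bound := fun _ => M)
    · filter_upwards with k
      rw [hIoc]
      exact ((hcont k).mono Set.Ioc_subset_Ioi_self).aestronglyMeasurable measurableSet_Ioc
    · filter_upwards with k
      filter_upwards with r hr
      rw [hIoc] at hr
      rw [Real.norm_eq_abs, abs_of_nonneg (hnonneg k r hr.1)]
      exact (hmono k hr.1 hq hr.2).trans (hM (Set.mem_range_self k))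
    · exact intervalIntegrable_const
    · filter_upwards with r hr
      rw [hIoc] at hr
      exact hflim r hr.1
  · -- Part 2
    intro ψ hψ
    have hdiff : ∀ k, ∀ a b : ℝ, 0 < a → a ≤ b →
        (∫ r in (0:ℝ)..b, f k r) - (∫ r in (0:ℝ)..a, f k r) = ∫ r in a..b, f k r := by
      intro k a b ha hab
      exact intervalIntegral.integral_interval_sub_left (hint k b (ha.trans_le hab)) (hint k a ha)
    have hF1low : ∀ k, ∀ a b : ℝ, 0 < a → a ≤ b →
        (b - a) * f k a ≤ (∫ r in (0:ℝ)..b, f k r) - (∫ r in (0:ℝ)..a, f k r) := by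
      intro k a b ha hab
      rw [hdiff k a b ha hab]
      have hc : (b - a) * f k a = ∫ _ in a..b, f k a := by
        rw [intervalIntegral.integral_const, smul_eq_mul]
      rw [hc]
      apply intervalIntegral.integral_mono_on hab intervalIntegrable_const (hintab k a b ha hab)
      intro x hx
      exact hmono k ha (ha.trans_le hx.1) hx.1
    have hF1up : ∀ k, ∀ a b : ℝ, 0 < a → a ≤ b →
        (∫ r in (0:ℝ)..b, f k r) - (∫ r in (0:ℝ)..a, f k r) ≤ (b - a) * f k b := by
      intro k a b ha hab
      rw [hdiff k a b ha hab]
      have hc : (b - a) * f k b = ∫ _ in a..b, f k b := by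
        rw [intervalIntegral.integral_const, smul_eq_mul]
      rw [hc]
      apply intervalIntegral.integral_mono_on hab (hintab k a b ha hab) intervalIntegrable_const
      intro x hx
      exact hmono k (ha.trans_le hx.1) (ha.trans_le hab) hx.2
    have hF2 : ∀ k, ∀ x y : ℝ, 0 < x → x ≤ y →
        x * f k y ≤ (x + 2 * (y - x)) * f k x :=
      fun k x y hx hxy => aux_growth (hconc k) (fun r hr => hnonneg k r hr) hx hxy
    have hF3 : ∀ q : ℝ, 0 < q → ∃ C : ℝ, ∀ k, f k q ∈ Set.Icc 0 C := by
      intro q hq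
      have hu : Tendsto (fun k => (∫ r in (0:ℝ)..(2*q), f k r) - (∫ r in (0:ℝ)..q, f k r))
          atTop (nhds (ψ (2*q) - ψ q)) := (hψ (2*q) (by linarith)).sub (hψ q hq)
      obtain ⟨C₀, hC₀⟩ := hu.bddAbove_range
      refine ⟨C₀ / q, fun k => ⟨hnonneg k q hq, ?_⟩⟩
      have h1 := hF1low k q (2*q) hq (by linarith)
      have h2 : (∫ r in (0:ℝ)..(2*q), f k r) - (∫ r in (0:ℝ)..q, f k r) ≤ C₀ :=
        hC₀ (Set.mem_range_self k)
      rw [le_div_iff₀ hq]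
      nlinarith
    -- F4: comparison of subsequential limits
    have hF4 : ∀ q : ℝ, 0 < q → ∀ α β : ℝ, ∀ φ ρ : ℕ → ℕ,
        Tendsto φ atTop atTop → Tendsto ρ atTop atTop →
        Tendsto (fun n => f (φ n) q) atTop (nhds α) →
        Tendsto (fun n => f (ρ n) q) atTop (nhds β) → α ≤ β := by
      intro q hq α β φ ρ hφ hρ hα hβ
      have hβ0 : 0 ≤ β := le_of_tendsto_of_tendsto' tendsto_const_nhds hβ
        (fun n => hnonneg _ q hq)
      have key : ∀ h : ℝ, 0 < h → α ≤ (q + 2*h) / q * β := by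
        intro h hh
        have hqh : 0 < q + h := by linarith
        have ha : h * α ≤ ψ (q+h) - ψ q := by
          apply le_of_tendsto_of_tendsto' (tendsto_const_nhds.mul hα)
            (((hψ (q+h) hqh).sub (hψ q hq)).comp hφ)
          intro n
          have h1 := hF1low (φ n) q (q+h) hq (by linarith)
          simp only [Function.comp_apply]
          linarith
        have hb : ψ (q+h) - ψ q ≤ h * ((q + 2*h) / q * β) := by
          apply le_of_tendsto_of_tendsto'
            (((hψ (q+h) hqh).sub (hψ q hq)).comp hρ)
            (tendsto_const_nhds.mul (tendsto_const_nhds.mul hβ))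
          intro n
          have h1 := hF1up (ρ n) q (q+h) hq (by linarith)
          have h2 := hF2 (ρ n) q (q+h) hq (by linarith)
          simp only [Function.comp_apply]
          -- f k (q+h) ≤ (q + 2h)/q * f k q
          have h3 : f (ρ n) (q+h) ≤ (q + 2*h) / q * f (ρ n) q := by
            rw [div_mul_eq_mul_div, le_div_iff₀ hq]
            nlinarith
          nlinarith
        have := ha.trans hb
        exact le_of_mul_le_mul_left (by linarith) hh
      -- let h → 0⁺
      have hlim : Tendsto (fun h : ℝ => (q + 2*h) / q * β) (nhdsWithin 0 (Set.Ioi 0))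
          (nhds β) := by
        have hc : Tendsto (fun h : ℝ => (q + 2*h) / q * β) (nhds 0)
            (nhds ((q + 2*0) / q * β)) := by
          apply Tendsto.mul _ tendsto_const_nhds
          exact ((tendsto_const_nhds.add ((continuous_const.mul continuous_id).tendsto 0)).div_const q)
        have : (q + 2*0) / q * β = β := by field_simp; ring
        rw [this] at hc
        exact hc.mono_left nhdsWithin_le_nhds
      exact ge_of_tendsto hlim (eventually_mem_nhdsWithin.mono fun h hh => key h hh)
    -- existence of limits
    have hLex : ∀ q : ℝ, 0 < q → ∃ l : ℝ, Tendsto (fun k => f k q) atTop (nhds l) := by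
      intro q hq
      obtain ⟨C, hC⟩ := hF3 q hq
      obtain ⟨a, -, φ, hφmono, hφa⟩ :=
        tendsto_subseq_of_bounded (Metric.isBounded_Icc 0 C) (x := fun k => f k q) hC
      refine ⟨a, tendsto_of_subseq_tendsto fun ns hns => ?_⟩
      obtain ⟨b, -, ms, hmsmono, hmsb⟩ :=
        tendsto_subseq_of_bounded (Metric.isBounded_Icc 0 C) (x := fun n => f (ns n) q)
          (fun n => hC (ns n))
      have hcomp : Tendsto (fun n => ns (ms n)) atTop atTop :=
        hns.comp hmsmono.tendsto_atTop
      have hab : a = b :=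
        le_antisymm
          (hF4 q hq a b φ (fun n => ns (ms n)) hφmono.tendsto_atTop hcomp hφa hmsb)
          (hF4 q hq b a (fun n => ns (ms n)) φ hcomp hφmono.tendsto_atTop hmsb hφa)
      exact ⟨ms, hab ▸ hmsb⟩
    set L : ℝ → ℝ := fun q => limsup (fun k => f k q) atTop with hLdef
    have hL : ∀ q : ℝ, 0 < q → Tendsto (fun k => f k q) atTop (nhds (L q)) := by
      intro q hq
      obtain ⟨l, hl⟩ := hLex q hq
      have : L q = l := hl.limsup_eq
      rw [this]; exact hl
    have hLnn : ∀ q : ℝ, 0 < q → 0 ≤ L q := fun q hq =>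
      le_of_tendsto_of_tendsto' tendsto_const_nhds (hL q hq) (fun k => hnonneg k q hq)
    have hLmono : ∀ x y : ℝ, 0 < x → x ≤ y → L x ≤ L y := fun x y hx hxy =>
      le_of_tendsto_of_tendsto' (hL x hx) (hL y (hx.trans_le hxy))
        (fun k => hmono k hx (hx.trans_le hxy) hxy)
    have hLgrow : ∀ x y : ℝ, 0 < x → x ≤ y → x * L y ≤ (x + 2*(y-x)) * L x := fun x y hx hxy =>
      le_of_tendsto_of_tendsto' (tendsto_const_nhds.mul (hL y (hx.trans_le hxy)))
        (tendsto_const_nhds.mul (hL x hx)) (fun k => hF2 k x y hx hxy)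
    have hψbound : ∀ a b : ℝ, 0 < a → a ≤ b →
        (b - a) * L a ≤ ψ b - ψ a ∧ ψ b - ψ a ≤ (b - a) * L b := by
      intro a b ha hab
      have hb : 0 < b := ha.trans_le hab
      constructor
      · exact le_of_tendsto_of_tendsto' (tendsto_const_nhds.mul (hL a ha))
          ((hψ b hb).sub (hψ a ha)) (fun k => hF1low k a b ha hab)
      · exact le_of_tendsto_of_tendsto' ((hψ b hb).sub (hψ a ha))
          (tendsto_const_nhds.mul (hL b hb)) (fun k => hF1up k a b ha hab)
    -- key local estimate on L
    have hLest : ∀ q : ℝ, 0 < q → ∀ t : ℝ, q/2 < t → t < 2*q →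
        |L t - L q| ≤ 4 * L q / q * |t - q| := by
      intro q hq t ht1 ht2
      have ht0 : 0 < t := by linarith
      rcases le_total q t with hqt | htq
      · rw [abs_of_nonneg (by linarith [hLmono q t hq hqt] : (0:ℝ) ≤ L t - L q),
            abs_of_nonneg (by linarith : (0:ℝ) ≤ t - q)]
        have hg := hLgrow q t hq hqt
        rw [div_mul_eq_mul_div, le_div_iff₀ hq]
        nlinarith [hLnn q hq]
      · rw [abs_of_nonpos (by linarith [hLmono t q ht0 htq] : L t - L q ≤ 0),
            abs_of_nonpos (by linarith : t - q ≤ 0), neg_sub, neg_sub]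
        have hg := hLgrow t q ht0 htq
        have hm := hLmono t q ht0 htq
        rw [div_mul_eq_mul_div, le_div_iff₀ hq]
        nlinarith [hLnn t ht0, hLnn q hq]
    -- slope bounds
    have hSlope : ∀ q : ℝ, 0 < q → ∀ t : ℝ, q/2 < t → t < 2*q → t ≠ q →
        |slope ψ q t - L q| ≤ 4 * L q / q * |t - q| := by
      intro q hq t ht1 ht2 htne
      have ht0 : 0 < t := by linarith
      rcases htne.lt_or_gt with hlt | hgt
      · -- t < q
        have h1 := hψbound t q ht0 hlt.le
        have hslope : slope ψ q t = (ψ q - ψ t) / (q - t) := by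
          rw [slope_def_field, div_eq_div_iff (by linarith) (by linarith)]
          ring
        have hlo : L t ≤ slope ψ q t := by
          rw [hslope, le_div_iff₀ (by linarith : (0:ℝ) < q - t)]
          nlinarith [h1.1]
        have hhi : slope ψ q t ≤ L q := by
          rw [hslope, div_le_iff₀ (by linarith : (0:ℝ) < q - t)]
          nlinarith [h1.2]
        have hest := hLest q hq t ht1 ht2
        rw [abs_of_nonpos (by linarith [hLmono t q ht0 hlt.le] : L t - L q ≤ 0)] at hest
        rw [abs_of_nonpos (by linarith : slope ψ q t - L q ≤ 0)]
        linarith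
      · -- q < t
        have h1 := hψbound q t hq hgt.le
        have hslope : slope ψ q t = (ψ t - ψ q) / (t - q) := slope_def_field ψ q t
        have hlo : L q ≤ slope ψ q t := by
          rw [hslope, le_div_iff₀ (by linarith : (0:ℝ) < t - q)]
          nlinarith [h1.1]
        have hhi : slope ψ q t ≤ L t := by
          rw [hslope, div_le_iff₀ (by linarith : (0:ℝ) < t - q)]
          nlinarith [h1.2]
        have hest := hLest q hq t ht1 ht2
        rw [abs_of_nonneg (by linarith [hLmono q t hq hgt.le] : (0:ℝ) ≤ L t - L q)] at hest
        rw [abs_of_nonneg (by linarith : (0:ℝ) ≤ slope ψ q t - L q)]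
        linarith
    -- differentiability of ψ
    have hderiv : ∀ q : ℝ, 0 < q → HasDerivAt ψ (L q) q := by
      intro q hq
      rw [hasDerivAt_iff_tendsto_slope, tendsto_iff_dist_tendsto_zero]
      have hbnd : Tendsto (fun t : ℝ => 4 * L q / q * |t - q|) (nhdsWithin q {q}ᶜ)
          (nhds 0) := by
        have hc : Tendsto (fun t : ℝ => 4 * L q / q * |t - q|) (nhds q)
            (nhds (4 * L q / q * |q - q|)) :=
          (continuous_const.mul (continuous_id.sub continuous_const).abs).tendsto q
        simpa using hc.mono_left nhdsWithin_le_nhds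
      apply squeeze_zero' (Filter.Eventually.of_forall fun t => dist_nonneg) _ hbnd
      have hIoo : Set.Ioo (q/2) (2*q) ∈ nhdsWithin q {q}ᶜ :=
        mem_nhdsWithin_of_mem_nhds (Ioo_mem_nhds (by linarith) (by linarith))
      filter_upwards [hIoo, eventually_mem_nhdsWithin] with t ht htne
      rw [Real.dist_eq]
      exact hSlope q hq t ht.1 ht.2 htne
    -- continuity of L
    have hLcont : ∀ q : ℝ, 0 < q → ContinuousAt L q := by
      intro q hq
      show Tendsto L (nhds q) (nhds (L q))
      rw [tendsto_iff_dist_tendsto_zero]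
      have hbnd : Tendsto (fun t : ℝ => 4 * L q / q * |t - q|) (nhds q) (nhds 0) := by
        have hc : Tendsto (fun t : ℝ => 4 * L q / q * |t - q|) (nhds q)
            (nhds (4 * L q / q * |q - q|)) :=
          (continuous_const.mul (continuous_id.sub continuous_const).abs).tendsto q
        simpa using hc
      apply squeeze_zero' (Filter.Eventually.of_forall fun t => dist_nonneg) _ hbnd
      filter_upwards [Ioo_mem_nhds (by linarith : q/2 < q) (by linarith : q < 2*q)] with t ht
      rw [Real.dist_eq]
      exact hLest q hq t ht.1 ht.2
    constructor
    · intro q hq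
      rw [(hderiv q hq).deriv]
      exact hL q hq
    · intro q hq
      rw [contDiffAt_one_iff]
      refine ⟨fun t => ContinuousLinearMap.smulRight (1 : ℝ →L[ℝ] ℝ) (L t),
        Set.Ioi 0, isOpen_Ioi.mem_nhds hq, ?_, fun t ht =>
          hasDerivAt_iff_hasFDerivAt.mp (hderiv t ht)⟩
      apply Continuous.comp_continuousOn
        ((ContinuousLinearMap.smulRightL ℝ ℝ ℝ (1 : ℝ →L[ℝ] ℝ)).continuous)
      exact fun t ht => (hLcont t ht).continuousWithinAt
end

section
/- Packing lemma: Let (c_j) be a positive sequence with Σ_j j/c_j < 1 and c_k Σ_{j>k} j/c_j → 0 as k → ∞. Let Φ_k(q) = ∫(1−e^{−qx})dμ_k(x) where μ_k are measures on (0,∞) with μ_k((0,∞)) ≤ k. Then there exists a sequence b_k → ∞ such that Φ_⋆(q) := Σ_{j=1}^∞ c_j^{−1} Φ_j(b_j q) converges for each q > 0 to a Bernstein function satisfying c_k Φ_⋆(q/b_k) − Φ_k(q) → 0 as k → ∞ for every q > 0; moreover Φ_⋆ is the Bernstein transform of a finite measure μ_⋆ on (0,∞) with μ_⋆((0,∞))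 < 1. -/
open Filter MeasureTheory Set
open scoped ENNReal

noncomputable def recSeq (g : (ℕ → ℝ) → ℕ → ℝ) : ℕ → ℝ
  | k => g (fun j => if _ : j < k then recSeq g j else 0) k

theorem recSeq_eq (g : (ℕ → ℝ) → ℕ → ℝ) (k : ℕ) :
    recSeq g k = g (fun j => if _ : j < k then recSeq g j else 0) k := by
  rw [recSeq]

/-- The Bernstein lintegral. -/
noncomputable def bpsi (ν : Measure ℝ) (q : ℝ) : ℝ≥0∞ :=
  ∫⁻ x in Set.Ioi (0 : ℝ), ENNReal.ofReal (1 - Real.exp (-q * x)) ∂ν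

lemma bpsi_meas (q : ℝ) : Measurable fun x : ℝ => ENNReal.ofReal (1 - Real.exp (-q * x)) := by
  fun_prop

lemma bpsi_le (ν : Measure ℝ) (q : ℝ) : bpsi ν q ≤ ν (Set.Ioi 0) := by
  calc bpsi ν q ≤ ∫⁻ _ in Set.Ioi (0 : ℝ), 1 ∂ν := by
        refine lintegral_mono fun x => ?_
        exact ENNReal.ofReal_le_one.2 (by simp [sub_le_self_iff, (Real.exp_pos _).le])
    _ = ν (Set.Ioi 0) := setLIntegral_one _

lemma bpsi_mono (ν : Measure ℝ) {q q' : ℝ} (h : q ≤ q') : bpsi ν q ≤ bpsi ν q' := by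
  refine setLIntegral_mono' measurableSet_Ioi fun x hx => ?_
  refine ENNReal.ofReal_le_ofReal (sub_le_sub_left ?_ _)
  exact Real.exp_le_exp.2 (by nlinarith [le_of_lt (show (0:ℝ) < x from hx)])

lemma bpsi_tendsto (ν : Measure ℝ) (hν : ν (Set.Ioi 0) ≠ ∞) (a : ℝ) :
    Tendsto (fun B : ℝ => bpsi ν (a / B)) atTop (nhds 0) := by
  have h0 : (0 : ℝ≥0∞) = ∫⁻ _ in Set.Ioi (0 : ℝ), 0 ∂ν := by simp
  rw [h0]
  refine tendsto_lintegral_filter_of_dominated_convergence (fun _ => 1)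
    (Eventually.of_forall fun B => bpsi_meas _) (Eventually.of_forall fun B => ?_) ?_ ?_
  · exact Eventually.of_forall fun x =>
      ENNReal.ofReal_le_one.2 (by simp [sub_le_self_iff, (Real.exp_pos _).le])
  · simpa using hν
  · refine Eventually.of_forall fun x => ?_
    have hdiv : Tendsto (fun B : ℝ => a / B) atTop (nhds 0) :=
      tendsto_const_nhds.div_atTop tendsto_id
    have hcont : Continuous fun q : ℝ => ENNReal.ofReal (1 - Real.exp (-q * x)) :=
      ENNReal.continuous_ofReal.comp (by fun_prop)
    have := (hcont.tendsto 0).comp hdiv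
    simpa [Function.comp_def] using this

lemma bphi_eq (ν : Measure ℝ) {q : ℝ} (hq : 0 < q) :
    ∫ x in Set.Ioi (0 : ℝ), (1 - Real.exp (-q * x)) ∂ν = (bpsi ν q).toReal := by
  rw [integral_eq_lintegral_of_nonneg_ae, bpsi]
  · refine (ae_restrict_iff' measurableSet_Ioi).2 (ae_of_all _ fun x hx => ?_)
    have hx0 : (0 : ℝ) < x := hx
    have h1 : Real.exp (-q * x) ≤ 1 := Real.exp_le_one_iff.2 (by nlinarith)
    have h2 : (0:ℝ) ≤ 1 - Real.exp (-q * x) := by linarith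
    simpa using h2
  · exact (by fun_prop : Continuous fun x : ℝ => 1 - Real.exp (-q * x)).aestronglyMeasurable

theorem packing_lemma
    (c : ℕ → ℝ) (hc : ∀ j, 0 < c j)
    (S : ℝ) (hS : HasSum (fun j : ℕ => (j : ℝ) / c j) S) (hS1 : S < 1)
    (htail : Tendsto (fun k => c k * ∑' j : ℕ, if k < j then (j : ℝ) / c j else 0)
      atTop (nhds 0))
    (μ : ℕ → Measure ℝ)
    (hμmass : ∀ k, (μ k) (Set.Ioi (0 : ℝ)) ≤ (k : ℝ≥0∞))
    (Φ : ℕ → ℝ → ℝ)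
    (hΦ : ∀ k q, Φ k q = ∫ x in Set.Ioi (0 : ℝ), (1 - Real.exp (-q * x)) ∂(μ k)) :
    ∃ b : ℕ → ℝ, Tendsto b atTop atTop ∧
    ∃ Φs : ℝ → ℝ,
      (∀ q : ℝ, 0 < q → HasSum (fun j : ℕ => (c j)⁻¹ * Φ j (b j * q)) (Φs q)) ∧
      (∀ q : ℝ, 0 < q →
        Tendsto (fun k => c k * Φs (q / b k) - Φ k q) atTop (nhds 0)) ∧
      ∃ μs : Measure ℝ,
        μs (Set.Ioi (0 : ℝ))ᶜ = 0 ∧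
        μs (Set.Ioi (0 : ℝ)) < 1 ∧
        ∀ q : ℝ, 0 < q →
          Φs q = ∫ x in Set.Ioi (0 : ℝ), (1 - Real.exp (-q * x)) ∂μs := by
  classical
  have hΨle : ∀ j q, bpsi (μ j) q ≤ (j : ℝ≥0∞) := fun j q => (bpsi_le _ _).trans (hμmass j)
  have hΨne : ∀ j q, bpsi (μ j) q ≠ ∞ :=
    fun j q => ((hΨle j q).trans_lt (ENNReal.natCast_lt_top j)).ne
  have hμne : ∀ j, μ j (Set.Ioi 0) ≠ ∞ :=
    fun j => ((hμmass j).trans_lt (ENNReal.natCast_lt_top j)).ne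
  have hkey : ∀ j : ℕ, ENNReal.ofReal (c j)⁻¹ * (j : ℝ≥0∞) = ENNReal.ofReal ((j : ℝ) / c j) := by
    intro j
    rw [← ENNReal.ofReal_natCast j, ← ENNReal.ofReal_mul (inv_nonneg.2 (hc j).le)]
    congr 1
    rw [inv_mul_eq_div]
  -- existence of good scaling at each stage
  have hex : ∀ (k : ℕ) (v : ℕ → ℝ), ∃ B : ℝ, ((k : ℝ) + 1 ≤ B ∧
      ∀ j < k, c k * (c j)⁻¹ * (bpsi (μ j) (v j * k / B)).toReal ≤ (1/2) ^ (j+1) / k) := by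
    intro k v
    have htend : ∀ j : ℕ, Tendsto
        (fun B : ℝ => c k * (c j)⁻¹ * (bpsi (μ j) (v j * k / B)).toReal) atTop (nhds 0) := by
      intro j
      have h1 := bpsi_tendsto (μ j) (hμne j) (v j * k)
      have h2 : Tendsto (fun B : ℝ => (bpsi (μ j) (v j * k / B)).toReal) atTop (nhds 0) := by
        have := (ENNReal.tendsto_toReal (by simp : (0 : ℝ≥0∞) ≠ ∞)).comp h1
        simpa [Function.comp_def] using this
      simpa using h2.const_mul (c k * (c j)⁻¹)
    have hev : ∀ᶠ B : ℝ in atTop, ((k : ℝ) + 1 ≤ B ∧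
        ∀ j < k, c k * (c j)⁻¹ * (bpsi (μ j) (v j * k / B)).toReal ≤ (1/2) ^ (j+1) / k) := by
      refine (eventually_ge_atTop ((k : ℝ) + 1)).and ?_
      have h3 : ∀ᶠ B : ℝ in atTop, ∀ j ∈ Finset.range k,
          c k * (c j)⁻¹ * (bpsi (μ j) (v j * k / B)).toReal ≤ (1/2) ^ (j+1) / k := by
        refine (Finset.range k).eventually_all.2 fun j hj => ?_
        have hk : 0 < k := Nat.pos_of_ne_zero (by rintro rfl; simp at hj)
        have hpos : (0 : ℝ) < (1/2) ^ (j+1) / k := by positivity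
        exact ((htend j).eventually_lt_const hpos).mono fun B hB => hB.le
      exact h3.mono fun B hB j hj => hB j (Finset.mem_range.2 hj)
    exact hev.exists
  -- construction of b by strong recursion
  set b : ℕ → ℝ := recSeq (fun v k => Classical.choose (hex k v)) with hbdef
  have hbspec : ∀ k : ℕ, ((k : ℝ) + 1 ≤ b k ∧
      ∀ j < k, c k * (c j)⁻¹ * (bpsi (μ j) (b j * k / b k)).toReal ≤ (1/2) ^ (j+1) / k) := by
    intro k
    have hrec := recSeq_eq (fun v k => Classical.choose (hex k v)) k
    have h := Classical.choose_spec (hex k (fun j => if _ : j < k then b j else 0))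
    rw [← hrec] at h
    refine ⟨h.1, fun j hj => ?_⟩
    have h2 := h.2 j hj
    rwa [dif_pos hj] at h2
  have hbpos : ∀ k, 0 < b k := fun k => lt_of_lt_of_le (by positivity) (hbspec k).1
  have hbtop : Tendsto b atTop atTop := by
    refine tendsto_atTop_mono (fun k => (hbspec k).1) ?_
    exact tendsto_atTop_add_const_right _ _ tendsto_natCast_atTop_atTop
  refine ⟨b, hbtop, ?_⟩
  -- the measure
  set μs : Measure ℝ := Measure.sum (fun j => ENNReal.ofReal (c j)⁻¹ •
    Measure.map (fun x => b j * x) ((μ j).restrict (Set.Ioi 0))) with hμsdef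
  have hmapmeas : ∀ j, Measurable fun x : ℝ => b j * x := fun j => measurable_id.const_mul _
  have hcomp : ∀ (j : ℕ) (s : Set ℝ), MeasurableSet s →
      (Measure.map (fun x => b j * x) ((μ j).restrict (Set.Ioi 0))) s
        = μ j ((fun x => b j * x) ⁻¹' s ∩ Set.Ioi 0) := by
    intro j s hs
    rw [Measure.map_apply (hmapmeas j) hs, Measure.restrict_apply ((hmapmeas j) hs)]
  have hcompl : μs (Set.Ioi (0 : ℝ))ᶜ = 0 := by
    rw [hμsdef, Measure.sum_apply _ measurableSet_Ioi.compl]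
    have hz : ∀ j : ℕ, (ENNReal.ofReal (c j)⁻¹ •
        Measure.map (fun x => b j * x) ((μ j).restrict (Set.Ioi 0))) (Set.Ioi (0:ℝ))ᶜ = 0 := by
      intro j
      rw [Measure.smul_apply, smul_eq_mul, hcomp _ _ measurableSet_Ioi.compl]
      have he : (fun x => b j * x) ⁻¹' (Set.Ioi (0 : ℝ))ᶜ ∩ Set.Ioi 0 = ∅ := by
        ext x
        simp only [Set.mem_inter_iff, Set.mem_preimage, Set.mem_compl_iff, Set.mem_Ioi,
          Set.mem_empty_iff_false, iff_false, not_and, not_not]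
        intro h hx
        exact absurd (mul_pos (hbpos j) hx) h
      rw [he]
      simp
    rw [tsum_congr hz, tsum_zero]
  have hpre : ∀ j : ℕ, (fun x => b j * x) ⁻¹' Set.Ioi (0 : ℝ) ∩ Set.Ioi 0 = Set.Ioi 0 := by
    intro j
    ext x
    simp only [Set.mem_inter_iff, Set.mem_preimage, Set.mem_Ioi, and_iff_right_iff_imp]
    exact fun hx => mul_pos (hbpos j) hx
  have hmass : μs (Set.Ioi (0 : ℝ)) ≤ ENNReal.ofReal S := by
    rw [hμsdef, Measure.sum_apply _ measurableSet_Ioi]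
    have hterm : ∀ j : ℕ, (ENNReal.ofReal (c j)⁻¹ •
        Measure.map (fun x => b j * x) ((μ j).restrict (Set.Ioi 0))) (Set.Ioi (0:ℝ))
          ≤ ENNReal.ofReal ((j : ℝ) / c j) := by
      intro j
      rw [Measure.smul_apply, smul_eq_mul, hcomp _ _ measurableSet_Ioi, hpre j, ← hkey j]
      exact mul_le_mul_right (hμmass j) _
    calc (∑' j : ℕ, (ENNReal.ofReal (c j)⁻¹ •
        Measure.map (fun x => b j * x) ((μ j).restrict (Set.Ioi 0))) (Set.Ioi (0:ℝ)))
        ≤ ∑' j : ℕ, ENNReal.ofReal ((j : ℝ) / c j) := ENNReal.tsum_le_tsum hterm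
      _ = ENNReal.ofReal S := by
          rw [← ENNReal.ofReal_tsum_of_nonneg
            (fun j => div_nonneg (Nat.cast_nonneg j) (hc j).le) hS.summable, hS.tsum_eq]
  have hmasslt : μs (Set.Ioi (0 : ℝ)) < 1 :=
    lt_of_le_of_lt hmass (ENNReal.ofReal_lt_one.2 hS1)
  have hrestr : μs.restrict (Set.Ioi 0) = μs := by
    refine Measure.restrict_eq_self_of_ae_mem ?_
    rw [MeasureTheory.ae_iff]
    simpa [Iic_def] using hcompl
  -- the key lintegral identity
  have hLsum : ∀ q : ℝ, bpsi μs q = ∑' j, ENNReal.ofReal (c j)⁻¹ * bpsi (μ j) (b j * q) := by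
    intro q
    rw [bpsi, hrestr, hμsdef, lintegral_sum_measure]
    refine tsum_congr fun j => ?_
    rw [lintegral_smul_measure, lintegral_map (bpsi_meas q) (hmapmeas j)]
    congr 1
    rw [bpsi]
    refine lintegral_congr fun x => ?_
    ring_nf
  have htermle : ∀ (j : ℕ) (q : ℝ), ENNReal.ofReal (c j)⁻¹ * bpsi (μ j) q
      ≤ ENNReal.ofReal ((j : ℝ) / c j) := by
    intro j q
    rw [← hkey j]
    exact mul_le_mul_right (hΨle j q) _
  have hLle : ∀ q : ℝ, (∑' j, ENNReal.ofReal (c j)⁻¹ * bpsi (μ j) (b j * q))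
      ≤ ENNReal.ofReal S := by
    intro q
    calc (∑' j, ENNReal.ofReal (c j)⁻¹ * bpsi (μ j) (b j * q))
        ≤ ∑' j : ℕ, ENNReal.ofReal ((j : ℝ) / c j) := ENNReal.tsum_le_tsum fun j => htermle _ _
      _ = ENNReal.ofReal S := by
          rw [← ENNReal.ofReal_tsum_of_nonneg
            (fun j => div_nonneg (Nat.cast_nonneg j) (hc j).le) hS.summable, hS.tsum_eq]
  have hLne : ∀ q : ℝ, (∑' j, ENNReal.ofReal (c j)⁻¹ * bpsi (μ j) (b j * q)) ≠ ∞ :=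
    fun q => ((hLle q).trans_lt ENNReal.ofReal_lt_top).ne
  have hTne : ∀ (j : ℕ) (q : ℝ), ENNReal.ofReal (c j)⁻¹ * bpsi (μ j) q ≠ ∞ :=
    fun j q => (((htermle j q).trans_lt ENNReal.ofReal_lt_top)).ne
  refine ⟨fun q => (bpsi μs q).toReal, ?_, ?_, μs, hcompl, hmasslt, fun q hq => ?_⟩
  · -- HasSum
    intro q hq
    have hφψ : ∀ j : ℕ, (c j)⁻¹ * Φ j (b j * q) =
        (ENNReal.ofReal (c j)⁻¹ * bpsi (μ j) (b j * q)).toReal := by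
      intro j
      rw [hΦ, bphi_eq (μ j) (mul_pos (hbpos j) hq), ENNReal.toReal_mul,
        ENNReal.toReal_ofReal (inv_nonneg.2 (hc j).le)]
    have hsummable := ENNReal.summable_toReal (hLne q)
    have heq := ENNReal.tsum_toReal_eq (fun j => hTne j (b j * q))
    have hhs := hsummable.hasSum
    rw [← heq, ← hLsum q] at hhs
    simpa only [← hφψ] using hhs
  · -- Tendsto difference
    intro q hq
    have hAkk : ∀ k, ENNReal.ofReal (c k) *
        (ENNReal.ofReal (c k)⁻¹ * bpsi (μ k) (b k * (q / b k))) = bpsi (μ k) q := by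
      intro k
      rw [← mul_assoc, ← ENNReal.ofReal_mul (hc k).le, mul_inv_cancel₀ (hc k).ne',
        ENNReal.ofReal_one, one_mul, mul_div_cancel₀ _ (hbpos k).ne']
    set A : ℕ → ℕ → ℝ≥0∞ := fun k j =>
      ENNReal.ofReal (c k) * (ENNReal.ofReal (c j)⁻¹ * bpsi (μ j) (b j * (q / b k))) with hAdef
    set R : ℕ → ℝ≥0∞ := fun k => ∑' j, if j = k then 0 else A k j with hRdef
    have hAsum : ∀ k, (∑' j, A k j) = ENNReal.ofReal (c k) *
        (∑' j, ENNReal.ofReal (c j)⁻¹ * bpsi (μ j) (b j * (q / b k))) :=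
      fun k => ENNReal.tsum_mul_left
    have hRle : ∀ k, R k ≤ ∑' j, A k j := by
      intro k
      refine ENNReal.tsum_le_tsum fun j => ?_
      split
      · exact zero_le
      · exact le_rfl
    have hAsumne : ∀ k, (∑' j, A k j) ≠ ∞ := by
      intro k
      rw [hAsum k]
      exact (ENNReal.mul_lt_top ENNReal.ofReal_lt_top (hLne _).lt_top).ne
    have hRne : ∀ k, R k ≠ ∞ := fun k => (lt_of_le_of_lt (hRle k) (hAsumne k).lt_top).ne
    have hsplit : ∀ k, (∑' j, A k j) = A k k + R k := fun k => by
      simp only [hRdef]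
      refine (ENNReal.tsum_eq_add_tsum_ite k).trans ?_
      congr 1
      refine tsum_congr fun j => ?_
      congr 1
    have hdiff : ∀ k, c k * (bpsi μs (q / b k)).toReal - Φ k q = (R k).toReal := by
      intro k
      have hΦk : Φ k q = (bpsi (μ k) q).toReal := by rw [hΦ, bphi_eq _ hq]
      have h1 : c k * (bpsi μs (q / b k)).toReal
          = (ENNReal.ofReal (c k) * bpsi μs (q / b k)).toReal := by
        rw [ENNReal.toReal_mul, ENNReal.toReal_ofReal (hc k).le]
      have h2 : ENNReal.ofReal (c k) * bpsi μs (q / b k) = A k k + R k := by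
        rw [hLsum, ← hAsum k, hsplit k]
      have hAkne : A k k ≠ ∞ := by rw [hAdef]; simp only; rw [hAkk k]; exact hΨne k q
      rw [h1, h2, ENNReal.toReal_add hAkne (hRne k), hΦk]
      have : A k k = bpsi (μ k) q := by rw [hAdef]; simp only; rw [hAkk k]
      rw [this]
      ring
    have hR0 : Tendsto R atTop (nhds 0) := by
      have hub : ∀ᶠ k : ℕ in atTop, R k ≤
          ENNReal.ofReal (2 / k + c k * ∑' j : ℕ, if k < j then (j : ℝ) / c j else 0) := by
        filter_upwards [tendsto_natCast_atTop_atTop.eventually_ge_atTop q] with k hk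
        have hbnd : ∀ j : ℕ, (if j = k then 0 else A k j) ≤
            ENNReal.ofReal ((1/2) ^ (j+1) / k) +
              (if k < j then ENNReal.ofReal (c k * ((j : ℝ) / c j)) else 0) := by
          intro j
          rcases lt_trichotomy j k with hj | hj | hj
          · rw [if_neg hj.ne, if_neg (by omega)]
            refine le_trans ?_ le_self_add
            have hb1 : b j * (q / b k) ≤ b j * (k : ℝ) / b k := by
              rw [mul_div_assoc]
              exact mul_le_mul_of_nonneg_left ((div_le_div_iff_of_pos_right (hbpos k)).2 hk) (hbpos j).le
            have h2 := bpsi_mono (μ j) hb1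
            calc A k j ≤ ENNReal.ofReal (c k) *
                  (ENNReal.ofReal (c j)⁻¹ * bpsi (μ j) (b j * (k : ℝ) / b k)) :=
                  mul_le_mul_right (mul_le_mul_right h2 _) _
              _ = ENNReal.ofReal (c k * ((c j)⁻¹ * (bpsi (μ j) (b j * (k : ℝ) / b k)).toReal)) := by
                  rw [ENNReal.ofReal_mul (hc k).le, ENNReal.ofReal_mul (inv_nonneg.2 (hc j).le),
                    ENNReal.ofReal_toReal (hΨne j _)]
              _ ≤ ENNReal.ofReal ((1/2) ^ (j+1) / k) := by
                  refine ENNReal.ofReal_le_ofReal ?_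
                  have hsp := (hbspec k).2 j hj
                  linarith [hsp, mul_assoc (c k) (c j)⁻¹ ((bpsi (μ j) (b j * (k:ℝ) / b k)).toReal)]
          · rw [if_pos hj]
            exact zero_le
          · rw [if_neg (by omega), if_pos hj]
            refine le_trans ?_ le_add_self
            calc A k j ≤ ENNReal.ofReal (c k) * (ENNReal.ofReal (c j)⁻¹ * (j : ℝ≥0∞)) :=
                mul_le_mul_right (mul_le_mul_right (hΨle j _) _) _
              _ = ENNReal.ofReal (c k * ((j : ℝ) / c j)) := by
                  rw [hkey j, ← ENNReal.ofReal_mul (hc k).le]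
        have htail_nonneg : (0 : ℝ) ≤ ∑' j : ℕ, if k < j then (j : ℝ) / c j else 0 :=
          tsum_nonneg fun j => by
            split
            · exact div_nonneg (Nat.cast_nonneg j) (hc j).le
            · exact le_rfl
        have hsummable_tail : Summable (fun j : ℕ => if k < j then (j : ℝ) / c j else 0) := by
          refine Summable.of_nonneg_of_le (fun j => ?_) (fun j => ?_) hS.summable
          · split
            · exact div_nonneg (Nat.cast_nonneg j) (hc j).le
            · exact le_rfl
          · split
            · exact le_rfl
            · exact div_nonneg (Nat.cast_nonneg j) (hc j).le
        calc R k ≤ ∑' j : ℕ, (ENNReal.ofReal ((1/2) ^ (j+1) / k) +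
              (if k < j then ENNReal.ofReal (c k * ((j : ℝ) / c j)) else 0)) :=
              ENNReal.tsum_le_tsum hbnd
          _ = (∑' j : ℕ, ENNReal.ofReal ((1/2) ^ (j+1) / k)) +
              ∑' j : ℕ, (if k < j then ENNReal.ofReal (c k * ((j : ℝ) / c j)) else 0) :=
              ENNReal.tsum_add
          _ ≤ ENNReal.ofReal (2 / k) +
              ENNReal.ofReal (c k * ∑' j : ℕ, if k < j then (j : ℝ) / c j else 0) := by
              gcongr
              · -- geometric part
                have hsg : Summable (fun j : ℕ => (1/2 : ℝ) ^ (j+1) / k) := by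
                  have h := summable_geometric_two
                  exact ((h.mul_left (1/2)).div_const k).congr
                    (fun j => by rw [pow_succ]; ring)
                calc (∑' j : ℕ, ENNReal.ofReal ((1/2 : ℝ) ^ (j+1) / k))
                    = ENNReal.ofReal (∑' j : ℕ, (1/2 : ℝ) ^ (j+1) / k) :=
                      (ENNReal.ofReal_tsum_of_nonneg (fun j => by positivity) hsg).symm
                  _ ≤ ENNReal.ofReal (2 / k) := by
                      refine ENNReal.ofReal_le_ofReal ?_
                      have hle : ∀ j : ℕ, (1/2 : ℝ) ^ (j+1) / k ≤ (1/2) ^ j * (1 / k) := by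
                        intro j
                        rw [div_eq_mul_one_div]
                        refine mul_le_mul_of_nonneg_right ?_ (by positivity)
                        exact pow_le_pow_of_le_one (by norm_num) (by norm_num) (Nat.le_succ j)
                      calc (∑' j : ℕ, (1/2 : ℝ) ^ (j+1) / k)
                          ≤ ∑' j : ℕ, (1/2 : ℝ) ^ j * (1 / k) :=
                            Summable.tsum_le_tsum hle hsg (summable_geometric_two.mul_right _)
                        _ = 2 * (1 / k) := by rw [tsum_mul_right, tsum_geometric_two]
                        _ = 2 / k := by ring
              · -- tail part
                have heq : ∀ j : ℕ, (if k < j then ENNReal.ofReal (c k * ((j : ℝ) / c j)) else 0)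
                    = ENNReal.ofReal (c k * (if k < j then (j : ℝ) / c j else 0)) := by
                  intro j
                  by_cases h : k < j
                  · simp [h]
                  · simp [h]
                refine le_of_eq ?_
                calc (∑' j : ℕ, (if k < j then ENNReal.ofReal (c k * ((j : ℝ) / c j)) else 0))
                    = ∑' j : ℕ, ENNReal.ofReal (c k * (if k < j then (j : ℝ) / c j else 0)) :=
                      tsum_congr heq
                  _ = ENNReal.ofReal (∑' j : ℕ, c k * (if k < j then (j : ℝ) / c j else 0)) :=
                      (ENNReal.ofReal_tsum_of_nonneg (fun j => by
                        split
                        · exact mul_nonneg (hc k).le (div_nonneg (Nat.cast_nonneg j) (hc j).le)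
                        · simp) (hsummable_tail.mul_left (c k))).symm
                  _ = ENNReal.ofReal (c k * ∑' j : ℕ, if k < j then (j : ℝ) / c j else 0) := by
                      rw [tsum_mul_left]
          _ = ENNReal.ofReal (2 / k + c k * ∑' j : ℕ, if k < j then (j : ℝ) / c j else 0) := by
              rw [← ENNReal.ofReal_add (by positivity) (mul_nonneg (hc k).le htail_nonneg)]
      refine tendsto_of_tendsto_of_tendsto_of_le_of_le' tendsto_const_nhds ?_
        (Eventually.of_forall fun k => zero_le) hub
      have hlim : Tendsto (fun k : ℕ => 2 / (k : ℝ) +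
          c k * ∑' j : ℕ, if k < j then (j : ℝ) / c j else 0) atTop (nhds 0) := by
        have := (tendsto_const_div_atTop_nhds_zero_nat 2).add htail
        simpa using this
      have h2 := (ENNReal.continuous_ofReal.tendsto 0).comp hlim
      simpa [Function.comp_def] using h2
    have hRtoReal : Tendsto (fun k => (R k).toReal) atTop (nhds 0) := by
      have := (ENNReal.tendsto_toReal (by simp : (0 : ℝ≥0∞) ≠ ∞)).comp hR0
      simpa [Function.comp_def] using this
    exact Tendsto.congr (fun k => (hdiff k).symm) hRtoReal
  · -- integral representation
    rw [bphi_eq μs hq]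
end

section
/- If λ_⋆ = (0, 0, μ_⋆) is a universal Lévy triple with sequences (b_k), (c_k) → ∞ (meaning every Lévy triple λ is the limit of λ_⋆^{b_k,c_k} along some subsequence, where λ^{b,c} = (cb^{−1}a₀, ca_∞, μ^{b,c}) with μ^{b,c}(A) = cμ(bA)), then c_k/b_k → 0 along any subsequence on which λ_⋆^{b_k,c_k} converges to a Lévy triple. -/
open MeasureTheory Filter
open scoped ENNReal

/-- The finite measure on `[0,∞]` associated to a Lévy triple `(a₀, a_∞, μ)`. -/
noncomputable def levyKappa (a0 aInf : ℝ) (μ : Measure ℝ) : Measure ℝ≥0∞ :=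
  ENNReal.ofReal a0 • Measure.dirac 0 + ENNReal.ofReal aInf • Measure.dirac ⊤ +
    Measure.map ENNReal.ofReal
      ((μ.restrict (Set.Ioi 0)).withDensity fun x => ENNReal.ofReal (min x 1))

/-- Dilational rescaling of a Lévy measure: `μ^{b,c}(A) = c μ(bA)`. -/
noncomputable def scaleMu (b c : ℝ) (μ : Measure ℝ) : Measure ℝ :=
  ENNReal.ofReal c • Measure.map (fun x => x / b) μ

/-- Weak-star convergence of measures on the compactified half-line `[0,∞]`. -/
def WStarTendsto (κk : ℕ → Measure ℝ≥0∞) (κ : Measure ℝ≥0∞) : Prop :=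
  ∀ g : C(ℝ≥0∞, ℝ), Tendsto (fun k => ∫ x, g x ∂(κk k)) atTop (nhds (∫ x, g x ∂κ))

/-- auxiliary test function: `y ↦ (1 - y/x)⁺` on `[0,∞]`. -/
noncomputable def auxG (x : ℝ) : ℝ≥0∞ → ℝ := fun y => (1 - y / ENNReal.ofReal x).toReal

lemma auxG_ne_top (x : ℝ) (y : ℝ≥0∞) : 1 - y / ENNReal.ofReal x ≠ ⊤ :=
  ne_top_of_le_ne_top ENNReal.one_ne_top tsub_le_self

lemma ofReal_auxG (x : ℝ) (y : ℝ≥0∞) :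
    ENNReal.ofReal (auxG x y) = 1 - y / ENNReal.ofReal x :=
  ENNReal.ofReal_toReal (auxG_ne_top x y)

lemma auxG_cont {x : ℝ} (hx : 0 < x) : Continuous (auxG x) := by
  have h1 : Continuous fun y : ℝ≥0∞ => 1 - y / ENNReal.ofReal x :=
    (ENNReal.continuous_sub_left ENNReal.one_ne_top).comp
      (ENNReal.continuous_div_const _ (by simp [ENNReal.ofReal_eq_zero, hx.not_ge]))
  exact ENNReal.continuousOn_toReal.comp_continuous h1 fun y => auxG_ne_top x y

lemma auxG_meas (x : ℝ) : Measurable fun y : ℝ≥0∞ => 1 - y / ENNReal.ofReal x :=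
  (measurable_id.div_const _).const_sub _

/-- the key scaling function `G μs t = ∫_{(0,∞)} z (1 - z/t)⁺ dμs`. -/
noncomputable def keyG (μs : Measure ℝ) (t : ℝ) : ℝ≥0∞ :=
  ∫⁻ z in Set.Ioi (0 : ℝ), ENNReal.ofReal z * (1 - ENNReal.ofReal z / ENNReal.ofReal t) ∂μs

lemma keyG_mono (μs : Measure ℝ) : Monotone (keyG μs) := by
  intro s t hst
  refine lintegral_mono fun z => ?_
  exact mul_le_mul_right (tsub_le_tsub_left (ENNReal.div_le_div_left
    (ENNReal.ofReal_le_ofReal hst) _) _) _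

lemma keyG_lt_top (μs : Measure ℝ)
    (hμsfin : (∫⁻ x in Set.Ioi (0 : ℝ), ENNReal.ofReal (min x 1) ∂μs) < ⊤) (t : ℝ) :
    keyG μs t < ⊤ := by
  have hbound : ∀ z ∈ Set.Ioi (0 : ℝ),
      ENNReal.ofReal z * (1 - ENNReal.ofReal z / ENNReal.ofReal t)
        ≤ ENNReal.ofReal (max t 1) * ENNReal.ofReal (min z 1) := by
    intro z hz
    rcases le_or_gt t z with h | h
    · have : ENNReal.ofReal t ≤ ENNReal.ofReal z := ENNReal.ofReal_le_ofReal h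
      have h1 : (1 : ℝ≥0∞) ≤ ENNReal.ofReal z / ENNReal.ofReal t := by
        rcases eq_or_ne (ENNReal.ofReal t) 0 with h0 | h0
        · rw [h0, ENNReal.div_zero]
          · exact le_top
          · simpa [ENNReal.ofReal_eq_zero] using hz.out
        · exact (ENNReal.le_div_iff_mul_le (Or.inl h0)
            (Or.inl ENNReal.ofReal_ne_top)).2 (by simpa using this)
      rw [tsub_eq_zero_of_le h1, mul_zero]
      exact zero_le
    · calc ENNReal.ofReal z * (1 - ENNReal.ofReal z / ENNReal.ofReal t)
          ≤ ENNReal.ofReal z * 1 := mul_le_mul_right tsub_le_self _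
        _ = ENNReal.ofReal z := mul_one _
        _ ≤ ENNReal.ofReal (max t 1) * ENNReal.ofReal (min z 1) := by
            rw [← ENNReal.ofReal_mul (le_max_right t 1 |>.trans' zero_le_one)]
            apply ENNReal.ofReal_le_ofReal
            rcases le_or_gt z 1 with hz1 | hz1
            · rw [min_eq_left hz1]
              nlinarith [le_max_right t 1, hz.out]
            · rw [min_eq_right hz1.le]
              nlinarith [le_max_left t 1]
  calc keyG μs t ≤ ∫⁻ z in Set.Ioi (0 : ℝ),
        ENNReal.ofReal (max t 1) * ENNReal.ofReal (min z 1) ∂μs := by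
        refine setLIntegral_mono' measurableSet_Ioi hbound
    _ = ENNReal.ofReal (max t 1) * ∫⁻ z in Set.Ioi (0 : ℝ), ENNReal.ofReal (min z 1) ∂μs := by
        have hρ : Measurable fun z : ℝ => ENNReal.ofReal (min z 1) :=
          (measurable_id.min measurable_const).ennreal_ofReal
        rw [lintegral_const_mul _ hρ]
    _ < ⊤ := ENNReal.mul_lt_top ENNReal.ofReal_lt_top hμsfin

/-- lintegral against `levyKappa 0 0 ν`. -/
lemma lintegral_levyKappa00 (ν : Measure ℝ) (h : ℝ≥0∞ → ℝ≥0∞) (hh : Measurable h) :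
    ∫⁻ y, h y ∂(levyKappa 0 0 ν)
      = ∫⁻ z in Set.Ioi (0 : ℝ), h (ENNReal.ofReal z) * ENNReal.ofReal (min z 1) ∂ν := by
  have hρ : Measurable fun z : ℝ => ENNReal.ofReal (min z 1) :=
    (measurable_id.min measurable_const).ennreal_ofReal
  rw [levyKappa]
  simp only [ENNReal.ofReal_zero, zero_smul, zero_add]
  have hg : Measurable fun z : ℝ => h (ENNReal.ofReal z) := hh.comp ENNReal.measurable_ofReal
  rw [lintegral_map hh ENNReal.measurable_ofReal,
    lintegral_withDensity_eq_lintegral_mul _ hρ hg]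
  refine lintegral_congr fun z => ?_
  simp only [Pi.mul_apply]
  exact mul_comm _ _

lemma integral_scaled (μs : Measure ℝ) {bb cc x : ℝ}
    (hb : 0 < bb) (hc : 0 < cc) (hx : 0 < x) (hx1 : x ≤ 1) :
    ∫ y, auxG x y ∂(levyKappa 0 0 (scaleMu bb cc μs))
      = (cc / bb) * (keyG μs (bb * x)).toReal := by
  have hmeas : Measurable fun z : ℝ =>
      (1 - ENNReal.ofReal z / ENNReal.ofReal x) * ENNReal.ofReal (min z 1) :=
    (((measurable_id.ennreal_ofReal).div_const _).const_sub _).mul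
      ((measurable_id.min measurable_const).ennreal_ofReal)
  rw [integral_eq_lintegral_of_nonneg_ae (f := auxG x)
      (ae_of_all _ fun y => ENNReal.toReal_nonneg) ((auxG_cont hx).aestronglyMeasurable)]
  have h1 : ∫⁻ y, ENNReal.ofReal (auxG x y) ∂(levyKappa 0 0 (scaleMu bb cc μs))
      = ∫⁻ z in Set.Ioi (0 : ℝ),
          (1 - ENNReal.ofReal z / ENNReal.ofReal x) * ENNReal.ofReal (min z 1)
          ∂(scaleMu bb cc μs) := by
    rw [show (∫⁻ y, ENNReal.ofReal (auxG x y) ∂(levyKappa 0 0 (scaleMu bb cc μs)))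
        = ∫⁻ y, (1 - y / ENNReal.ofReal x) ∂(levyKappa 0 0 (scaleMu bb cc μs)) from
      lintegral_congr fun y => ofReal_auxG x y]
    exact lintegral_levyKappa00 _ _ (auxG_meas x)
  rw [h1]
  -- unfold scaleMu
  have hdivmeas : Measurable fun z : ℝ => z / bb := measurable_id.div_const _
  have hpre : (fun z : ℝ => z / bb) ⁻¹' Set.Ioi 0 = Set.Ioi 0 := by
    ext z; simp [Set.mem_Ioi, div_pos_iff, hb, hb.not_gt, hb.le]
  rw [scaleMu, Measure.restrict_smul, lintegral_smul_measure,
    Measure.restrict_map hdivmeas measurableSet_Ioi, hpre,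
    lintegral_map hmeas hdivmeas]
  -- pointwise identity
  have hpt : ∀ z ∈ Set.Ioi (0 : ℝ),
      (1 - ENNReal.ofReal (z / bb) / ENNReal.ofReal x) * ENNReal.ofReal (min (z / bb) 1)
        = ENNReal.ofReal (1 / bb)
            * (ENNReal.ofReal z * (1 - ENNReal.ofReal z / ENNReal.ofReal (bb * x))) := by
    intro z hz
    have hz0 : 0 < z := hz.out
    have hbx : 0 < bb * x := mul_pos hb hx
    have hdd : ENNReal.ofReal (z / bb) / ENNReal.ofReal x
        = ENNReal.ofReal z / ENNReal.ofReal (bb * x) := by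
      rw [ENNReal.ofReal_div_of_pos hb, ENNReal.ofReal_mul hb.le,
        div_eq_mul_inv, div_eq_mul_inv, div_eq_mul_inv, mul_assoc,
        ← ENNReal.mul_inv (Or.inr ENNReal.ofReal_ne_top) (Or.inl ENNReal.ofReal_ne_top)]
    rw [hdd]
    rcases le_or_gt (bb * x) z with h | h
    · have h1 : (1 : ℝ≥0∞) ≤ ENNReal.ofReal z / ENNReal.ofReal (bb * x) :=
        (ENNReal.le_div_iff_mul_le (Or.inl (by simp [ENNReal.ofReal_eq_zero, hbx.not_ge]))
          (Or.inl ENNReal.ofReal_ne_top)).2 (by simpa using ENNReal.ofReal_le_ofReal h)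
      rw [tsub_eq_zero_of_le h1]
      simp
    · have hzb : z / bb < x := (div_lt_iff₀ hb).2 (by linarith [mul_comm bb x])
      have : min (z / bb) 1 = z / bb := min_eq_left (hzb.le.trans hx1)
      rw [this]
      have : ENNReal.ofReal (z / bb) = ENNReal.ofReal (1 / bb) * ENNReal.ofReal z := by
        rw [← ENNReal.ofReal_mul (by positivity)]
        ring_nf
      rw [this]; ring
  have hmeas2 : Measurable fun z : ℝ =>
      ENNReal.ofReal z * (1 - ENNReal.ofReal z / ENNReal.ofReal (bb * x)) :=
    (measurable_id.ennreal_ofReal).mul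
      (((measurable_id.ennreal_ofReal).div_const _).const_sub _)
  rw [setLIntegral_congr_fun measurableSet_Ioi hpt,
    lintegral_const_mul _ hmeas2]
  simp only [smul_eq_mul, ENNReal.toReal_mul, ENNReal.toReal_ofReal hc.le,
    ENNReal.toReal_ofReal (by positivity : (0:ℝ) ≤ 1/bb)]
  unfold keyG
  ring

lemma integral_levyKappa00_eq (ν : Measure ℝ) {x : ℝ} (hx : 0 < x) :
    ∫ y, auxG x y ∂(levyKappa 0 0 ν)
      = (∫⁻ z in Set.Ioi (0 : ℝ),
          (1 - ENNReal.ofReal z / ENNReal.ofReal x) * ENNReal.ofReal (min z 1) ∂ν).toReal := by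
  rw [integral_eq_lintegral_of_nonneg_ae (f := auxG x)
      (ae_of_all _ fun y => ENNReal.toReal_nonneg) ((auxG_cont hx).aestronglyMeasurable),
    show (∫⁻ y, ENNReal.ofReal (auxG x y) ∂(levyKappa 0 0 ν))
        = ∫⁻ y, (1 - y / ENNReal.ofReal x) ∂(levyKappa 0 0 ν) from
      lintegral_congr fun y => ofReal_auxG x y,
    lintegral_levyKappa00 _ _ (auxG_meas x)]

lemma dirac_meas (x : ℝ) : Measurable fun z : ℝ =>
    (1 - ENNReal.ofReal z / ENNReal.ofReal x) * ENNReal.ofReal (min z 1) :=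
  (((measurable_id.ennreal_ofReal).div_const _).const_sub _).mul
    ((measurable_id.min measurable_const).ennreal_ofReal)

lemma dirac_int_one :
    ∫ y, auxG 1 y ∂(levyKappa 0 0 (Measure.dirac (3/4 : ℝ))) = 3/16 := by
  rw [integral_levyKappa00_eq _ one_pos,
    setLIntegral_dirac' (dirac_meas 1) measurableSet_Ioi,
    if_pos (by norm_num : (3/4 : ℝ) ∈ Set.Ioi (0:ℝ))]
  have h1 : (1 : ℝ≥0∞) - ENNReal.ofReal (3/4) / ENNReal.ofReal 1 = ENNReal.ofReal (1/4) := by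
    rw [ENNReal.ofReal_one, div_one, ← ENNReal.ofReal_one,
      ← ENNReal.ofReal_sub _ (by norm_num : (0:ℝ) ≤ 3/4)]
    norm_num
  rw [h1, min_eq_left (by norm_num : (3/4 : ℝ) ≤ 1),
    ← ENNReal.ofReal_mul (by norm_num : (0:ℝ) ≤ 1/4), ENNReal.toReal_ofReal (by norm_num)]
  norm_num

lemma dirac_int_half :
    ∫ y, auxG (1/2) y ∂(levyKappa 0 0 (Measure.dirac (3/4 : ℝ))) = 0 := by
  rw [integral_levyKappa00_eq _ (by norm_num : (0:ℝ) < 1/2),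
    setLIntegral_dirac' (dirac_meas (1/2)) measurableSet_Ioi,
    if_pos (by norm_num : (3/4 : ℝ) ∈ Set.Ioi (0:ℝ))]
  have h1 : (1 : ℝ≥0∞) ≤ ENNReal.ofReal (3/4) / ENNReal.ofReal (1/2) := by
    refine (ENNReal.le_div_iff_mul_le (Or.inl (by simp)) (Or.inl ENNReal.ofReal_ne_top)).2 ?_
    rw [one_mul]
    exact ENNReal.ofReal_le_ofReal (by norm_num)
  rw [tsub_eq_zero_of_le h1, zero_mul]
  simp

lemma dirac_fin :
    (∫⁻ z in Set.Ioi (0:ℝ), ENNReal.ofReal (min z 1) ∂(Measure.dirac (3/4 : ℝ))) < ⊤ := by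
  have hρ : Measurable fun z : ℝ => ENNReal.ofReal (min z 1) :=
    (measurable_id.min measurable_const).ennreal_ofReal
  rw [setLIntegral_dirac' hρ measurableSet_Ioi,
    if_pos (by norm_num : (3/4 : ℝ) ∈ Set.Ioi (0:ℝ))]
  exact ENNReal.ofReal_lt_top

theorem universal_levy_triple_scale_ratio
    (μs : Measure ℝ)
    (hμsfin : (∫⁻ x in Set.Ioi (0 : ℝ), ENNReal.ofReal (min x 1) ∂μs) < ⊤)
    (b c : ℕ → ℝ) (hbpos : ∀ k, 0 < b k) (hcpos : ∀ k, 0 < c k)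
    (hb : Tendsto b atTop atTop) (hc : Tendsto c atTop atTop)
    (huniv : ∀ (a0 aInf : ℝ) (μ : Measure ℝ), 0 ≤ a0 → 0 ≤ aInf →
      (∫⁻ x in Set.Ioi (0 : ℝ), ENNReal.ofReal (min x 1) ∂μ) < ⊤ →
      ∃ n : ℕ → ℕ, StrictMono n ∧
        WStarTendsto (fun k => levyKappa 0 0 (scaleMu (b (n k)) (c (n k)) μs))
          (levyKappa a0 aInf μ)) :
    ∀ n : ℕ → ℕ, StrictMono n →
      ∀ (a0 aInf : ℝ) (μ : Measure ℝ), 0 ≤ a0 → 0 ≤ aInf →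
        (∫⁻ x in Set.Ioi (0 : ℝ), ENNReal.ofReal (min x 1) ∂μ) < ⊤ →
        WStarTendsto (fun k => levyKappa 0 0 (scaleMu (b (n k)) (c (n k)) μs))
          (levyKappa a0 aInf μ) →
        Tendsto (fun k => c (n k) / b (n k)) atTop (nhds 0) := by
  intro n hn a0 aInf μ ha0 haInf hμ hconv
  have hGtend : Tendsto (keyG μs) atTop (nhds (⨆ t : ℝ, keyG μs t)) :=
    tendsto_atTop_iSup (keyG_mono μs)
  set L : ℝ≥0∞ := ⨆ t : ℝ, keyG μs t with hLdef
  have hbn : Tendsto (fun k => b (n k)) atTop atTop := hb.comp hn.tendsto_atTop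
  by_cases hL : L = ⊤
  · -- the function `G` tends to infinity, so the ratio must vanish
    have hA : Tendsto (fun k => (c (n k) / b (n k)) * (keyG μs (b (n k))).toReal) atTop
        (nhds (∫ y, auxG 1 y ∂(levyKappa a0 aInf μ))) := by
      refine (hconv ⟨auxG 1, auxG_cont one_pos⟩).congr fun k => ?_
      have h := integral_scaled μs (hbpos (n k)) (hcpos (n k)) one_pos le_rfl
      simpa [mul_one] using h
    set V : ℝ := ∫ y, auxG 1 y ∂(levyKappa a0 aInf μ) with hV
    have hV0 : 0 ≤ V := integral_nonneg fun y => ENNReal.toReal_nonneg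
    have hGb : Tendsto (fun k => keyG μs (b (n k))) atTop (nhds ⊤) := by
      have h := hGtend.comp hbn
      rw [hL] at h
      exact h
    rw [NormedAddCommGroup.tendsto_nhds_zero]
    intro ε hε
    have hE1 : ∀ᶠ k in atTop,
        (c (n k) / b (n k)) * (keyG μs (b (n k))).toReal < V + 1 :=
      hA.eventually (Filter.Tendsto.eventually_lt_const (lt_add_one V) tendsto_id) |>.mono
        fun k hk => hk
    have hE2 : ∀ᶠ k in atTop,
        ENNReal.ofReal ((V + 1) / ε) < keyG μs (b (n k)) :=
      hGb.eventually_mem (Ioi_mem_nhds (ENNReal.ofReal_lt_top.trans_le le_rfl)) |>.mono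
        fun k hk => hk
    filter_upwards [hE1, hE2] with k h1 h2
    have hfin : keyG μs (b (n k)) ≠ ⊤ := (keyG_lt_top μs hμsfin _).ne
    have ht : (V + 1) / ε < (keyG μs (b (n k))).toReal := by
      have := (ENNReal.toReal_lt_toReal ENNReal.ofReal_ne_top hfin).2 h2
      rwa [ENNReal.toReal_ofReal (by positivity)] at this
    have hr0 : 0 < c (n k) / b (n k) := div_pos (hcpos _) (hbpos _)
    rw [Real.norm_eq_abs, abs_of_pos hr0]
    by_contra hcon
    push_neg at hcon
    have : V + 1 < (c (n k) / b (n k)) * (keyG μs (b (n k))).toReal := by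
      calc V + 1 = ε * ((V + 1) / ε) := by field_simp
        _ < ε * (keyG μs (b (n k))).toReal := by
            refine mul_lt_mul_of_pos_left ht hε
        _ ≤ (c (n k) / b (n k)) * (keyG μs (b (n k))).toReal := by
            refine mul_le_mul_of_nonneg_right hcon ENNReal.toReal_nonneg
    linarith
  · -- `L` finite: contradiction with universality via the Dirac target
    exfalso
    obtain ⟨m, hm, hconv2⟩ := huniv 0 0 (Measure.dirac (3/4)) le_rfl le_rfl dirac_fin
    have hbm : Tendsto (fun k => b (m k)) atTop atTop := hb.comp hm.tendsto_atTop
    have hA : Tendsto (fun k => (c (m k) / b (m k)) * (keyG μs (b (m k))).toReal) atTop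
        (nhds (3/16)) := by
      have h := hconv2 ⟨auxG 1, auxG_cont one_pos⟩
      rw [show (∫ x, (⟨auxG 1, auxG_cont one_pos⟩ : C(ℝ≥0∞, ℝ)) x
            ∂(levyKappa 0 0 (Measure.dirac (3/4)))) = 3/16 from dirac_int_one] at h
      refine h.congr fun k => ?_
      have h2 := integral_scaled μs (hbpos (m k)) (hcpos (m k)) one_pos le_rfl
      simpa [mul_one] using h2
    have hB : Tendsto (fun k => (c (m k) / b (m k)) * (keyG μs (b (m k) * (1/2))).toReal) atTop
        (nhds 0) := by
      have h := hconv2 ⟨auxG (1/2), auxG_cont (by norm_num)⟩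
      rw [show (∫ x, (⟨auxG (1/2), auxG_cont (by norm_num)⟩ : C(ℝ≥0∞, ℝ)) x
            ∂(levyKappa 0 0 (Measure.dirac (3/4)))) = 0 from dirac_int_half] at h
      refine h.congr fun k => ?_
      exact integral_scaled μs (hbpos (m k)) (hcpos (m k)) (by norm_num) (by norm_num)
    have hGbm : Tendsto (fun k => (keyG μs (b (m k))).toReal) atTop (nhds L.toReal) :=
      (ENNReal.tendsto_toReal hL).comp (hGtend.comp hbm)
    have hGbm2 : Tendsto (fun k => (keyG μs (b (m k) * (1/2))).toReal) atTop (nhds L.toReal) :=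
      (ENNReal.tendsto_toReal hL).comp (hGtend.comp (hbm.atTop_mul_const (by norm_num)))
    have hP1 := hA.mul hGbm2
    have hP2 := hB.mul hGbm
    have heq : (fun k => ((c (m k) / b (m k)) * (keyG μs (b (m k))).toReal)
          * (keyG μs (b (m k) * (1/2))).toReal)
        = fun k => ((c (m k) / b (m k)) * (keyG μs (b (m k) * (1/2))).toReal)
          * (keyG μs (b (m k))).toReal := by
      funext k; ring
    rw [heq] at hP1
    have h316 : (3/16 : ℝ) * L.toReal = 0 * L.toReal := tendsto_nhds_unique hP1 hP2
    have hL0 : L.toReal = 0 := by nlinarith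
    have hLzero : L = 0 := by
      rcases (ENNReal.toReal_eq_zero_iff L).1 hL0 with h | h
      · exact h
      · exact absurd h hL
    have hGzero : ∀ t, keyG μs t = 0 := fun t =>
      le_antisymm (hLzero ▸ le_iSup (keyG μs) t) zero_le
    have hzero : Tendsto (fun _ : ℕ => (0:ℝ)) atTop (nhds (3/16)) :=
      hA.congr fun k => by rw [hGzero]; simp
    have := tendsto_nhds_unique hzero tendsto_const_nhds
    norm_num at this
end

section
/- Grey's condition characterizes finiteness of the limiting measure: for Ψ convex, increasing, C¹ on (0,∞) with Ψ(0)=0 and Ψ > 0 on (0,∞), and φ solving ∂_t φ = −Ψ(φ), φ(q,0) = q, the limit φ(∞,t) := lim_{q→∞} φ(q,t) is finite for t > 0 if and only if ∫_1^∞ du/Ψ(u) < ∞. -/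
open Filter MeasureTheory

/-- Convexity bound: `Ψ u ≤ (Ψ q / q) * u` for `0 ≤ u ≤ q`. -/
lemma grey_convex_bound {Ψ : ℝ → ℝ} (hΨconvex : ConvexOn ℝ (Set.Ici 0) Ψ) (hΨ0 : Ψ 0 = 0)
    {q u : ℝ} (hq : 0 < q) (hu0 : 0 ≤ u) (huq : u ≤ q) :
    Ψ u ≤ Ψ q / q * u := by
  have ha : (0:ℝ) ≤ 1 - u / q := by
    have : u / q ≤ 1 := (div_le_one hq).2 huq
    linarith
  have hb : (0:ℝ) ≤ u / q := div_nonneg hu0 hq.le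
  have h := hΨconvex.2 (Set.mem_Ici.2 le_rfl) (Set.mem_Ici.2 hq.le) ha hb (by ring)
  have he : (1 - u / q) • (0:ℝ) + (u / q) • q = u := by
    rw [smul_zero, zero_add, smul_eq_mul]; exact div_mul_cancel₀ u hq.ne'
  rw [he] at h
  have : (1 - u / q) • Ψ 0 + (u / q) • Ψ q = Ψ q / q * u := by
    rw [hΨ0, smul_zero, zero_add, smul_eq_mul]; ring
  linarith [h, this.symm.le]

/-- The solution stays below its initial value. -/
lemma grey_phi_le {Ψ : ℝ → ℝ} {φ : ℝ → ℝ → ℝ}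
    (hΨmono : MonotoneOn Ψ (Set.Ici 0))
    (hΨpos : ∀ u : ℝ, 0 < u → 0 < Ψ u)
    (hφ0 : ∀ q : ℝ, 0 ≤ q → φ q 0 = q)
    (hφode : ∀ q : ℝ, 0 ≤ q → ∀ t : ℝ, 0 ≤ t →
      HasDerivAt (fun s => φ q s) (-Ψ (φ q t)) t)
    {q : ℝ} (hq : 0 < q) : ∀ s, 0 ≤ s → φ q s ≤ q := by
  by_contra h
  push_neg at h
  obtain ⟨s₁, hs₁, hgt⟩ := h
  have hs₁0 : 0 < s₁ := by
    rcases hs₁.lt_or_eq with h | h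
    · exact h
    · rw [← h, hφ0 q hq.le] at hgt; exact absurd hgt (lt_irrefl q)
  have hcont : ContinuousOn (fun s => φ q s) (Set.Icc 0 s₁) := fun s hs =>
    ((hφode q hq.le s hs.1).continuousAt).continuousWithinAt
  set A := Set.Icc 0 s₁ ∩ (fun s => φ q s) ⁻¹' Set.Iic q with hA
  have hAne : (0:ℝ) ∈ A := ⟨⟨le_rfl, hs₁0.le⟩, by simp [hφ0 q hq.le]⟩
  have hAclosed : IsClosed A :=
    hcont.preimage_isClosed_of_isClosed isClosed_Icc isClosed_Iic
  have hAcp : IsCompact A :=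
    IsCompact.of_isClosed_subset isCompact_Icc hAclosed Set.inter_subset_left
  set s₀ := sSup A with hs₀def
  have hs₀A : s₀ ∈ A := hAcp.sSup_mem ⟨0, hAne⟩
  have hs₀le : φ q s₀ ≤ q := hs₀A.2
  have hs₀mem : s₀ ∈ Set.Icc 0 s₁ := hs₀A.1
  have hs₀lt : s₀ < s₁ := by
    rcases hs₀mem.2.lt_or_eq with h | h
    · exact h
    · exfalso; rw [h] at hs₀le; linarith
  have h2 : ∀ s ∈ Set.Ioc s₀ s₁, q < φ q s := by
    intro s hs
    by_contra hle
    push_neg at hle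
    have : s ∈ A := ⟨⟨le_trans hs₀mem.1 hs.1.le, hs.2⟩, hle⟩
    exact absurd (le_csSup hAcp.bddAbove this) (not_le.2 hs.1)
  have hcont' : ContinuousOn (fun s => φ q s) (Set.Icc s₀ s₁) :=
    hcont.mono (Set.Icc_subset_Icc hs₀mem.1 le_rfl)
  have hanti : StrictAntiOn (fun s => φ q s) (Set.Icc s₀ s₁) := by
    apply strictAntiOn_of_deriv_neg (convex_Icc s₀ s₁) hcont'
    intro s hs
    rw [interior_Icc] at hs
    have hs0 : 0 ≤ s := le_trans hs₀mem.1 hs.1.le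
    have hd := (hφode q hq.le s hs0).deriv
    rw [hd]
    have hφs : q < φ q s := h2 s ⟨hs.1, hs.2.le⟩
    have : 0 < Ψ (φ q s) := hΨpos _ (lt_trans hq hφs)
    linarith
  have := hanti (Set.left_mem_Icc.2 hs₀lt.le) (Set.right_mem_Icc.2 hs₀lt.le) hs₀lt
  simp only at this
  linarith [h2 s₁ ⟨hs₀lt, le_rfl⟩]

/-- The solution stays strictly positive. -/
lemma grey_phi_pos {Ψ : ℝ → ℝ} {φ : ℝ → ℝ → ℝ}
    (hΨconvex : ConvexOn ℝ (Set.Ici 0) Ψ)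
    (hΨmono : MonotoneOn Ψ (Set.Ici 0))
    (hΨ0 : Ψ 0 = 0)
    (hΨpos : ∀ u : ℝ, 0 < u → 0 < Ψ u)
    (hφ0 : ∀ q : ℝ, 0 ≤ q → φ q 0 = q)
    (hφode : ∀ q : ℝ, 0 ≤ q → ∀ t : ℝ, 0 ≤ t →
      HasDerivAt (fun s => φ q s) (-Ψ (φ q t)) t)
    {q : ℝ} (hq : 0 < q) : ∀ s, 0 ≤ s → 0 < φ q s := by
  by_contra h
  push_neg at h
  obtain ⟨s₁, hs₁, hle⟩ := h
  have hs₁0 : 0 < s₁ := by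
    rcases hs₁.lt_or_eq with h | h
    · exact h
    · rw [← h, hφ0 q hq.le] at hle; linarith
  have hcont : ContinuousOn (fun s => φ q s) (Set.Icc 0 s₁) := fun s hs =>
    ((hφode q hq.le s hs.1).continuousAt).continuousWithinAt
  set B := Set.Icc 0 s₁ ∩ (fun s => φ q s) ⁻¹' Set.Iic 0 with hB
  have hBne : s₁ ∈ B := ⟨⟨hs₁0.le, le_rfl⟩, hle⟩
  have hBclosed : IsClosed B :=
    hcont.preimage_isClosed_of_isClosed isClosed_Icc isClosed_Iic
  have hBcp : IsCompact B :=
    IsCompact.of_isClosed_subset isCompact_Icc hBclosed Set.inter_subset_left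
  set s₀ := sInf B with hs₀def
  have hs₀B : s₀ ∈ B := hBcp.sInf_mem ⟨s₁, hBne⟩
  have hs₀le : φ q s₀ ≤ 0 := hs₀B.2
  have hs₀mem : s₀ ∈ Set.Icc 0 s₁ := hs₀B.1
  have hs₀pos : 0 < s₀ := by
    rcases hs₀mem.1.lt_or_eq with h | h
    · exact h
    · exfalso; rw [← h] at hs₀le; rw [hφ0 q hq.le] at hs₀le; linarith
  have hbefore : ∀ s ∈ Set.Ico 0 s₀, 0 < φ q s := by
    intro s hs
    by_contra hle'
    push_neg at hle'
    have : s ∈ B := ⟨⟨hs.1, le_trans hs.2.le hs₀mem.2⟩, hle'⟩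
    exact absurd (csInf_le ⟨0, fun y hy => hy.1.1⟩ this : s₀ ≤ s) (not_le.2 hs.2)
  -- Gronwall-type argument with g s = φ q s * exp (K s)
  set K := Ψ q / q with hK
  set g : ℝ → ℝ := fun s => φ q s * Real.exp (K * s) with hg
  have hgderiv : ∀ s, 0 ≤ s → HasDerivAt g
      (-Ψ (φ q s) * Real.exp (K * s) + φ q s * (K * Real.exp (K * s))) s := by
    intro s hs
    have h1 := hφode q hq.le s hs
    have h2 : HasDerivAt (fun s => Real.exp (K * s)) (K * Real.exp (K * s)) s := by
      simpa [mul_comm] using (((hasDerivAt_id s).const_mul K).exp)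
    exact h1.mul h2
  have hgmono : MonotoneOn g (Set.Icc 0 s₀) := by
    apply monotoneOn_of_deriv_nonneg (convex_Icc 0 s₀)
    · intro s hs
      exact ((hgderiv s hs.1).continuousAt).continuousWithinAt
    · intro s hs
      rw [interior_Icc] at hs
      exact ((hgderiv s hs.1.le).differentiableAt).differentiableWithinAt
    · intro s hs
      rw [interior_Icc] at hs
      rw [(hgderiv s hs.1.le).deriv]
      have hφpos : 0 < φ q s := hbefore s ⟨hs.1.le, hs.2⟩
      have hφle : φ q s ≤ q :=
        grey_phi_le hΨmono hΨpos hφ0 hφode hq s hs.1.le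
      have hbd : Ψ (φ q s) ≤ K * φ q s := by
        have := grey_convex_bound hΨconvex hΨ0 hq hφpos.le hφle
        rw [hK]; linarith
      have hexp : 0 < Real.exp (K * s) := Real.exp_pos _
      nlinarith
  have hg0 : g 0 = q := by simp [hg, hφ0 q hq.le]
  have := hgmono (Set.left_mem_Icc.2 hs₀pos.le) (Set.right_mem_Icc.2 hs₀pos.le) hs₀pos.le
  rw [hg0] at this
  have hgneg : g s₀ ≤ 0 :=
    mul_nonpos_of_nonpos_of_nonneg hs₀le (Real.exp_pos _).le
  linarith

theorem grey_condition_characterization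
    (Ψ : ℝ → ℝ)
    (hΨconvex : ConvexOn ℝ (Set.Ici 0) Ψ)
    (hΨmono : MonotoneOn Ψ (Set.Ici 0))
    (hΨC1 : ContDiffOn ℝ 1 Ψ (Set.Ioi 0))
    (hΨ0 : Ψ 0 = 0)
    (hΨpos : ∀ u : ℝ, 0 < u → 0 < Ψ u)
    (φ : ℝ → ℝ → ℝ)
    (hφ0 : ∀ q : ℝ, 0 ≤ q → φ q 0 = q)
    (hφode : ∀ q : ℝ, 0 ≤ q → ∀ t : ℝ, 0 ≤ t →
      HasDerivAt (fun s => φ q s) (-Ψ (φ q t)) t)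
    (hφmono : ∀ t : ℝ, 0 ≤ t → MonotoneOn (fun q => φ q t) (Set.Ici 0)) :
    ∀ t : ℝ, 0 < t →
      ((∃ L : ℝ, Tendsto (fun q => φ q t) atTop (nhds L)) ↔
        IntegrableOn (fun u => (Ψ u)⁻¹) (Set.Ici (1 : ℝ))) := by
  -- continuity of the integrand on (0,∞)
  have hinv_cont : ContinuousOn (fun u => (Ψ u)⁻¹) (Set.Ioi 0) :=
    (hΨC1.continuousOn).inv₀ (fun u hu => (hΨpos u hu).ne')
  -- interval integrability between positive endpoints
  have hII : ∀ a b : ℝ, 0 < a → 0 < b →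
      IntervalIntegrable (fun u => (Ψ u)⁻¹) volume a b := by
    intro a b ha hb
    apply (hinv_cont.mono ?_).intervalIntegrable
    intro u hu
    rw [Set.mem_uIcc] at hu
    rcases hu with ⟨h1, _⟩ | ⟨h1, _⟩
    · exact lt_of_lt_of_le ha h1
    · exact lt_of_lt_of_le hb h1
  set F : ℝ → ℝ := fun x => ∫ u in (1:ℝ)..x, (Ψ u)⁻¹ with hF
  have hFderiv : ∀ x : ℝ, 0 < x → HasDerivAt F (Ψ x)⁻¹ x := by
    intro x hx
    exact intervalIntegral.integral_hasDerivAt_right (hII 1 x one_pos hx)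
      (ContinuousOn.stronglyMeasurableAtFilter isOpen_Ioi hinv_cont x hx)
      (hinv_cont.continuousAt (isOpen_Ioi.mem_nhds hx))
  -- the key identity: F (φ q t) + t = F q
  have hkey : ∀ q : ℝ, 0 < q → ∀ t : ℝ, 0 ≤ t → F (φ q t) + t = F q := by
    intro q hq t ht
    have hpos := grey_phi_pos hΨconvex hΨmono hΨ0 hΨpos hφ0 hφode hq
    have hder : ∀ s, 0 ≤ s → HasDerivAt (fun s => F (φ q s) + s) 0 s := by
      intro s hs
      have h1 := hφode q hq.le s hs
      have h2 := hFderiv (φ q s) (hpos s hs)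
      have h3 := (h2.comp s h1).add (hasDerivAt_id s)
      have hΨne : Ψ (φ q s) ≠ 0 := (hΨpos _ (hpos s hs)).ne'
      have h4 : (Ψ (φ q s))⁻¹ * -Ψ (φ q s) + 1 = 0 := by
        field_simp
        norm_num
      rw [h4] at h3
      exact h3
    have := constant_of_has_deriv_right_zero
      (f := fun s => F (φ q s) + s) (a := 0) (b := t)
      (fun s hs => ((hder s hs.1).continuousAt).continuousWithinAt)
      (fun s hs => ((hder s hs.1).hasDerivWithinAt)) t (Set.right_mem_Icc.2 ht)
    have h5 : F (φ q t) + t = F (φ q 0) + 0 := this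
    rw [hφ0 q hq.le] at h5
    linarith
  -- F is monotone on positive reals
  have hFmono : ∀ a b : ℝ, 0 < a → a ≤ b → F a ≤ F b := by
    intro a b ha hab
    have hb : 0 < b := lt_of_lt_of_le ha hab
    have hdiff : F b - F a = ∫ u in a..b, (Ψ u)⁻¹ :=
      intervalIntegral.integral_interval_sub_left (hII 1 b one_pos hb) (hII 1 a one_pos ha)
    have hnn : 0 ≤ ∫ u in a..b, (Ψ u)⁻¹ := by
      apply intervalIntegral.integral_nonneg hab
      intro u hu
      exact (inv_nonneg).2 (hΨpos u (lt_of_lt_of_le ha hu.1)).le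
    linarith
  intro t ht
  have hposφ : ∀ q : ℝ, 0 < q → 0 < φ q t :=
    fun q hq => grey_phi_pos hΨconvex hΨmono hΨ0 hΨpos hφ0 hφode hq t ht.le
  constructor
  · -- finite limit ⇒ integrable
    rintro ⟨L, hL⟩
    have hφle : ∀ q : ℝ, 0 ≤ q → φ q t ≤ L := by
      intro q hq
      refine ge_of_tendsto hL ?_
      filter_upwards [eventually_ge_atTop q, eventually_ge_atTop (0:ℝ)] with q' h1 h2
      exact hφmono t ht.le hq h2 h1
    set M := max L 1 with hM
    have hMpos : 0 < M := lt_of_lt_of_le one_pos (le_max_right _ _)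
    rw [integrableOn_Ici_iff_integrableOn_Ioi]
    apply MeasureTheory.integrableOn_Ioi_of_intervalIntegral_norm_bounded
      (t + F M) 1 (f := fun u => (Ψ u)⁻¹) (b := fun q : ℝ => q) (l := atTop) ?_ tendsto_id
    · filter_upwards [eventually_ge_atTop (1:ℝ)] with q hq1
      have hq0 : 0 < q := lt_of_lt_of_le one_pos hq1
      have hnorm : (∫ u in (1:ℝ)..q, ‖(Ψ u)⁻¹‖) = F q := by
        apply intervalIntegral.integral_congr
        intro u hu
        rw [Set.uIcc_of_le hq1] at hu
        have : 0 < Ψ u := hΨpos u (lt_of_lt_of_le one_pos hu.1)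
        simp only [Real.norm_eq_abs]
        exact abs_of_nonneg (inv_nonneg.2 this.le)
      rw [hnorm, ← hkey q hq0 t ht.le]
      have h1 : φ q t ≤ M := le_trans (hφle q hq0.le) (le_max_left _ _)
      have h2 : F (φ q t) ≤ F M := hFmono _ _ (hposφ q hq0) h1
      linarith
    · intro q
      rcases le_or_gt q 0 with h | h
      · rw [Set.Ioc_eq_empty (by linarith : ¬ (1:ℝ) < q)]
        exact integrableOn_empty
      · exact (hII 1 q one_pos h).1
  · -- integrable ⇒ finite limit
    intro hint
    set g : ℝ → ℝ := fun q => φ (max q 0) t with hgdef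
    have hg : Monotone g := fun a b hab =>
      hφmono t ht.le (le_max_right a 0) (le_max_right b 0) (max_le_max hab le_rfl)
    have hgg : g =ᶠ[atTop] fun q => φ q t := by
      filter_upwards [eventually_ge_atTop (0:ℝ)] with q hq
      simp [hgdef, max_eq_left hq]
    by_cases hbdd : BddAbove (Set.range g)
    · exact ⟨_, (tendsto_atTop_ciSup hg hbdd).congr' hgg⟩
    · exfalso
      have htop : Tendsto (fun q => φ q t) atTop atTop := by
        refine Tendsto.congr' hgg (tendsto_atTop_atTop_of_monotone hg ?_)
        intro b
        by_contra hb
        push_neg at hb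
        exact hbdd ⟨b, fun y ⟨x, hx⟩ => hx ▸ (hb x).le⟩
      have hint' : IntegrableOn (fun u => (Ψ u)⁻¹) (Set.Ioi 1) :=
        by rwa [integrableOn_Ici_iff_integrableOn_Ioi] at hint
      have hI : Tendsto (fun q : ℝ => ∫ u in (1:ℝ)..q, (Ψ u)⁻¹) atTop
          (nhds (∫ u in Set.Ioi 1, (Ψ u)⁻¹)) :=
        MeasureTheory.intervalIntegral_tendsto_integral_Ioi 1 hint' tendsto_id
      have hI2 : Tendsto (fun q => F (φ q t)) atTop
          (nhds (∫ u in Set.Ioi 1, (Ψ u)⁻¹)) := hI.comp htop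
      have hsub : Tendsto (fun q => F q - F (φ q t)) atTop (nhds 0) := by
        have := hI.sub hI2
        simpa using this
      have hconst : (fun q => F q - F (φ q t)) =ᶠ[atTop] fun _ => t := by
        filter_upwards [eventually_gt_atTop (0:ℝ)] with q hq
        have := hkey q hq t ht.le
        linarith
      have : Tendsto (fun q => F q - F (φ q t)) atTop (nhds t) :=
        Tendsto.congr' hconst.symm tendsto_const_nhds
      have := tendsto_nhds_unique this hsub
      linarith
end
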